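/- arXiv:math/9907026 — 2 statements merged into one kernel-verified Lean document; each statement's English description precedes it below -/
import Mathlib

section
/- A graph product (G,P) = Γ_{I∈Λ}(G_I,P_I) of quasi-lattice ordered groups is a quasi-lattice ordered group. -/
universe u v

/-- A syllable: a vertex `I` of the graph together with a nontrivial element of `G I`. -/
def Syllable {Λ : Type u} (G : Λ → Type v) [∀ I, Group (G I)] : Type (max u v) :=
  Σ I : Λ, {g : G I // g ≠ 1}

section Words

variable {Λ : Type u} {G : Λ → Type v} [∀ I, Group (G I)]

/-- A single shuffle: swap two consecutive syllables with adjacent vertices. -/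
def ShuffleStep (adj : Λ → Λ → Prop) (L L' : List (Syllable G)) : Prop :=
  ∃ (A B : List (Syllable G)) (s t : Syllable G),
    adj s.1 t.1 ∧ L = A ++ s :: t :: B ∧ L' = A ++ t :: s :: B

/-- Shuffle equivalence: finitely many shuffles. -/
def ShuffleEquiv (adj : Λ → Λ → Prop) : List (Syllable G) → List (Syllable G) → Prop :=
  Relation.ReflTransGen (ShuffleStep adj)

/-- An expression admits an amalgamation iff it has two consecutive syllables at the
same vertex. -/
def Amalgamable (L : List (Syllable G)) : Prop :=
  ∃ (A B : List (Syllable G)) (s t : Syllable G), s.1 = t.1 ∧ L = A ++ s :: t :: B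

/-- An expression is reduced iff it is not shuffle equivalent to an expression
admitting an amalgamation. -/
def Reduced (adj : Λ → Λ → Prop) (L : List (Syllable G)) : Prop :=
  ¬ ∃ L', ShuffleEquiv adj L L' ∧ Amalgamable L'

/-- The syllable at position `i` is an initial syllable of the expression `L`:
its vertex is adjacent to the vertices of all earlier syllables. -/
def InitialAt (adj : Λ → Λ → Prop) (L : List (Syllable G)) (i : Fin L.length) : Prop :=
  ∀ j : Fin L.length, j < i → adj (L.get j).1 (L.get i).1

end Words

section GroupPart

variable {Λ : Type u} (adj : Λ → Λ → Prop) (G : Λ → Type v) [∀ I, Group (G I)]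

/-- The graph product of the family of groups `G` over the graph `adj`: the quotient of
the free product by the normal closure of the commutators coming from adjacent vertices. -/
def GraphProduct : Type (max u v) :=
  Monoid.CoprodI G ⧸ Subgroup.normalClosure
    {g : Monoid.CoprodI G | ∃ (I J : Λ) (x : G I) (y : G J), adj I J ∧
      g = Monoid.CoprodI.of x * Monoid.CoprodI.of y *
          (Monoid.CoprodI.of x)⁻¹ * (Monoid.CoprodI.of y)⁻¹}

instance : Group (GraphProduct adj G) :=
  inferInstanceAs (Group (_ ⧸ _))

/-- The canonical image in the graph product of an element of one of the groups. -/
def mkOf {I : Λ} (g : G I) : GraphProduct adj G :=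
  QuotientGroup.mk (Monoid.CoprodI.of g)

/-- Evaluation of an expression (a word in the syllables) in the graph product. -/
def evalWord (L : List (Syllable G)) : GraphProduct adj G :=
  (L.map fun s => mkOf adj G (s.2.1 : G s.1)).prod

/-- `L` is an expression for the group element `x`. -/
def ExprFor (L : List (Syllable G)) (x : GraphProduct adj G) : Prop :=
  evalWord adj G L = x

/-- `s` is an initial syllable of the group element `x`: some reduced expression for `x`
has `s` as an initial syllable. -/
def IsInitialSyllable (x : GraphProduct adj G) (s : Syllable G) : Prop :=
  ∃ L, Reduced adj L ∧ ExprFor adj G L x ∧ ∃ i : Fin L.length, InitialAt adj L i ∧ L.get i = s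

/-- `s` is a final syllable of the group element `x`: it is an initial syllable of the
reverse of some reduced expression for `x`. -/
def IsFinalSyllable (x : GraphProduct adj G) (s : Syllable G) : Prop :=
  ∃ L, Reduced adj L ∧ ExprFor adj G L x ∧
    ∃ i : Fin L.reverse.length, InitialAt adj L.reverse i ∧ L.reverse.get i = s

/-- `I` is an initial vertex of the group element `x`, i.e. `I ∈ Δ(x)`. -/
def InitialVertexOf (x : GraphProduct adj G) (I : Λ) : Prop :=
  ∃ s : Syllable G, IsInitialSyllable adj G x s ∧ s.1 = I

/-- `I` is a final vertex of the group element `x`, i.e. `I ∈ Δʳ(x)`. -/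
def FinalVertexOf (x : GraphProduct adj G) (I : Λ) : Prop :=
  ∃ s : Syllable G, IsFinalSyllable adj G x s ∧ s.1 = I

/-- `I` is a vertex of the group element `x`: some (hence any) reduced expression
for `x` has a syllable at the vertex `I`. -/
def VertexOf (x : GraphProduct adj G) (I : Λ) : Prop :=
  ∃ L, Reduced adj L ∧ ExprFor adj G L x ∧ ∃ s ∈ L, Sigma.fst s = I

/-- `c` is the element `x_I ∈ G_I`: either `c` is nontrivial and the initial syllable of
`x` at the vertex `I`, or `c = 1` and `I` is not an initial vertex of `x`. -/
def InitialPart (x : GraphProduct adj G) (I : Λ) (c : G I) : Prop :=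
  (∃ h : c ≠ 1, IsInitialSyllable adj G x ⟨I, ⟨c, h⟩⟩) ∨ (c = 1 ∧ ¬ InitialVertexOf adj G x I)

/-- The positive cone of the graph product of partially ordered groups: the submonoid
generated by the union of the positive cones of the factors. -/
def posCone (Pc : ∀ I, Submonoid (G I)) : Submonoid (GraphProduct adj G) :=
  Submonoid.closure {g | ∃ (I : Λ) (p : G I), p ∈ Pc I ∧ g = mkOf adj G p}

end GroupPart

section Order

variable {H : Type*} [Group H]

/-- `x ≤ y` in the left-invariant partial order determined by the cone `P`. -/
def lle (P : Submonoid H) (x y : H) : Prop := x⁻¹ * y ∈ P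

/-- `x ≤ᵣ y` in the right-invariant partial order determined by the cone `P`. -/
def rle (P : Submonoid H) (x y : H) : Prop := y * x⁻¹ ∈ P

/-- `x` and `y` have a common upper bound for the left-invariant order. -/
def HasUB (P : Submonoid H) (x y : H) : Prop := ∃ z, lle P x z ∧ lle P y z

/-- `m` is a least upper bound of `x` and `y` for the left-invariant order. -/
def IsLub' (P : Submonoid H) (x y m : H) : Prop :=
  lle P x m ∧ lle P y m ∧ ∀ w, lle P x w → lle P y w → lle P m w

/-- `w` is a greatest lower bound of `u` and `v` for the right-invariant order. -/
def IsRGlb (P : Submonoid H) (u v w : H) : Prop :=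
  rle P w u ∧ rle P w v ∧ ∀ z, rle P z u → rle P z v → rle P z w

/-- `(H,P)` is a partially ordered group: `P ∩ P⁻¹ = {1}`. -/
def IsPoGroup (P : Submonoid H) : Prop := ∀ x : H, x ∈ P → x⁻¹ ∈ P → x = 1

/-- `(H,P)` is a quasi-lattice ordered group: it is a partially ordered group in which
every pair of elements with a common upper bound has a least upper bound. -/
def IsQLO (P : Submonoid H) : Prop :=
  IsPoGroup P ∧ ∀ x y : H, HasUB P x y → ∃ m, IsLub' P x y m

end Order

section ChunkOne
open List

attribute [local instance] Classical.propDecidable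

variable {Λ : Type u} {G : Λ → Type v} [∀ I, Group (G I)] {adj : Λ → Λ → Prop}

namespace GPQ

/-- projection of a word onto the set of vertices satisfying `Q` -/
noncomputable def pj (Q : Λ → Prop) (L : List (Syllable G)) : List (Syllable G) :=
  L.filter (fun s => decide (Q s.1))

theorem pj_nil (Q : Λ → Prop) : pj Q ([] : List (Syllable G)) = [] := rfl

theorem pj_cons (Q : Λ → Prop) (s : Syllable G) (L : List (Syllable G)) :
    pj Q (s :: L) = if Q s.1 then s :: pj Q L else pj Q L := by
  by_cases h : Q s.1 <;> simp [pj, h]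

theorem pj_append (Q : Λ → Prop) (L M : List (Syllable G)) :
    pj Q (L ++ M) = pj Q L ++ pj Q M := by
  simp [pj, List.filter_append]

/-- a two-element vertex set -/
def tw (I J : Λ) : Λ → Prop := fun K => K = I ∨ K = J

theorem tw_left (I J : Λ) : tw I J I := Or.inl rfl
theorem tw_right (I J : Λ) : tw I J J := Or.inr rfl

theorem tw_not_adj (hsymm : Symmetric adj) (hirr : ∀ I : Λ, ¬ adj I I)
    {I J : Λ} (h : ¬ adj I J) : ∀ K K', tw I J K → tw I J K' → ¬ adj K K' := by
  intro K K' hK hK'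
  rcases hK with rfl | rfl <;> rcases hK' with rfl | rfl
  · exact hirr _
  · exact h
  · exact fun hh => h (hsymm hh)
  · exact hirr _

theorem shuffleStep_pj {Q : Λ → Prop} (hQ : ∀ K K', Q K → Q K' → ¬ adj K K')
    {L M : List (Syllable G)} (h : ShuffleStep adj L M) : pj Q L = pj Q M := by
  obtain ⟨A, B, s, t, hadj, rfl, rfl⟩ := h
  have : ¬ (Q s.1 ∧ Q t.1) := fun ⟨h1, h2⟩ => hQ _ _ h1 h2 hadj
  simp only [pj_append, pj_cons]
  by_cases h1 : Q s.1 <;> by_cases h2 : Q t.1 <;> simp [h1, h2] at this ⊢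

theorem shuffleEquiv_pj {Q : Λ → Prop} (hQ : ∀ K K', Q K → Q K' → ¬ adj K K')
    {L M : List (Syllable G)} (h : ShuffleEquiv adj L M) : pj Q L = pj Q M := by
  induction h with
  | refl => rfl
  | tail _ hbc ih => exact ih.trans (shuffleStep_pj hQ hbc)

theorem SE.rfl {L : List (Syllable G)} : ShuffleEquiv adj L L := Relation.ReflTransGen.refl

theorem SE.trans {L M N : List (Syllable G)} (h : ShuffleEquiv adj L M)
    (h' : ShuffleEquiv adj M N) : ShuffleEquiv adj L N := Relation.ReflTransGen.trans h h'

theorem SE.single {L M : List (Syllable G)} (h : ShuffleStep adj L M) :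
    ShuffleEquiv adj L M := Relation.ReflTransGen.single h

theorem shuffleStep_symm (hsymm : Symmetric adj) {L M : List (Syllable G)}
    (h : ShuffleStep adj L M) : ShuffleStep adj M L := by
  obtain ⟨A, B, s, t, hadj, rfl, rfl⟩ := h
  exact ⟨A, B, t, s, hsymm hadj, rfl, rfl⟩

theorem SE.symm (hsymm : Symmetric adj) {L M : List (Syllable G)}
    (h : ShuffleEquiv adj L M) : ShuffleEquiv adj M L := by
  induction h with
  | refl => exact SE.rfl
  | tail _ hbc ih => exact SE.trans (SE.single (shuffleStep_symm hsymm hbc)) ih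

theorem shuffleStep_cons (u : Syllable G) {L M : List (Syllable G)}
    (h : ShuffleStep adj L M) : ShuffleStep adj (u :: L) (u :: M) := by
  obtain ⟨A, B, s, t, hadj, rfl, rfl⟩ := h
  exact ⟨u :: A, B, s, t, hadj, rfl, rfl⟩

theorem SE.cons (u : Syllable G) {L M : List (Syllable G)}
    (h : ShuffleEquiv adj L M) : ShuffleEquiv adj (u :: L) (u :: M) := by
  induction h with
  | refl => exact SE.rfl
  | tail _ hbc ih => exact SE.trans ih (SE.single (shuffleStep_cons u hbc))

theorem SE.append_left (C : List (Syllable G)) {L M : List (Syllable G)}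
    (h : ShuffleEquiv adj L M) : ShuffleEquiv adj (C ++ L) (C ++ M) := by
  induction C with
  | nil => exact h
  | cons u C ih => exact SE.cons u ih

theorem shuffleStep_append_right {L M : List (Syllable G)} (C : List (Syllable G))
    (h : ShuffleStep adj L M) : ShuffleStep adj (L ++ C) (M ++ C) := by
  obtain ⟨A, B, s, t, hadj, rfl, rfl⟩ := h
  exact ⟨A, B ++ C, s, t, hadj, by simp, by simp⟩

theorem SE.append_right {L M : List (Syllable G)} (C : List (Syllable G))
    (h : ShuffleEquiv adj L M) : ShuffleEquiv adj (L ++ C) (M ++ C) := by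
  induction h with
  | refl => exact SE.rfl
  | tail _ hbc ih => exact SE.trans ih (SE.single (shuffleStep_append_right C hbc))

theorem shuffleStep_perm {L M : List (Syllable G)} (h : ShuffleStep adj L M) : L.Perm M := by
  obtain ⟨A, B, s, t, _, rfl, rfl⟩ := h
  exact (List.Perm.append_left A (List.Perm.swap t s B))

theorem SE.perm {L M : List (Syllable G)} (h : ShuffleEquiv adj L M) : L.Perm M := by
  induction h with
  | refl => exact List.Perm.refl _
  | tail _ hbc ih => exact ih.trans (shuffleStep_perm hbc)

theorem SE.length {L M : List (Syllable G)} (h : ShuffleEquiv adj L M) :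
    L.length = M.length := (SE.perm h).length_eq

theorem SE.mem {L M : List (Syllable G)} (h : ShuffleEquiv adj L M) {s : Syllable G}
    (hs : s ∈ L) : s ∈ M := (SE.perm h).mem_iff.1 hs

/-- move a syllable through a block of adjacent syllables to the front -/
theorem SE.move_front {A : List (Syllable G)} {s : Syllable G}
    (hA : ∀ t ∈ A, adj t.1 s.1) (B : List (Syllable G)) :
    ShuffleEquiv adj (A ++ s :: B) (s :: (A ++ B)) := by
  induction A with
  | nil => exact SE.rfl
  | cons u A ih =>
    have h1 : ShuffleEquiv adj (u :: (A ++ s :: B)) (u :: s :: (A ++ B)) :=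
      SE.cons u (ih (fun t ht => hA t (List.mem_cons_of_mem u ht)))
    have h2 : ShuffleStep adj (u :: s :: (A ++ B)) (s :: u :: (A ++ B)) :=
      ⟨[], A ++ B, u, s, hA u List.mem_cons_self, by simp, by simp⟩
    show ShuffleEquiv adj (u :: (A ++ s :: B)) (s :: (u :: A ++ B))
    exact SE.trans h1 (SE.single h2)

/-- extraction of the head syllable: projection form -/
theorem extract_lite (hsymm : Symmetric adj) (hirr : ∀ I : Λ, ¬ adj I I)
    {s : Syllable G} :
    ∀ (M L : List (Syllable G)),
    (∀ J, ¬ adj s.1 J → pj (tw s.1 J) (s :: L) = pj (tw s.1 J) M) →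
    ∃ A B, M = A ++ s :: B ∧ ∀ t ∈ A, adj t.1 s.1 := by
  intro M
  induction M with
  | nil =>
    intro L hp
    have := hp s.1 (hirr s.1)
    rw [pj_cons _ s, if_pos (tw_left _ _)] at this
    simp [pj] at this
  | cons m M ih =>
    intro L hp
    by_cases hm : adj m.1 s.1
    · have hne : m.1 ≠ s.1 := fun h => hirr s.1 (h ▸ hm)
      obtain ⟨A, B, hMeq, hA⟩ := ih L (fun J hJ => by
        have h1 := hp J hJ
        have hm2 : ¬ tw s.1 J m.1 := by
          rintro (h | h)
          · exact hne h
          · exact hJ (hsymm (h ▸ hm))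
        rw [pj_cons _ m, if_neg hm2] at h1
        exact h1)
      exact ⟨m :: A, B, by rw [hMeq]; rfl, fun t ht => by
        rcases List.mem_cons.1 ht with rfl | ht
        · exact hm
        · exact hA t ht⟩
    · have hns : ¬ adj s.1 m.1 := fun h => hm (hsymm h)
      have h1 := hp m.1 hns
      rw [pj_cons _ s, if_pos (tw_left _ _), pj_cons _ m, if_pos (tw_right _ _)] at h1
      injection h1 with h1a _
      exact ⟨[], M, by rw [h1a]; rfl, by simp⟩

theorem criterion (hsymm : Symmetric adj) (hirr : ∀ I : Λ, ¬ adj I I)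
    (L : List (Syllable G)) : ∀ (M : List (Syllable G)),
    (∀ I J, ¬ adj I J → pj (tw I J) L = pj (tw I J) M) → ShuffleEquiv adj L M := by
  induction L with
  | nil =>
    intro M hp
    cases M with
    | nil => exact SE.rfl
    | cons m M' =>
      have := hp m.1 m.1 (hirr m.1)
      rw [pj_cons _ m, if_pos (tw_left _ _)] at this
      simp [pj] at this
  | cons s T ih =>
    intro M hp
    obtain ⟨A, B, rfl, hA⟩ := extract_lite hsymm hirr M T
      (fun J hJ => hp s.1 J hJ)
    have hmv : ShuffleEquiv adj (A ++ s :: B) (s :: (A ++ B)) := SE.move_front hA B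
    have hT : ShuffleEquiv adj T (A ++ B) := by
      refine ih (A ++ B) (fun I J hIJ => ?_)
      have h2 : pj (tw I J) (s :: T) = pj (tw I J) (s :: (A ++ B)) :=
        (hp I J hIJ).trans (shuffleEquiv_pj (tw_not_adj hsymm hirr hIJ) hmv)
      rw [pj_cons _ s, pj_cons _ s] at h2
      by_cases hQ : tw I J s.1
      · rw [if_pos hQ, if_pos hQ] at h2
        injection h2
      · rwa [if_neg hQ, if_neg hQ] at h2
    exact SE.trans (SE.cons s hT) (SE.symm hsymm hmv)

theorem head_extract (hsymm : Symmetric adj) (hirr : ∀ I : Λ, ¬ adj I I)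
    {s : Syllable G} {L M : List (Syllable G)} (h : ShuffleEquiv adj (s :: L) M) :
    ∃ A B, M = A ++ s :: B ∧ (∀ t ∈ A, adj t.1 s.1) ∧ ShuffleEquiv adj L (A ++ B) := by
  obtain ⟨A, B, rfl, hA⟩ := extract_lite hsymm hirr M L
    (fun J hJ => shuffleEquiv_pj (tw_not_adj hsymm hirr hJ) h)
  have hmv : ShuffleEquiv adj (A ++ s :: B) (s :: (A ++ B)) := SE.move_front hA B
  refine ⟨A, B, rfl, hA, criterion hsymm hirr L (A ++ B) (fun I J hIJ => ?_)⟩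
  have h2 : pj (tw I J) (s :: L) = pj (tw I J) (s :: (A ++ B)) :=
    (shuffleEquiv_pj (tw_not_adj hsymm hirr hIJ) h).trans
      (shuffleEquiv_pj (tw_not_adj hsymm hirr hIJ) hmv)
  rw [pj_cons _ s, pj_cons _ s] at h2
  by_cases hQ : tw I J s.1
  · rw [if_pos hQ, if_pos hQ] at h2
    injection h2
  · rwa [if_neg hQ, if_neg hQ] at h2

theorem uniq_head (hsymm : Symmetric adj) (hirr : ∀ I : Λ, ¬ adj I I)
    {s t : Syllable G} {L₁ L₂ : List (Syllable G)}
    (h : ShuffleEquiv adj (s :: L₁) (t :: L₂)) (hst : s.1 = t.1) :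
    s = t ∧ ShuffleEquiv adj L₁ L₂ := by
  obtain ⟨A, B, hM, hA, hL⟩ := head_extract hsymm hirr h
  cases A with
  | nil =>
    rw [List.nil_append] at hM hL
    injection hM with h1 h2
    exact ⟨h1.symm, h2 ▸ hL⟩
  | cons a A' =>
    injection hM with h1 _
    exfalso
    have h2 : adj a.1 s.1 := hA a List.mem_cons_self
    have h3 : a.1 = s.1 := (hst.trans (congrArg Sigma.fst h1)).symm
    rw [h3] at h2
    exact hirr _ h2

theorem SE.cancel_head (hsymm : Symmetric adj) (hirr : ∀ I : Λ, ¬ adj I I)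
    {s : Syllable G} {L₁ L₂ : List (Syllable G)}
    (h : ShuffleEquiv adj (s :: L₁) (s :: L₂)) : ShuffleEquiv adj L₁ L₂ :=
  (uniq_head hsymm hirr h (Eq.refl s.1)).2

theorem shuffleStep_reverse (hsymm : Symmetric adj) {L M : List (Syllable G)}
    (h : ShuffleStep adj L M) : ShuffleStep adj L.reverse M.reverse := by
  obtain ⟨A, B, s, t, hadj, rfl, rfl⟩ := h
  exact ⟨B.reverse, A.reverse, t, s, hsymm hadj, by simp, by simp⟩

theorem SE.reverse (hsymm : Symmetric adj) {L M : List (Syllable G)}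
    (h : ShuffleEquiv adj L M) : ShuffleEquiv adj L.reverse M.reverse := by
  induction h with
  | refl => exact SE.rfl
  | tail _ hbc ih => exact SE.trans ih (SE.single (shuffleStep_reverse hsymm hbc))

theorem SE.of_reverse (hsymm : Symmetric adj) {L M : List (Syllable G)}
    (h : ShuffleEquiv adj L.reverse M.reverse) : ShuffleEquiv adj L M := by
  have := SE.reverse hsymm h
  simpa using this

theorem SE.move_back (hsymm : Symmetric adj) {B : List (Syllable G)} {s : Syllable G}
    (hB : ∀ t ∈ B, adj t.1 s.1) (A : List (Syllable G)) :
    ShuffleEquiv adj (A ++ s :: B) ((A ++ B) ++ [s]) := by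
  apply SE.of_reverse hsymm
  have h1 : ShuffleEquiv adj (B.reverse ++ s :: A.reverse) (s :: (B.reverse ++ A.reverse)) :=
    SE.move_front (fun t ht => hB t (by simpa using ht)) A.reverse
  have e1 : (A ++ s :: B).reverse = B.reverse ++ s :: A.reverse := by simp
  have e2 : ((A ++ B) ++ [s]).reverse = s :: (B.reverse ++ A.reverse) := by simp
  rw [e1, e2]
  exact h1

theorem tail_extract (hsymm : Symmetric adj) (hirr : ∀ I : Λ, ¬ adj I I)
    {s : Syllable G} {L M : List (Syllable G)} (h : ShuffleEquiv adj (L ++ [s]) M) :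
    ∃ A B, M = A ++ s :: B ∧ (∀ t ∈ B, adj t.1 s.1) ∧ ShuffleEquiv adj L (A ++ B) := by
  have h1 : ShuffleEquiv adj (s :: L.reverse) M.reverse := by
    have := SE.reverse hsymm h
    simpa using this
  obtain ⟨A', B', hM, hA', hL⟩ := head_extract hsymm hirr h1
  refine ⟨B'.reverse, A'.reverse, ?_, ?_, ?_⟩
  · have : M.reverse.reverse = (A' ++ s :: B').reverse := by rw [hM]
    simpa using this
  · intro t ht
    exact hA' t (by simpa using ht)
  · apply SE.of_reverse hsymm
    have : ShuffleEquiv adj L.reverse ((A' ++ B').reverse).reverse := by simpa using hL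
    simpa using this

/-- the syllable `⟨I, a⟩` -/
def syl (I : Λ) (a : G I) (ha : a ≠ 1) : Syllable G := ⟨I, ⟨a, ha⟩⟩

theorem syl_fst (I : Λ) (a : G I) (ha : a ≠ 1) : (syl I a ha).1 = I := rfl

theorem syl_inj {I : Λ} {a b : G I} {ha : a ≠ 1} {hb : b ≠ 1}
    (h : syl I a ha = syl I b hb) : a = b := by
  have h2 := (Sigma.mk.inj_iff.mp h).2
  exact congrArg Subtype.val (eq_of_heq h2)

theorem split2 {B D : List (Syllable G)} {s t t' : Syllable G} :
    ∀ (C A : List (Syllable G)), A ++ s :: B = C ++ t :: t' :: D →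
    (∃ C₂, C = A ++ s :: C₂ ∧ B = C₂ ++ t :: t' :: D) ∨
    (A = C ∧ s = t ∧ B = t' :: D) ∨
    (A = C ++ [t] ∧ s = t' ∧ B = D) ∨
    (∃ D₁, A = C ++ t :: t' :: D₁ ∧ D = D₁ ++ s :: B) := by
  intro C
  induction C with
  | nil =>
    intro A h
    cases A with
    | nil =>
      simp only [List.nil_append, List.cons.injEq] at h
      exact Or.inr (Or.inl ⟨rfl, h.1, h.2⟩)
    | cons a A' =>
      simp only [List.cons_append, List.nil_append, List.cons.injEq] at h
      obtain ⟨rfl, h2⟩ := h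
      cases A' with
      | nil =>
        simp only [List.nil_append, List.cons.injEq] at h2
        exact Or.inr (Or.inr (Or.inl ⟨rfl, h2.1, h2.2⟩))
      | cons a' A'' =>
        simp only [List.cons_append, List.cons.injEq] at h2
        obtain ⟨rfl, h3⟩ := h2
        exact Or.inr (Or.inr (Or.inr ⟨A'', rfl, h3.symm⟩))
  | cons c C' ih =>
    intro A h
    cases A with
    | nil =>
      simp only [List.nil_append, List.cons_append, List.cons.injEq] at h
      obtain ⟨rfl, h2⟩ := h
      exact Or.inl ⟨C', by simp, h2⟩
    | cons a A' =>
      simp only [List.cons_append, List.cons.injEq] at h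
      obtain ⟨rfl, h2⟩ := h
      rcases ih A' h2 with ⟨C₂, hC, hB⟩ | ⟨hA, hs, hB⟩ | ⟨hA, hs, hB⟩ | ⟨D₁, hA, hD⟩
      · exact Or.inl ⟨C₂, by rw [hC]; rfl, hB⟩
      · exact Or.inr (Or.inl ⟨by rw [hA], hs, hB⟩)
      · exact Or.inr (Or.inr (Or.inl ⟨by rw [hA]; rfl, hs, hB⟩))
      · exact Or.inr (Or.inr (Or.inr ⟨D₁, by rw [hA]; rfl, hD⟩))

theorem red_of_equiv (hsymm : Symmetric adj) {L M : List (Syllable G)}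
    (hred : Reduced adj L) (h : ShuffleEquiv adj L M) : Reduced adj M := by
  rintro ⟨L', hse, hamalg⟩
  exact hred ⟨L', SE.trans h hse, hamalg⟩

theorem not_amalg_short {L : List (Syllable G)} (h : L.length ≤ 1) : ¬ Amalgamable L := by
  rintro ⟨A, B, s, t, _, rfl⟩
  simp [List.length_append] at h
  omega

theorem red_nil : Reduced adj ([] : List (Syllable G)) := by
  rintro ⟨L', hse, hamalg⟩
  have h1 : L'.length = 0 := by simpa using (SE.length hse).symm
  exact not_amalg_short (by omega) hamalg

theorem red_single (s : Syllable G) : Reduced adj [s] := by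
  rintro ⟨L', hse, hamalg⟩
  have h1 : L'.length = 1 := by simpa using (SE.length hse).symm
  exact not_amalg_short (by omega) hamalg

theorem red_tail {s : Syllable G} {L : List (Syllable G)}
    (hred : Reduced adj (s :: L)) : Reduced adj L := by
  rintro ⟨L', hse, A, B, u, v, huv, rfl⟩
  exact hred ⟨s :: (A ++ u :: v :: B), SE.cons s hse, s :: A, B, u, v, huv, rfl⟩

theorem red_dropLast {s : Syllable G} {L : List (Syllable G)}
    (hred : Reduced adj (L ++ [s])) : Reduced adj L := by
  rintro ⟨L', hse, A, B, u, v, huv, rfl⟩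
  refine hred ⟨A ++ u :: v :: (B ++ [s]), ?_, A, B ++ [s], u, v, huv, rfl⟩
  have h2 := SE.append_right [s] hse
  have e : (A ++ u :: v :: B) ++ [s] = A ++ u :: v :: (B ++ [s]) := by simp
  rw [e] at h2
  exact h2

/-- `L` is shuffle equivalent to a word starting at vertex `I`. -/
def HasInitL (adj : Λ → Λ → Prop) (I : Λ) (L : List (Syllable G)) : Prop :=
  ∃ (a : G I) (ha : a ≠ 1) (T : List (Syllable G)), ShuffleEquiv adj L (syl I a ha :: T)

theorem hasInitL_equiv (hsymm : Symmetric adj) {I : Λ} {L M : List (Syllable G)}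
    (h : ShuffleEquiv adj L M) (hi : HasInitL adj I L) : HasInitL adj I M := by
  obtain ⟨a, ha, T, hT⟩ := hi
  exact ⟨a, ha, T, SE.trans (SE.symm hsymm h) hT⟩

theorem red_head_not_init (hsymm : Symmetric adj) (hirr : ∀ I : Λ, ¬ adj I I)
    {I : Λ} {a : G I} {ha : a ≠ 1} {L : List (Syllable G)}
    (hred : Reduced adj (syl I a ha :: L)) : ¬ HasInitL adj I L := by
  rintro ⟨b, hb, T, hT⟩
  exact hred ⟨syl I a ha :: syl I b hb :: T, SE.cons _ hT, [], T, syl I a ha, syl I b hb, rfl, rfl⟩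

theorem red_cons (hsymm : Symmetric adj) (hirr : ∀ I : Λ, ¬ adj I I)
    {I : Λ} {L : List (Syllable G)} (hni : ¬ HasInitL adj I L) (hred : Reduced adj L)
    (a : G I) (ha : a ≠ 1) : Reduced adj (syl I a ha :: L) := by
  rintro ⟨M, hse, C, D, t, t', htt, hM⟩
  obtain ⟨A, B, rfl, hA, hL⟩ := head_extract hsymm hirr hse
  rcases split2 C A hM with ⟨C₂, hC, hB⟩ | ⟨hAC, hs, hB⟩ | ⟨hAC, hs, hB⟩ | ⟨D₁, hAC, hD⟩
  · -- pair inside B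
    refine hred ⟨(A ++ C₂) ++ t :: t' :: D, ?_, A ++ C₂, D, t, t', htt, rfl⟩
    rw [hB] at hL
    exact hL.trans (by rw [List.append_assoc])
  · -- s = t : the head merges with t', which is an I-initial syllable of L
    subst hAC
    subst hs
    apply hni
    obtain ⟨J, b, hb⟩ := t'
    have h4 : I = J := htt
    subst h4
    have h2 : ShuffleEquiv adj L (syl I b hb :: (A ++ D)) := by
      rw [hB] at hL
      exact hL.trans (SE.move_front (s := syl I b hb) (fun u hu => hA u hu) D)
    exact ⟨b, hb, A ++ D, h2⟩
  · -- s = t' : then t ∈ A is at vertex I, adjacent to I: contradiction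
    exfalso
    have ht : t ∈ A := by rw [hAC]; simp
    have h1 := hA t ht
    have h2 : t'.1 = I := by rw [← hs]; rfl
    rw [htt, h2] at h1
    exact hirr _ h1
  · -- pair inside A
    refine hred ⟨C ++ t :: t' :: (D₁ ++ B), ?_, C, D₁ ++ B, t, t', htt, rfl⟩
    rw [hAC] at hL
    have e : (C ++ t :: t' :: D₁) ++ B = C ++ t :: t' :: (D₁ ++ B) := by simp
    rw [e] at hL
    exact hL

theorem red_replace_head (hsymm : Symmetric adj) (hirr : ∀ I : Λ, ¬ adj I I)
    {I : Λ} {a : G I} {ha : a ≠ 1} {L : List (Syllable G)}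
    (hred : Reduced adj (syl I a ha :: L)) (c : G I) (hc : c ≠ 1) :
    Reduced adj (syl I c hc :: L) :=
  red_cons hsymm hirr (red_head_not_init hsymm hirr hred) (red_tail hred) c hc

theorem amalg_reverse {L : List (Syllable G)} (h : Amalgamable L) : Amalgamable L.reverse := by
  obtain ⟨A, B, s, t, hst, rfl⟩ := h
  exact ⟨B.reverse, A.reverse, t, s, hst.symm, by simp⟩

theorem red_reverse (hsymm : Symmetric adj) {L : List (Syllable G)}
    (hred : Reduced adj L) : Reduced adj L.reverse := by
  rintro ⟨M, hse, hamalg⟩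
  refine hred ⟨M.reverse, ?_, amalg_reverse hamalg⟩
  have := SE.reverse hsymm hse
  simpa using this

theorem red_reverse_iff (hsymm : Symmetric adj) {L : List (Syllable G)} :
    Reduced adj L.reverse ↔ Reduced adj L := by
  constructor
  · intro h
    have := red_reverse hsymm h
    simpa using this
  · exact red_reverse hsymm

/-- `L` is shuffle equivalent to a word ending at vertex `I`. -/
def HasFinL (adj : Λ → Λ → Prop) (I : Λ) (L : List (Syllable G)) : Prop :=
  HasInitL adj I L.reverse

theorem red_append (hsymm : Symmetric adj) (hirr : ∀ I : Λ, ¬ adj I I)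
    {I : Λ} {L : List (Syllable G)} (hnf : ¬ HasFinL adj I L) (hred : Reduced adj L)
    (a : G I) (ha : a ≠ 1) : Reduced adj (L ++ [syl I a ha]) := by
  rw [← red_reverse_iff hsymm]
  have : (L ++ [syl I a ha]).reverse = syl I a ha :: L.reverse := by simp
  rw [this]
  exact red_cons hsymm hirr hnf (red_reverse hsymm hred) a ha

theorem red_last_not_fin (hsymm : Symmetric adj) (hirr : ∀ I : Λ, ¬ adj I I)
    {I : Λ} {a : G I} {ha : a ≠ 1} {L : List (Syllable G)}
    (hred : Reduced adj (L ++ [syl I a ha])) : ¬ HasFinL adj I L := by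
  have h1 : Reduced adj (syl I a ha :: L.reverse) := by
    have := red_reverse hsymm hred
    simpa using this
  exact red_head_not_init hsymm hirr h1

theorem red_replace_last (hsymm : Symmetric adj) (hirr : ∀ I : Λ, ¬ adj I I)
    {I : Λ} {a : G I} {ha : a ≠ 1} {L : List (Syllable G)}
    (hred : Reduced adj (L ++ [syl I a ha])) (c : G I) (hc : c ≠ 1) :
    Reduced adj (L ++ [syl I c hc]) :=
  red_append hsymm hirr (red_last_not_fin hsymm hirr hred)
    (red_dropLast hred) c hc

theorem uniq_init (hsymm : Symmetric adj) (hirr : ∀ I : Λ, ¬ adj I I)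
    {I : Λ} {a b : G I} {ha : a ≠ 1} {hb : b ≠ 1} {L T₁ T₂ : List (Syllable G)}
    (h1 : ShuffleEquiv adj L (syl I a ha :: T₁))
    (h2 : ShuffleEquiv adj L (syl I b hb :: T₂)) :
    a = b ∧ ShuffleEquiv adj T₁ T₂ := by
  have h3 := SE.trans (SE.symm hsymm h1) h2
  obtain ⟨huv, hT⟩ := uniq_head hsymm hirr h3 (Eq.refl I)
  exact ⟨syl_inj huv, hT⟩

theorem evalWord_nil : evalWord adj G [] = 1 := rfl

theorem evalWord_cons (s : Syllable G) (L : List (Syllable G)) :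
    evalWord adj G (s :: L) = mkOf adj G s.2.1 * evalWord adj G L := by
  simp [evalWord]

theorem evalWord_append (L M : List (Syllable G)) :
    evalWord adj G (L ++ M) = evalWord adj G L * evalWord adj G M := by
  simp [evalWord]

theorem evalWord_singleton (s : Syllable G) :
    evalWord adj G [s] = mkOf adj G s.2.1 := by
  simp [evalWord]

theorem mkOf_mul {I : Λ} (a b : G I) :
    mkOf adj G (a * b) = mkOf adj G a * mkOf adj G b := by
  unfold mkOf; rw [map_mul]; rfl

theorem mkOf_one {I : Λ} : mkOf adj G (1 : G I) = 1 := by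
  unfold mkOf; rw [map_one]; rfl

theorem mkOf_inv {I : Λ} (a : G I) : mkOf adj G a⁻¹ = (mkOf adj G a)⁻¹ := by
  unfold mkOf; rw [map_inv]; rfl

theorem mkOf_commute {I J : Λ} (hadj : adj I J) (a : G I) (b : G J) :
    mkOf adj G a * mkOf adj G b = mkOf adj G b * mkOf adj G a := by
  have hmem : (Monoid.CoprodI.of a * Monoid.CoprodI.of b *
      (Monoid.CoprodI.of a)⁻¹ * (Monoid.CoprodI.of b)⁻¹) ∈
      Subgroup.normalClosure
      {g : Monoid.CoprodI G | ∃ (I J : Λ) (x : G I) (y : G J), adj I J ∧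
        g = Monoid.CoprodI.of x * Monoid.CoprodI.of y *
            (Monoid.CoprodI.of x)⁻¹ * (Monoid.CoprodI.of y)⁻¹} :=
    Subgroup.subset_normalClosure ⟨I, J, a, b, hadj, rfl⟩
  have h1 : (QuotientGroup.mk (Monoid.CoprodI.of a * Monoid.CoprodI.of b *
      (Monoid.CoprodI.of a)⁻¹ * (Monoid.CoprodI.of b)⁻¹) :
      GraphProduct adj G) = 1 := (QuotientGroup.eq_one_iff _).mpr hmem
  have h2 : mkOf adj G a * mkOf adj G b * (mkOf adj G a)⁻¹ * (mkOf adj G b)⁻¹ = 1 := by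
    exact h1
  have h4 := h2
  rw [mul_inv_eq_one, mul_inv_eq_iff_eq_mul] at h4
  exact h4

theorem eval_step {L M : List (Syllable G)} (h : ShuffleStep adj L M) :
    evalWord adj G L = evalWord adj G M := by
  obtain ⟨A, B, s, t, hadj, rfl, rfl⟩ := h
  have hc := mkOf_commute hadj s.2.1 t.2.1
  simp only [evalWord_append, evalWord_cons, ← mul_assoc]
  rw [mul_assoc (evalWord adj G A) (mkOf adj G s.2.1) (mkOf adj G t.2.1), hc, ← mul_assoc]

theorem eval_equiv {L M : List (Syllable G)} (h : ShuffleEquiv adj L M) :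
    evalWord adj G L = evalWord adj G M := by
  induction h with
  | refl => rfl
  | tail _ hbc ih => exact ih.trans (eval_step hbc)

/-- the inverse of a syllable -/
def invS (s : Syllable G) : Syllable G := ⟨s.1, ⟨(s.2.1)⁻¹, inv_ne_one.mpr s.2.2⟩⟩

theorem invS_fst (s : Syllable G) : (invS s).1 = s.1 := rfl

theorem invS_invS (s : Syllable G) : invS (invS s) = s := by
  obtain ⟨I, a, ha⟩ := s
  exact Sigma.ext rfl (heq_of_eq (Subtype.ext (inv_inv a)))

/-- the formal inverse of a word -/
def invW (L : List (Syllable G)) : List (Syllable G) := (L.map invS).reverse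

theorem invW_invW (L : List (Syllable G)) : invW (invW L) = L := by
  simp only [invW, List.map_reverse, List.reverse_reverse, List.map_map]
  have hcomp : invS ∘ invS = (id : Syllable G → Syllable G) := funext invS_invS
  rw [hcomp, List.map_id]

theorem invW_nil : invW ([] : List (Syllable G)) = [] := rfl

theorem invW_cons (s : Syllable G) (L : List (Syllable G)) :
    invW (s :: L) = invW L ++ [invS s] := by simp [invW]

theorem invW_append (L M : List (Syllable G)) :
    invW (L ++ M) = invW M ++ invW L := by simp [invW]

theorem eval_invW (L : List (Syllable G)) :
    evalWord adj G (invW L) = (evalWord adj G L)⁻¹ := by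
  induction L with
  | nil => simp [invW, evalWord_nil]
  | cons s L ih =>
    rw [invW_cons, evalWord_append, evalWord_singleton, ih, evalWord_cons]
    simp [invS, mkOf_inv, mul_inv_rev]

theorem step_invW (hsymm : Symmetric adj) {L M : List (Syllable G)}
    (h : ShuffleStep adj L M) : ShuffleStep adj (invW L) (invW M) := by
  obtain ⟨A, B, s, t, hadj, rfl, rfl⟩ := h
  refine ⟨invW B, invW A, invS t, invS s, hsymm hadj, ?_, ?_⟩ <;>
    simp [invW_append, invW_cons, List.append_assoc]

theorem SE_invW (hsymm : Symmetric adj) {L M : List (Syllable G)}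
    (h : ShuffleEquiv adj L M) : ShuffleEquiv adj (invW L) (invW M) := by
  induction h with
  | refl => exact SE.rfl
  | tail _ hbc ih => exact SE.trans ih (SE.single (step_invW hsymm hbc))

theorem amalg_invW {L : List (Syllable G)} (h : Amalgamable L) : Amalgamable (invW L) := by
  obtain ⟨A, B, s, t, hst, rfl⟩ := h
  refine ⟨invW B, invW A, invS t, invS s, hst.symm, ?_⟩
  simp [invW_append, invW_cons, List.append_assoc]

theorem red_invW (hsymm : Symmetric adj) {L : List (Syllable G)}
    (hred : Reduced adj L) : Reduced adj (invW L) := by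
  rintro ⟨M, hse, hamalg⟩
  refine hred ⟨invW M, ?_, amalg_invW hamalg⟩
  have := SE_invW hsymm hse
  rwa [invW_invW] at this

/-! ### choice of initial part and tail -/

noncomputable def initPartL (adj : Λ → Λ → Prop) (I : Λ) (L : List (Syllable G)) : G I :=
  if h : HasInitL adj I L then h.choose else 1

noncomputable def initTailL (adj : Λ → Λ → Prop) (I : Λ) (L : List (Syllable G)) :
    List (Syllable G) :=
  if h : HasInitL adj I L then h.choose_spec.choose_spec.choose else L

theorem initPartL_pos_spec {I : Λ} {L : List (Syllable G)} (h : HasInitL adj I L) :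
    ∃ hne : initPartL adj I L ≠ 1,
      ShuffleEquiv adj L (syl I (initPartL adj I L) hne :: initTailL adj I L) := by
  rw [initPartL, initTailL, dif_pos h, dif_pos h]
  exact ⟨h.choose_spec.choose, h.choose_spec.choose_spec.choose_spec⟩

theorem initPartL_neg {I : Λ} {L : List (Syllable G)} (h : ¬ HasInitL adj I L) :
    initPartL adj I L = 1 ∧ initTailL adj I L = L := by
  rw [initPartL, initTailL, dif_neg h, dif_neg h]
  exact ⟨rfl, rfl⟩

theorem initPartL_eq (hsymm : Symmetric adj) (hirr : ∀ I : Λ, ¬ adj I I)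
    {I : Λ} {a : G I} {ha : a ≠ 1} {L T : List (Syllable G)}
    (hse : ShuffleEquiv adj L (syl I a ha :: T)) :
    initPartL adj I L = a ∧ ShuffleEquiv adj (initTailL adj I L) T := by
  have h : HasInitL adj I L := ⟨a, ha, T, hse⟩
  obtain ⟨hne, hspec⟩ := initPartL_pos_spec h
  exact uniq_init hsymm hirr hspec hse

/-! ### conses -/

noncomputable def consL (I : Λ) (a : G I) (T : List (Syllable G)) : List (Syllable G) :=
  if h : a = 1 then T else syl I a h :: T

theorem consL_one {I : Λ} (T : List (Syllable G)) : consL I (1 : G I) T = T := dif_pos rfl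

theorem consL_ne {I : Λ} {a : G I} (h : a ≠ 1) (T : List (Syllable G)) :
    consL I a T = syl I a h :: T := dif_neg h

theorem eval_consL (I : Λ) (a : G I) (T : List (Syllable G)) :
    evalWord adj G (consL I a T) = mkOf adj G a * evalWord adj G T := by
  by_cases h : a = 1
  · subst h; rw [consL_one, mkOf_one, one_mul]
  · rw [consL_ne h, evalWord_cons]; rfl

theorem SE_consL {I : Λ} (a : G I) {T T' : List (Syllable G)}
    (h : ShuffleEquiv adj T T') : ShuffleEquiv adj (consL I a T) (consL I a T') := by
  by_cases ha : a = 1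
  · subst ha; rwa [consL_one, consL_one]
  · rw [consL_ne ha, consL_ne ha]; exact SE.cons _ h

theorem consL_red (hsymm : Symmetric adj) (hirr : ∀ I : Λ, ¬ adj I I)
    {I : Λ} {T : List (Syllable G)} (hni : ¬ HasInitL adj I T) (hred : Reduced adj T)
    (a : G I) : Reduced adj (consL I a T) := by
  by_cases h : a = 1
  · subst h; rwa [consL_one]
  · rw [consL_ne h]; exact red_cons hsymm hirr hni hred a h

theorem initPartL_of_consL (hsymm : Symmetric adj) (hirr : ∀ I : Λ, ¬ adj I I)
    {I : Λ} {a : G I} {T W : List (Syllable G)}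
    (hse : ShuffleEquiv adj W (consL I a T)) (hni : ¬ HasInitL adj I T) :
    initPartL adj I W = a ∧ ShuffleEquiv adj (initTailL adj I W) T := by
  by_cases h : a = 1
  · subst h
    rw [consL_one] at hse
    have hniW : ¬ HasInitL adj I W := fun hi =>
      hni (hasInitL_equiv hsymm hse hi)
    obtain ⟨h1, h2⟩ := initPartL_neg hniW
    rw [h2]
    exact ⟨h1, hse⟩
  · rw [consL_ne h] at hse
    exact initPartL_eq hsymm hirr hse

theorem initTailL_red (hsymm : Symmetric adj) (hirr : ∀ I : Λ, ¬ adj I I)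
    {I : Λ} {L : List (Syllable G)} (hred : Reduced adj L) :
    Reduced adj (initTailL adj I L) ∧ ¬ HasInitL adj I (initTailL adj I L) := by
  by_cases h : HasInitL adj I L
  · obtain ⟨hne, hspec⟩ := initPartL_pos_spec h
    have hr2 : Reduced adj (syl I _ hne :: initTailL adj I L) := red_of_equiv hsymm hred hspec
    exact ⟨red_tail hr2, red_head_not_init hsymm hirr hr2⟩
  · obtain ⟨_, h2⟩ := initPartL_neg h
    rw [h2]
    exact ⟨hred, h⟩

theorem exists_decomp (hsymm : Symmetric adj) (hirr : ∀ I : Λ, ¬ adj I I)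
    (I : Λ) {L : List (Syllable G)} (hred : Reduced adj L) :
    ShuffleEquiv adj L (consL I (initPartL adj I L) (initTailL adj I L)) := by
  by_cases h : HasInitL adj I L
  · obtain ⟨hne, hspec⟩ := initPartL_pos_spec h
    rwa [consL_ne hne]
  · obtain ⟨h1, h2⟩ := initPartL_neg h
    rw [h1, h2, consL_one]
    exact SE.rfl

/-! ### the space of reduced words up to shuffles -/

variable (G) in
structure RWord (adj : Λ → Λ → Prop) : Type (max u v) where
  w : List (Syllable G)
  red : Reduced adj w

variable (G) in
def NFrel (adj : Λ → Λ → Prop) : RWord G adj → RWord G adj → Prop :=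
  fun L M => ShuffleEquiv adj L.w M.w

theorem NFrel_equivalence (hsymm : Symmetric adj) : Equivalence (NFrel G adj) :=
  ⟨fun _ => SE.rfl, fun h => SE.symm hsymm h, fun h h' => SE.trans h h'⟩

variable (G) in
def NF (adj : Λ → Λ → Prop) : Type (max u v) := Quot (NFrel G adj)

def mkNF (L : RWord G adj) : NF G adj := Quot.mk _ L

theorem mkNF_sound {L M : RWord G adj} (h : ShuffleEquiv adj L.w M.w) : mkNF L = mkNF M :=
  Quot.sound h

theorem mkNF_exact (hsymm : Symmetric adj) {L M : RWord G adj} (h : mkNF L = mkNF M) :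
    ShuffleEquiv adj L.w M.w := by
  have h2 := Quot.eqvGen_exact h
  exact ((Equivalence.eqvGen_iff (NFrel_equivalence hsymm)).mp h2 : NFrel G adj L M)

/-! ### the action of a vertex group element -/

noncomputable def aFun (hsymm : Symmetric adj) (hirr : ∀ I : Λ, ¬ adj I I)
    (I : Λ) (g : G I) (L : RWord G adj) : RWord G adj :=
  ⟨consL I (g * initPartL adj I L.w) (initTailL adj I L.w),
   consL_red hsymm hirr (initTailL_red hsymm hirr L.red).2 (initTailL_red hsymm hirr L.red).1 _⟩

theorem initPartL_congr (hsymm : Symmetric adj) (hirr : ∀ I : Λ, ¬ adj I I)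
    (I : Λ) {L M : List (Syllable G)} (h : ShuffleEquiv adj L M) :
    initPartL adj I L = initPartL adj I M ∧
      ShuffleEquiv adj (initTailL adj I L) (initTailL adj I M) := by
  by_cases hi : HasInitL adj I L
  · obtain ⟨hne, hspec⟩ := initPartL_pos_spec hi
    have hse2 : ShuffleEquiv adj M (syl I _ hne :: initTailL adj I L) :=
      SE.trans (SE.symm hsymm h) hspec
    obtain ⟨h1, h2⟩ := initPartL_eq hsymm hirr hse2
    exact ⟨h1.symm, SE.symm hsymm h2⟩
  · have hiM : ¬ HasInitL adj I M := fun hm => hi (hasInitL_equiv hsymm (SE.symm hsymm h) hm)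
    obtain ⟨h1, h2⟩ := initPartL_neg hi
    obtain ⟨h3, h4⟩ := initPartL_neg hiM
    rw [h1, h2, h3, h4]
    exact ⟨rfl, h⟩

theorem aFun_respects (hsymm : Symmetric adj) (hirr : ∀ I : Λ, ¬ adj I I)
    (I : Λ) (g : G I) (L M : RWord G adj) (h : NFrel G adj L M) :
    NFrel G adj (aFun hsymm hirr I g L) (aFun hsymm hirr I g M) := by
  obtain ⟨h1, h2⟩ := initPartL_congr hsymm hirr I (h : ShuffleEquiv adj L.w M.w)
  show ShuffleEquiv adj
    (consL I (g * initPartL adj I L.w) (initTailL adj I L.w))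
    (consL I (g * initPartL adj I M.w) (initTailL adj I M.w))
  rw [h1]
  exact SE_consL _ h2

noncomputable def aQ (hsymm : Symmetric adj) (hirr : ∀ I : Λ, ¬ adj I I)
    (I : Λ) (g : G I) : NF G adj → NF G adj :=
  Quot.map (aFun hsymm hirr I g) (aFun_respects hsymm hirr I g)

theorem aQ_mk (hsymm : Symmetric adj) (hirr : ∀ I : Λ, ¬ adj I I)
    (I : Λ) (g : G I) (L : RWord G adj) :
    aQ hsymm hirr I g (mkNF L) = mkNF (aFun hsymm hirr I g L) := rfl

theorem aQ_eq (hsymm : Symmetric adj) (hirr : ∀ I : Λ, ¬ adj I I)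
    {I : Λ} (g : G I) {L : RWord G adj} {a : G I} {T : List (Syllable G)}
    (hse : ShuffleEquiv adj L.w (consL I a T)) (hni : ¬ HasInitL adj I T)
    (hredT : Reduced adj T) :
    aQ hsymm hirr I g (mkNF L) =
      mkNF ⟨consL I (g * a) T, consL_red hsymm hirr hni hredT _⟩ := by
  rw [aQ_mk]
  apply mkNF_sound
  obtain ⟨h1, h2⟩ := initPartL_of_consL hsymm hirr hse hni
  show ShuffleEquiv adj (consL I (g * initPartL adj I L.w) (initTailL adj I L.w)) _
  rw [h1]
  exact SE_consL _ h2

theorem aQ_one (hsymm : Symmetric adj) (hirr : ∀ I : Λ, ¬ adj I I)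
    (I : Λ) (x : NF G adj) : aQ hsymm hirr I 1 x = x := by
  induction x using Quot.ind with
  | _ L =>
    have hni := (initTailL_red hsymm hirr (I := I) L.red).2
    have hredT := (initTailL_red hsymm hirr (I := I) L.red).1
    have hse := exists_decomp hsymm hirr I L.red
    show aQ hsymm hirr I 1 (mkNF L) = mkNF L
    rw [aQ_eq hsymm hirr (1 : G I) hse hni hredT]
    apply mkNF_sound
    show ShuffleEquiv adj (consL I (1 * initPartL adj I L.w) (initTailL adj I L.w)) L.w
    rw [one_mul]
    exact SE.symm hsymm hse

theorem aQ_mul (hsymm : Symmetric adj) (hirr : ∀ I : Λ, ¬ adj I I)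
    (I : Λ) (g h : G I) (x : NF G adj) :
    aQ hsymm hirr I (g * h) x = aQ hsymm hirr I g (aQ hsymm hirr I h x) := by
  induction x using Quot.ind with
  | _ L =>
    have hni := (initTailL_red hsymm hirr (I := I) L.red).2
    have hredT := (initTailL_red hsymm hirr (I := I) L.red).1
    have hse := exists_decomp hsymm hirr I L.red
    show aQ hsymm hirr I (g * h) (mkNF L) = aQ hsymm hirr I g (aQ hsymm hirr I h (mkNF L))
    rw [aQ_eq hsymm hirr h hse hni hredT,
        aQ_eq hsymm hirr g (SE.rfl) hni hredT,
        aQ_eq hsymm hirr (g * h) hse hni hredT]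
    apply mkNF_sound
    show ShuffleEquiv adj
      (consL I (g * h * initPartL adj I L.w) (initTailL adj I L.w))
      (consL I (g * (h * initPartL adj I L.w)) (initTailL adj I L.w))
    rw [mul_assoc]
    exact SE.rfl

noncomputable def aPerm (hsymm : Symmetric adj) (hirr : ∀ I : Λ, ¬ adj I I)
    (I : Λ) (g : G I) : Equiv.Perm (NF G adj) where
  toFun := aQ hsymm hirr I g
  invFun := aQ hsymm hirr I g⁻¹
  left_inv := fun x => by
    rw [← aQ_mul hsymm hirr I g⁻¹ g x, inv_mul_cancel, aQ_one]
  right_inv := fun x => by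
    rw [← aQ_mul hsymm hirr I g g⁻¹ x, mul_inv_cancel, aQ_one]

noncomputable def aHom (hsymm : Symmetric adj) (hirr : ∀ I : Λ, ¬ adj I I)
    (I : Λ) : G I →* Equiv.Perm (NF G adj) where
  toFun := aPerm hsymm hirr I
  map_one' := Equiv.ext (fun x => aQ_one hsymm hirr I x)
  map_mul' := fun g h => Equiv.ext (fun x => aQ_mul hsymm hirr I g h x)

/-! ### commutation of the actions at adjacent vertices -/

theorem notInit_consL (hsymm : Symmetric adj) (hirr : ∀ I : Λ, ¬ adj I I)
    {I J : Λ} (hadj : adj I J) {T : List (Syllable G)}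
    (hni : ¬ HasInitL adj I T) (b : G J) : ¬ HasInitL adj I (consL J b T) := by
  have hIJ : I ≠ J := fun h => hirr I (h ▸ hadj)
  by_cases hb : b = 1
  · subst hb; rwa [consL_one]
  · rw [consL_ne hb]
    rintro ⟨α, hα, T', hse⟩
    obtain ⟨A, B, hM, hA, hT⟩ := head_extract hsymm hirr hse
    cases A with
    | nil =>
      rw [List.nil_append] at hM
      injection hM with h1 _
      exact hIJ (show I = J from congrArg Sigma.fst h1)
    | cons a₀ A₂ =>
      injection hM with h1 h2
      apply hni
      refine ⟨α, hα, A₂ ++ B, ?_⟩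
      rw [h1]
      exact hT

theorem consL_swap (hsymm : Symmetric adj) {I J : Λ} (hadj : adj I J)
    (a : G I) (b : G J) (T : List (Syllable G)) :
    ShuffleEquiv adj (consL I a (consL J b T)) (consL J b (consL I a T)) := by
  by_cases ha : a = 1
  · subst ha; rw [consL_one, consL_one]; exact SE.rfl
  by_cases hb : b = 1
  · subst hb; rw [consL_one, consL_one]; exact SE.rfl
  rw [consL_ne ha, consL_ne hb, consL_ne hb, consL_ne ha]
  exact SE.single ⟨[], T, syl I a ha, syl J b hb, hadj, by simp, by simp⟩

theorem decomp2 (hsymm : Symmetric adj) (hirr : ∀ I : Λ, ¬ adj I I)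
    {I J : Λ} (hadj : adj I J) (L : RWord G adj) :
    ∃ (a : G I) (b : G J) (T : List (Syllable G)), Reduced adj T ∧
      ¬ HasInitL adj I T ∧ ¬ HasInitL adj J T ∧
      ShuffleEquiv adj L.w (consL I a (consL J b T)) := by
  obtain ⟨hT₁red, hT₁ni⟩ := initTailL_red hsymm hirr (I := I) L.red
  have hse₁ := exists_decomp hsymm hirr I L.red
  set a := initPartL adj I L.w
  set T₁ := initTailL adj I L.w
  obtain ⟨hTred, hTniJ⟩ := initTailL_red hsymm hirr (I := J) hT₁red
  have hse₂ := exists_decomp hsymm hirr J hT₁red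
  set b := initPartL adj J T₁
  set T := initTailL adj J T₁
  have hTniI : ¬ HasInitL adj I T := by
    rintro ⟨γ, hγ, T₂, hseγ⟩
    apply hT₁ni
    refine ⟨γ, hγ, consL J b T₂, ?_⟩
    have c1 : ShuffleEquiv adj T₁ (consL J b (consL I γ T₂)) := by
      refine SE.trans hse₂ (SE_consL _ ?_)
      rw [consL_ne hγ]
      exact hseγ
    have c2 := consL_swap hsymm (hsymm hadj) b γ T₂
    have c3 := SE.trans c1 c2
    rwa [consL_ne hγ] at c3
  exact ⟨a, b, T, hTred, hTniI, hTniJ, SE.trans hse₁ (SE_consL _ hse₂)⟩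

theorem aQ_comm (hsymm : Symmetric adj) (hirr : ∀ I : Λ, ¬ adj I I)
    {I J : Λ} (hadj : adj I J) (g : G I) (h : G J) (x : NF G adj) :
    aQ hsymm hirr I g (aQ hsymm hirr J h x) = aQ hsymm hirr J h (aQ hsymm hirr I g x) := by
  have hIJ : adj J I := hsymm hadj
  induction x using Quot.ind with
  | _ L =>
    obtain ⟨a, b, T, hTred, hniI, hniJ, hse⟩ := decomp2 hsymm hirr hadj L
    have redIT : Reduced adj (consL I a T) := consL_red hsymm hirr hniI hTred a
    have redJT : Reduced adj (consL J b T) := consL_red hsymm hirr hniJ hTred b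
    have niJ_IT : ¬ HasInitL adj J (consL I a T) := notInit_consL hsymm hirr hIJ hniJ a
    have niI_JT : ¬ HasInitL adj I (consL J b T) := notInit_consL hsymm hirr hadj hniI b
    have hseJ : ShuffleEquiv adj L.w (consL J b (consL I a T)) :=
      SE.trans hse (consL_swap hsymm hadj a b T)
    show aQ hsymm hirr I g (aQ hsymm hirr J h (mkNF L)) =
      aQ hsymm hirr J h (aQ hsymm hirr I g (mkNF L))
    rw [aQ_eq hsymm hirr h hseJ niJ_IT redIT]
    have hse2 : ShuffleEquiv adj (consL J (h * b) (consL I a T))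
        (consL I a (consL J (h * b) T)) :=
      SE.symm hsymm (consL_swap hsymm hadj a (h * b) T)
    have niI_JhbT : ¬ HasInitL adj I (consL J (h * b) T) :=
      notInit_consL hsymm hirr hadj hniI (h * b)
    have redJhbT : Reduced adj (consL J (h * b) T) := consL_red hsymm hirr hniJ hTred (h * b)
    rw [aQ_eq hsymm hirr g hse2 niI_JhbT redJhbT]
    rw [aQ_eq hsymm hirr g hse niI_JT redJT]
    have hse3 : ShuffleEquiv adj (consL I (g * a) (consL J b T))
        (consL J b (consL I (g * a) T)) := consL_swap hsymm hadj (g * a) b T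
    have niJ_IgaT : ¬ HasInitL adj J (consL I (g * a) T) :=
      notInit_consL hsymm hirr hIJ hniJ (g * a)
    have redIgaT : Reduced adj (consL I (g * a) T) := consL_red hsymm hirr hniI hTred (g * a)
    rw [aQ_eq hsymm hirr h hse3 niJ_IgaT redIgaT]
    exact mkNF_sound (consL_swap hsymm hadj (g * a) (h * b) T)

/-! ### the homomorphism from the graph product -/

noncomputable def bigHom (hsymm : Symmetric adj) (hirr : ∀ I : Λ, ¬ adj I I) :
    Monoid.CoprodI G →* Equiv.Perm (NF G adj) :=
  Monoid.CoprodI.lift (fun I => aHom hsymm hirr I)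

theorem bigHom_of (hsymm : Symmetric adj) (hirr : ∀ I : Λ, ¬ adj I I)
    {I : Λ} (g : G I) :
    bigHom hsymm hirr (Monoid.CoprodI.of g) = aPerm hsymm hirr I g := by
  rw [bigHom, Monoid.CoprodI.lift_of]
  rfl

theorem aPerm_commute (hsymm : Symmetric adj) (hirr : ∀ I : Λ, ¬ adj I I)
    {I J : Λ} (hadj : adj I J) (g : G I) (h : G J) :
    Commute (aPerm hsymm hirr I g) (aPerm hsymm hirr J h) := by
  apply Equiv.ext
  intro x
  simp only [Equiv.Perm.mul_apply]
  exact aQ_comm hsymm hirr hadj g h x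

theorem bigHom_rel (hsymm : Symmetric adj) (hirr : ∀ I : Λ, ¬ adj I I) :
    ∀ x ∈ {g : Monoid.CoprodI G | ∃ (I J : Λ) (a : G I) (b : G J), adj I J ∧
      g = Monoid.CoprodI.of a * Monoid.CoprodI.of b *
          (Monoid.CoprodI.of a)⁻¹ * (Monoid.CoprodI.of b)⁻¹},
      bigHom hsymm hirr x = 1 := by
  rintro _ ⟨I, J, a, b, hadj, rfl⟩
  simp only [map_mul, map_inv, bigHom_of hsymm hirr]
  rw [← commutatorElement_def]
  exact commutatorElement_eq_one_iff_commute.mpr (aPerm_commute hsymm hirr hadj a b)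

noncomputable def Psi (hsymm : Symmetric adj) (hirr : ∀ I : Λ, ¬ adj I I) :
    GraphProduct adj G →* Equiv.Perm (NF G adj) :=
  QuotientGroup.lift _ (bigHom hsymm hirr) (by
    intro x hx
    have hle : Subgroup.normalClosure
        {g : Monoid.CoprodI G | ∃ (I J : Λ) (a : G I) (b : G J), adj I J ∧
          g = Monoid.CoprodI.of a * Monoid.CoprodI.of b *
              (Monoid.CoprodI.of a)⁻¹ * (Monoid.CoprodI.of b)⁻¹} ≤
        (bigHom hsymm hirr (G := G)).ker :=
      Subgroup.normalClosure_le_normal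
        (fun g hg => MonoidHom.mem_ker.mpr (bigHom_rel hsymm hirr g hg))
    exact MonoidHom.mem_ker.mp (hle hx))

theorem Psi_mkOf (hsymm : Symmetric adj) (hirr : ∀ I : Λ, ¬ adj I I)
    {I : Λ} (g : G I) :
    Psi hsymm hirr (mkOf adj G g) = aPerm hsymm hirr I g := by
  have h0 : Psi hsymm hirr (QuotientGroup.mk (Monoid.CoprodI.of g)) =
      bigHom hsymm hirr (Monoid.CoprodI.of g) := rfl
  exact h0.trans (bigHom_of hsymm hirr g)

def nfNil : NF G adj := mkNF ⟨[], red_nil⟩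

theorem Psi_eval (hsymm : Symmetric adj) (hirr : ∀ I : Λ, ¬ adj I I) :
    ∀ (L : List (Syllable G)) (hred : Reduced adj L),
      Psi hsymm hirr (evalWord adj G L) nfNil = mkNF ⟨L, hred⟩ := by
  intro L
  induction L with
  | nil =>
    intro hred
    rw [evalWord_nil, map_one]
    rfl
  | cons s L ih =>
    intro hred
    have hredL : Reduced adj L := red_tail hred
    rw [evalWord_cons, map_mul, Equiv.Perm.mul_apply, ih hredL, Psi_mkOf hsymm hirr]
    obtain ⟨I, a, ha⟩ := s
    show aQ hsymm hirr I a (mkNF ⟨L, hredL⟩) = mkNF ⟨⟨I, ⟨a, ha⟩⟩ :: L, hred⟩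
    have hni : ¬ HasInitL adj I L :=
      red_head_not_init hsymm hirr (hred : Reduced adj (syl I a ha :: L))
    have hse : ShuffleEquiv adj L (consL I (1 : G I) L) := by
      rw [consL_one]
      exact SE.rfl
    rw [aQ_eq hsymm hirr a (L := ⟨L, hredL⟩) hse hni hredL]
    apply mkNF_sound
    show ShuffleEquiv adj (consL I (a * 1) L) (syl I a ha :: L)
    rw [mul_one, consL_ne ha]
    exact SE.rfl

theorem eval_inj (hsymm : Symmetric adj) (hirr : ∀ I : Λ, ¬ adj I I)
    {L M : List (Syllable G)} (hredL : Reduced adj L) (hredM : Reduced adj M)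
    (h : evalWord adj G L = evalWord adj G M) : ShuffleEquiv adj L M := by
  have h1 := Psi_eval hsymm hirr L hredL
  have h2 := Psi_eval hsymm hirr M hredM
  rw [h] at h1
  exact mkNF_exact hsymm ((h1.symm.trans h2) : mkNF ⟨L, hredL⟩ = mkNF ⟨M, hredM⟩)

/-! ### positive words and the positive cone -/

def PosW (Pc : ∀ I, Submonoid (G I)) (L : List (Syllable G)) : Prop :=
  ∀ s ∈ L, s.2.1 ∈ Pc s.1

theorem posW_nil (Pc : ∀ I, Submonoid (G I)) : PosW Pc ([] : List (Syllable G)) := by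
  intro s hs; simp at hs

theorem posW_equiv {Pc : ∀ I, Submonoid (G I)} {L M : List (Syllable G)}
    (h : ShuffleEquiv adj L M) (hp : PosW Pc L) : PosW Pc M := by
  intro s hs
  exact hp s ((SE.perm h).mem_iff.2 hs)

theorem evalWord_cons_syl {I : Λ} {c : G I} {hc : c ≠ 1} (D : List (Syllable G)) :
    evalWord adj G (syl I c hc :: D) = mkOf adj G c * evalWord adj G D :=
  evalWord_cons _ _

theorem reduce_word (hsymm : Symmetric adj) (hirr : ∀ I : Λ, ¬ adj I I)
    (Pc : ∀ I, Submonoid (G I)) (hpo : ∀ I, IsPoGroup (Pc I)) :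
    ∀ (n : ℕ) (L : List (Syllable G)), L.length ≤ n →
      ∃ M, Reduced adj M ∧ evalWord adj G M = evalWord adj G L ∧
        (PosW Pc L → (PosW Pc M ∧ (L ≠ [] → M ≠ []))) := by
  intro n
  induction n with
  | zero =>
    intro L hlen
    have : L = [] := List.eq_nil_of_length_eq_zero (Nat.le_zero.mp hlen)
    subst this
    exact ⟨[], red_nil, rfl, fun h => ⟨h, fun h' => absurd rfl h'⟩⟩
  | succ n ih =>
    intro L hlen
    by_cases hred : Reduced adj L
    · exact ⟨L, hred, rfl, fun h => ⟨h, fun h' => h'⟩⟩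
    · obtain ⟨L', hse, hamalg⟩ := not_not.mp hred
      obtain ⟨C, D, t, t', htt, rfl⟩ := hamalg
      obtain ⟨I, a, ha⟩ := t
      obtain ⟨J, b, hb⟩ := t'
      have hIJ : I = J := htt
      subst hIJ
      change ShuffleEquiv adj L (C ++ syl I a ha :: syl I b hb :: D) at hse
      have hlenL : L.length = C.length + D.length + 2 := by
        rw [SE.length hse]; simp; omega
      have hevalL' : evalWord adj G L =
          evalWord adj G C * (mkOf adj G a * mkOf adj G b) * evalWord adj G D := by
        rw [eval_equiv hse, evalWord_append, evalWord_cons_syl, evalWord_cons_syl]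
        group
      have hposL' : PosW Pc L → a ∈ Pc I ∧ b ∈ Pc I ∧ PosW Pc (C ++ D) := by
        intro hp
        have hp' := posW_equiv hse hp
        refine ⟨hp' (syl I a ha) (by simp), hp' (syl I b hb) (by simp), fun s hs => hp' s ?_⟩
        simp at hs ⊢
        tauto
      by_cases hab : a * b = 1
      · -- the two syllables cancel; cannot happen for positive words
        obtain ⟨M, hMred, hMev, _⟩ := ih (C ++ D) (by rw [List.length_append]; omega)
        refine ⟨M, hMred, ?_, ?_⟩
        · rw [hMev, evalWord_append, hevalL', ← mkOf_mul, hab, mkOf_one, mul_one]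
        · intro hp
          exfalso
          obtain ⟨ha', hb', _⟩ := hposL' hp
          have hbinv : a⁻¹ = b := inv_eq_of_mul_eq_one_right hab
          rw [← hbinv] at hb'
          exact ha (hpo I a ha' hb')
      · -- amalgamate
        obtain ⟨M, hMred, hMev, hMpos⟩ := ih (C ++ syl I (a * b) hab :: D)
          (by simp [List.length_append]; omega)
        refine ⟨M, hMred, ?_, ?_⟩
        · rw [hMev, evalWord_append, evalWord_cons_syl, hevalL', ← mkOf_mul]
          group
        · intro hp
          obtain ⟨ha', hb', hcd⟩ := hposL' hp
          have hposM : PosW Pc (C ++ syl I (a * b) hab :: D) := by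
            intro s hs
            simp at hs
            rcases hs with hs | hs | hs
            · exact hcd s (by simp [hs])
            · subst hs; exact mul_mem ha' hb'
            · exact hcd s (by simp [hs])
          obtain ⟨h1, h2⟩ := hMpos hposM
          exact ⟨h1, fun _ => h2 (by simp)⟩

theorem exists_word (x : GraphProduct adj G) :
    ∃ L : List (Syllable G), evalWord adj G L = x := by
  obtain ⟨z, rfl⟩ := QuotientGroup.mk_surjective x
  induction z using Monoid.CoprodI.induction_on with
  | one => exact ⟨[], rfl⟩
  | of I g =>
    by_cases hg : g = 1
    · subst hg
      refine ⟨[], ?_⟩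
      rw [evalWord_nil]
      exact (mkOf_one (adj := adj) (G := G)).symm.trans rfl
    · exact ⟨[syl I g hg], by rw [evalWord_singleton]; rfl⟩
  | mul x y ihx ihy =>
    obtain ⟨Lx, hLx⟩ := ihx
    obtain ⟨Ly, hLy⟩ := ihy
    exact ⟨Lx ++ Ly, by rw [evalWord_append, hLx, hLy]; rfl⟩

theorem exists_red (hsymm : Symmetric adj) (hirr : ∀ I : Λ, ¬ adj I I)
    (Pc : ∀ I, Submonoid (G I)) (hpo : ∀ I, IsPoGroup (Pc I))
    (x : GraphProduct adj G) :
    ∃ L : List (Syllable G), Reduced adj L ∧ evalWord adj G L = x := by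
  obtain ⟨L, hL⟩ := exists_word x
  obtain ⟨M, hMred, hMev, _⟩ := reduce_word hsymm hirr Pc hpo L.length L (le_refl _)
  exact ⟨M, hMred, hMev.trans hL⟩

theorem mem_posCone_of_posW {Pc : ∀ I, Submonoid (G I)} :
    ∀ (L : List (Syllable G)), PosW Pc L → evalWord adj G L ∈ posCone adj G Pc := by
  intro L
  induction L with
  | nil => intro _; rw [evalWord_nil]; exact one_mem _
  | cons s L ih =>
    intro hp
    rw [evalWord_cons]
    refine mul_mem (Submonoid.subset_closure ?_) (ih (fun t ht => hp t (List.mem_cons_of_mem s ht)))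
    exact ⟨s.1, s.2.1, hp s List.mem_cons_self, rfl⟩

theorem mem_posCone_iff (hsymm : Symmetric adj) (hirr : ∀ I : Λ, ¬ adj I I)
    (Pc : ∀ I, Submonoid (G I)) (hpo : ∀ I, IsPoGroup (Pc I))
    (x : GraphProduct adj G) :
    x ∈ posCone adj G Pc ↔
      ∃ L, Reduced adj L ∧ PosW Pc L ∧ evalWord adj G L = x := by
  constructor
  · intro hx
    induction hx using Submonoid.closure_induction with
    | mem y hy =>
      obtain ⟨I, p, hp, rfl⟩ := hy
      by_cases hp1 : p = 1
      · subst hp1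
        exact ⟨[], red_nil, posW_nil Pc, (mkOf_one (adj := adj) (G := G)).symm⟩
      · refine ⟨[syl I p hp1], red_single _, ?_, evalWord_singleton _⟩
        intro s hs
        simp at hs
        subst hs
        exact hp
    | one => exact ⟨[], red_nil, posW_nil Pc, rfl⟩
    | mul y z _ _ ihy ihz =>
      obtain ⟨Ly, hyred, hypos, rfl⟩ := ihy
      obtain ⟨Lz, hzred, hzpos, rfl⟩ := ihz
      obtain ⟨M, hMred, hMev, hMpos⟩ :=
        reduce_word hsymm hirr Pc hpo (Ly ++ Lz).length (Ly ++ Lz) (le_refl _)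
      have hposLL : PosW Pc (Ly ++ Lz) := by
        intro s hs
        rcases List.mem_append.mp hs with h | h
        exacts [hypos s h, hzpos s h]
      exact ⟨M, hMred, (hMpos hposLL).1, by rw [hMev, evalWord_append]⟩
  · rintro ⟨L, _, hpos, rfl⟩
    exact mem_posCone_of_posW L hpos

theorem posW_of_expr (hsymm : Symmetric adj) (hirr : ∀ I : Λ, ¬ adj I I)
    (Pc : ∀ I, Submonoid (G I)) (hpo : ∀ I, IsPoGroup (Pc I))
    {x : GraphProduct adj G} (hx : x ∈ posCone adj G Pc)
    {L : List (Syllable G)} (hred : Reduced adj L) (hev : evalWord adj G L = x) :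
    PosW Pc L := by
  obtain ⟨M, hMred, hMpos, hMev⟩ := (mem_posCone_iff hsymm hirr Pc hpo x).mp hx
  have hse : ShuffleEquiv adj M L := eval_inj hsymm hirr hMred hred (hMev.trans hev.symm)
  exact posW_equiv hse hMpos

theorem posCone_isPoGroup (hsymm : Symmetric adj) (hirr : ∀ I : Λ, ¬ adj I I)
    (Pc : ∀ I, Submonoid (G I)) (hpo : ∀ I, IsPoGroup (Pc I)) :
    IsPoGroup (posCone adj G Pc) := by
  intro x hx hxinv
  obtain ⟨L, hLred, hLpos, hLe⟩ := (mem_posCone_iff hsymm hirr Pc hpo x).mp hx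
  obtain ⟨M, hMred, hMpos, hMe⟩ := (mem_posCone_iff hsymm hirr Pc hpo x⁻¹).mp hxinv
  have he : evalWord adj G (L ++ M) = 1 := by
    rw [evalWord_append, hLe, hMe, mul_inv_cancel]
  obtain ⟨N, hNred, hNe, hNcond⟩ :=
    reduce_word hsymm hirr Pc hpo (L ++ M).length (L ++ M) (le_refl _)
  have hposLM : PosW Pc (L ++ M) := by
    intro s hs
    rcases List.mem_append.mp hs with h | h
    exacts [hLpos s h, hMpos s h]
  have hNe1 : evalWord adj G N = evalWord adj G ([] : List (Syllable G)) := by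
    rw [hNe, he, evalWord_nil]
  have hseN : ShuffleEquiv adj N [] := eval_inj hsymm hirr hNred red_nil hNe1
  have hN : N = [] := List.eq_nil_of_length_eq_zero (by simpa using SE.length hseN)
  by_cases hLM : L ++ M = []
  · have hL : L = [] := (List.append_eq_nil_iff.mp hLM).1
    rw [← hLe, hL, evalWord_nil]
  · exact absurd hN ((hNcond hposLM).2 hLM)

/-! ### group-level parts -/

section Parts

variable (hsymm : Symmetric adj) (hirr : ∀ I : Λ, ¬ adj I I)
variable (Pc : ∀ I, Submonoid (G I)) (hpo : ∀ I, IsPoGroup (Pc I))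

noncomputable def rexp (x : GraphProduct adj G) : List (Syllable G) :=
  (exists_red hsymm hirr Pc hpo x).choose

theorem rexp_red (x : GraphProduct adj G) : Reduced adj (rexp hsymm hirr Pc hpo x) :=
  (exists_red hsymm hirr Pc hpo x).choose_spec.1

theorem rexp_eval (x : GraphProduct adj G) :
    evalWord adj G (rexp hsymm hirr Pc hpo x) = x :=
  (exists_red hsymm hirr Pc hpo x).choose_spec.2

noncomputable def len (x : GraphProduct adj G) : ℕ := (rexp hsymm hirr Pc hpo x).length

theorem len_eq {L : List (Syllable G)} (hred : Reduced adj L) {x : GraphProduct adj G}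
    (hev : evalWord adj G L = x) : L.length = len hsymm hirr Pc hpo x :=
  SE.length (eval_inj hsymm hirr hred (rexp_red hsymm hirr Pc hpo x)
    (hev.trans (rexp_eval hsymm hirr Pc hpo x).symm))

theorem eq_one_of_len_zero {x : GraphProduct adj G}
    (h : len hsymm hirr Pc hpo x = 0) : x = 1 := by
  have h2 : rexp hsymm hirr Pc hpo x = [] := List.eq_nil_of_length_eq_zero h
  have := rexp_eval hsymm hirr Pc hpo x
  rw [h2, evalWord_nil] at this
  exact this.symm

theorem len_one_eq_zero : len hsymm hirr Pc hpo (1 : GraphProduct adj G) = 0 := by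
  have := len_eq hsymm hirr Pc hpo (red_nil (adj := adj) (G := G)) (evalWord_nil)
  simpa using this.symm

noncomputable def ipart (I : Λ) (x : GraphProduct adj G) : G I :=
  initPartL adj I (rexp hsymm hirr Pc hpo x)

theorem ipart_char {L : List (Syllable G)} (hred : Reduced adj L) (I : Λ)
    {x : GraphProduct adj G} (hev : evalWord adj G L = x) :
    initPartL adj I L = ipart hsymm hirr Pc hpo I x :=
  (initPartL_congr hsymm hirr I (eval_inj hsymm hirr hred (rexp_red hsymm hirr Pc hpo x)
    (by rw [hev, rexp_eval]))).1

/-- the initial decomposition of `x` at the vertex `I` -/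
theorem isplit (I : Λ) (x : GraphProduct adj G) :
    ∃ T : List (Syllable G), Reduced adj T ∧ ¬ HasInitL adj I T ∧
      x = mkOf adj G (ipart hsymm hirr Pc hpo I x) * evalWord adj G T := by
  refine ⟨initTailL adj I (rexp hsymm hirr Pc hpo x),
    (initTailL_red hsymm hirr (rexp_red hsymm hirr Pc hpo x)).1,
    (initTailL_red hsymm hirr (rexp_red hsymm hirr Pc hpo x)).2, ?_⟩
  have hse := exists_decomp hsymm hirr I (rexp_red hsymm hirr Pc hpo x)
  have h1 := eval_equiv (G := G) hse
  rw [rexp_eval] at h1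
  conv_lhs => rw [h1]
  rw [eval_consL]
  rfl

theorem ipart_mul (I : Λ) (g : G I) (y : GraphProduct adj G) :
    ipart hsymm hirr Pc hpo I (mkOf adj G g * y) = g * ipart hsymm hirr Pc hpo I y := by
  obtain ⟨T, hTred, hTni, hy⟩ := isplit hsymm hirr Pc hpo I y
  have hev : evalWord adj G (consL I (g * ipart hsymm hirr Pc hpo I y) T) =
      mkOf adj G g * y := by
    conv_rhs => rw [hy]
    rw [eval_consL, mkOf_mul, mul_assoc]
  have hred : Reduced adj (consL I (g * ipart hsymm hirr Pc hpo I y) T) :=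
    consL_red hsymm hirr hTni hTred _
  rw [← ipart_char hsymm hirr Pc hpo hred I hev]
  exact (initPartL_of_consL hsymm hirr SE.rfl hTni).1

/-! ### final parts -/

noncomputable def fpart (I : Λ) (x : GraphProduct adj G) : G I :=
  (ipart hsymm hirr Pc hpo I x⁻¹)⁻¹

noncomputable def ftail (I : Λ) (x : GraphProduct adj G) : GraphProduct adj G :=
  x * (mkOf adj G (fpart hsymm hirr Pc hpo I x))⁻¹

theorem ftail_mul_fpart (I : Λ) (x : GraphProduct adj G) :
    ftail hsymm hirr Pc hpo I x * mkOf adj G (fpart hsymm hirr Pc hpo I x) = x := by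
  rw [ftail, inv_mul_cancel_right]

theorem fpart_mul (I : Λ) (x : GraphProduct adj G) (e : G I) :
    fpart hsymm hirr Pc hpo I (x * mkOf adj G e) = fpart hsymm hirr Pc hpo I x * e := by
  rw [fpart, fpart]
  have h1 : (x * mkOf adj G e)⁻¹ = mkOf adj G e⁻¹ * x⁻¹ := by rw [mkOf_inv, mul_inv_rev]
  rw [h1, ipart_mul hsymm hirr Pc hpo I e⁻¹ x⁻¹, mul_inv_rev, inv_inv]

end Parts

/-! ### transfer of initial/final structure through inverses -/

theorem step_mapInv {L M : List (Syllable G)} (h : ShuffleStep adj L M) :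
    ShuffleStep adj (L.map invS) (M.map invS) := by
  obtain ⟨A, B, s, t, hadj, rfl, rfl⟩ := h
  exact ⟨A.map invS, B.map invS, invS s, invS t, hadj, by simp, by simp⟩

theorem SE_mapInv {L M : List (Syllable G)} (h : ShuffleEquiv adj L M) :
    ShuffleEquiv adj (L.map invS) (M.map invS) := by
  induction h with
  | refl => exact SE.rfl
  | tail _ hbc ih => exact SE.trans ih (SE.single (step_mapInv hbc))

theorem mapInv_mapInv (L : List (Syllable G)) : (L.map invS).map invS = L := by
  rw [List.map_map]
  have hcomp : invS ∘ invS = (id : Syllable G → Syllable G) := funext invS_invS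
  rw [hcomp, List.map_id]

theorem hasInitL_map_inv (I : Λ) (L : List (Syllable G)) :
    HasInitL adj I (L.map invS) ↔ HasInitL adj I L := by
  have key : ∀ V : List (Syllable G), HasInitL adj I V → HasInitL adj I (V.map invS) := by
    rintro V ⟨a, ha, T, hse⟩
    refine ⟨a⁻¹, inv_ne_one.mpr ha, T.map invS, ?_⟩
    have := SE_mapInv hse
    exact this
  constructor
  · intro h
    have := key _ h
    rwa [mapInv_mapInv] at this
  · exact key L

theorem hasFinL_invW_iff (I : Λ) (W : List (Syllable G)) :
    HasFinL adj I W ↔ HasInitL adj I (invW W) := by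
  have h1 : invW W = (W.reverse).map invS := by rw [invW, List.map_reverse]
  rw [h1, HasFinL]
  exact (hasInitL_map_inv I W.reverse).symm

theorem hasFinL_iff (hsymm : Symmetric adj) {I : Λ} {W : List (Syllable G)} :
    HasFinL adj I W ↔
      ∃ (δ : G I) (hδ : δ ≠ 1) (T : List (Syllable G)),
        ShuffleEquiv adj W (T ++ [syl I δ hδ]) := by
  constructor
  · rintro ⟨δ, hδ, R, hse⟩
    refine ⟨δ, hδ, R.reverse, ?_⟩
    have h2 := SE.reverse hsymm hse
    simpa using h2
  · rintro ⟨δ, hδ, T, hse⟩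
    refine ⟨δ, hδ, T.reverse, ?_⟩
    have h2 := SE.reverse hsymm hse
    simpa using h2

theorem last_eq {A B : List (Syllable G)} {u v : Syllable G}
    (h : A ++ [u] = B ++ [v]) : A = B ∧ u = v := by
  obtain ⟨h1, h2⟩ := List.append_inj' h rfl
  refine ⟨h1, ?_⟩
  injection h2 with h3 _

section Parts2

variable (hsymm : Symmetric adj) (hirr : ∀ I : Λ, ¬ adj I I)
variable (Pc : ∀ I, Submonoid (G I)) (hpo : ∀ I, IsPoGroup (Pc I))

theorem mkOf_mem_posCone {I : Λ} {p : G I} (hp : p ∈ Pc I) :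
    mkOf adj G p ∈ posCone adj G Pc :=
  Submonoid.subset_closure ⟨I, p, hp, rfl⟩

/-- the final decomposition of `x` at the vertex `I` -/
theorem fsplit (I : Λ) (x : GraphProduct adj G) :
    ∃ W : List (Syllable G), Reduced adj W ∧ ¬ HasFinL adj I W ∧
      evalWord adj G W = ftail hsymm hirr Pc hpo I x ∧
      x = evalWord adj G W * mkOf adj G (fpart hsymm hirr Pc hpo I x) ∧
      (x ∈ posCone adj G Pc → (PosW Pc W ∧ fpart hsymm hirr Pc hpo I x ∈ Pc I)) := by
  obtain ⟨T', hT'red, hT'ni, hx⟩ := isplit hsymm hirr Pc hpo I x⁻¹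
  set c := ipart hsymm hirr Pc hpo I x⁻¹ with hc
  refine ⟨invW T', red_invW hsymm hT'red, ?_, ?_, ?_, ?_⟩
  · rw [hasFinL_invW_iff, invW_invW]
    exact hT'ni
  · rw [eval_invW]
    have h2 : evalWord adj G T' = (mkOf adj G c)⁻¹ * x⁻¹ := by
      rw [hx, inv_mul_cancel_left]
    have h3 : fpart hsymm hirr Pc hpo I x = c⁻¹ := by rw [fpart, ← hc]
    rw [h2, mul_inv_rev, inv_inv, inv_inv, ftail, h3, mkOf_inv, inv_inv]
  · have h3 : fpart hsymm hirr Pc hpo I x = c⁻¹ := by rw [fpart, ← hc]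
    rw [eval_invW, h3, mkOf_inv, ← mul_inv_rev, ← hx, inv_inv]
  · intro hxpos
    -- x⁻¹ is evaluated by invW (rexp x)
    have hLpos : PosW Pc (rexp hsymm hirr Pc hpo x) :=
      posW_of_expr hsymm hirr Pc hpo hxpos (rexp_red hsymm hirr Pc hpo x)
        (rexp_eval hsymm hirr Pc hpo x)
    have hVred : Reduced adj (invW (rexp hsymm hirr Pc hpo x)) :=
      red_invW hsymm (rexp_red hsymm hirr Pc hpo x)
    have hVev : evalWord adj G (invW (rexp hsymm hirr Pc hpo x)) = x⁻¹ := by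
      rw [eval_invW, rexp_eval]
    -- members of a reduced expression of x⁻¹ are inverses of positives
    have hmem : ∀ s ∈ consL I c T', s ∈ invW (rexp hsymm hirr Pc hpo x) := by
      have hseq : ShuffleEquiv adj (consL I c T') (invW (rexp hsymm hirr Pc hpo x)) := by
        have hcred : Reduced adj (consL I c T') := consL_red hsymm hirr hT'ni hT'red c
        apply eval_inj hsymm hirr hcred hVred
        rw [eval_consL, ← hx, hVev]
      intro s hs
      exact (SE.perm hseq).mem_iff.mp hs
    have hneg : ∀ s ∈ consL I c T', (s.2.1)⁻¹ ∈ Pc s.1 := by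
      intro s hs
      obtain ⟨t, ht, hts⟩ := by
        have h2 := hmem s hs
        rw [invW] at h2
        rw [List.mem_reverse, List.mem_map] at h2
        exact h2
      have := hLpos t ht
      rw [← hts]
      show (t.2.1)⁻¹⁻¹ ∈ Pc t.1; rw [inv_inv]; exact this
    constructor
    · intro s hs
      obtain ⟨t, ht, hts⟩ := by
        rw [invW, List.mem_reverse, List.mem_map] at hs
        exact hs
      have h3 : t ∈ consL I c T' := by
        by_cases h1 : c = 1
        · rwa [h1, consL_one]
        · rw [consL_ne h1]; exact List.mem_cons_of_mem _ ht
      have h4 := hneg t h3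
      rw [← hts]
      exact h4
    · have h3 : fpart hsymm hirr Pc hpo I x = c⁻¹ := by rw [fpart, ← hc]
      rw [h3]
      by_cases h1 : c = 1
      · rw [h1]
        simpa using (Pc I).one_mem
      · exact hneg (syl I c h1) (by rw [consL_ne h1]; exact List.mem_cons_self)

theorem fpart_char {I : Λ} {W : List (Syllable G)} {c : G I} {x : GraphProduct adj G}
    (hWred : Reduced adj W) (hnf : ¬ HasFinL adj I W)
    (hx : x = evalWord adj G W * mkOf adj G c) : fpart hsymm hirr Pc hpo I x = c := by
  have hxinv : x⁻¹ = evalWord adj G (consL I c⁻¹ (invW W)) := by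
    rw [eval_consL, eval_invW, hx, mkOf_inv]
    group
  have hniW : ¬ HasInitL adj I (invW W) := by
    rwa [← hasFinL_invW_iff]
  have hred2 : Reduced adj (consL I c⁻¹ (invW W)) :=
    consL_red hsymm hirr hniW (red_invW hsymm hWred) _
  have h1 : initPartL adj I (consL I c⁻¹ (invW W)) = ipart hsymm hirr Pc hpo I x⁻¹ :=
    ipart_char hsymm hirr Pc hpo hred2 I hxinv.symm
  have h2 : initPartL adj I (consL I c⁻¹ (invW W)) = c⁻¹ :=
    (initPartL_of_consL hsymm hirr SE.rfl hniW).1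
  rw [fpart, ← h1, h2, inv_inv]

theorem fpart_of_append {I : Λ} {W : List (Syllable G)} {c : G I} {hc : c ≠ 1}
    {x : GraphProduct adj G} (hred : Reduced adj (W ++ [syl I c hc]))
    (hev : evalWord adj G (W ++ [syl I c hc]) = x) : fpart hsymm hirr Pc hpo I x = c := by
  refine fpart_char hsymm hirr Pc hpo (red_dropLast hred) (red_last_not_fin hsymm hirr hred) ?_
  rw [← hev, evalWord_append, evalWord_singleton]
  rfl

theorem fpart_eq_one {I : Λ} {W : List (Syllable G)} {x : GraphProduct adj G}
    (hred : Reduced adj W) (hnf : ¬ HasFinL adj I W)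
    (hev : evalWord adj G W = x) : fpart hsymm hirr Pc hpo I x = 1 := by
  refine fpart_char hsymm hirr Pc hpo hred hnf ?_
  rw [mkOf_one, mul_one, hev]

theorem not_hasFin_of_fpart_one {K : Λ} {T' : List (Syllable G)} (hred : Reduced adj T')
    {x : GraphProduct adj G} (hev : evalWord adj G T' = x)
    (h1 : fpart hsymm hirr Pc hpo K x = 1) : ¬ HasFinL adj K T' := by
  intro hfin
  obtain ⟨δ, hδ, T₂, hse⟩ := (hasFinL_iff hsymm).mp hfin
  have hred2 : Reduced adj (T₂ ++ [syl K δ hδ]) := red_of_equiv hsymm hred hse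
  have hev2 : evalWord adj G (T₂ ++ [syl K δ hδ]) = x := by
    rw [← eval_equiv hse, hev]
  have := fpart_of_append hsymm hirr Pc hpo hred2 hev2
  rw [h1] at this
  exact hδ this.symm

theorem exists_fin_vertex {x : GraphProduct adj G} (hx : x ≠ 1) :
    ∃ K, fpart hsymm hirr Pc hpo K x ≠ 1 := by
  rcases List.eq_nil_or_concat (rexp hsymm hirr Pc hpo x) with h | ⟨W, s, h⟩
  · exfalso
    apply hx
    have := rexp_eval hsymm hirr Pc hpo x
    rw [h, evalWord_nil] at this
    exact this.symm
  · obtain ⟨K, c, hc⟩ := s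
    refine ⟨K, ?_⟩
    have h' : rexp hsymm hirr Pc hpo x = W ++ [syl K c hc] := by rw [← List.concat_eq_append]; exact h
    have hred : Reduced adj (W ++ [syl K c hc]) := by
      rw [← h']; exact rexp_red hsymm hirr Pc hpo x
    have hev : evalWord adj G (W ++ [syl K c hc]) = x := by
      rw [← h']; exact rexp_eval hsymm hirr Pc hpo x
    rw [fpart_of_append hsymm hirr Pc hpo hred hev]
    exact hc

theorem len_ftail {I : Λ} {x : GraphProduct adj G}
    (h : fpart hsymm hirr Pc hpo I x ≠ 1) :
    len hsymm hirr Pc hpo (ftail hsymm hirr Pc hpo I x) + 1 = len hsymm hirr Pc hpo x := by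
  obtain ⟨W, hWred, hWnf, hWev, hWx, _⟩ := fsplit hsymm hirr Pc hpo I x
  have h1 : W.length = len hsymm hirr Pc hpo (ftail hsymm hirr Pc hpo I x) :=
    len_eq hsymm hirr Pc hpo hWred hWev
  have hred2 : Reduced adj (W ++ [syl I _ h]) := red_append hsymm hirr hWnf hWred _ h
  have hev2 : evalWord adj G (W ++ [syl I (fpart hsymm hirr Pc hpo I x) h]) = x := by
    rw [evalWord_append, evalWord_singleton]
    exact hWx.symm
  have h2 := len_eq hsymm hirr Pc hpo hred2 hev2
  rw [List.length_append] at h2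
  simp at h2
  omega

theorem fpart_ftail (I : Λ) (x : GraphProduct adj G) :
    fpart hsymm hirr Pc hpo I (ftail hsymm hirr Pc hpo I x) = 1 := by
  obtain ⟨W, hWred, hWnf, hWev, _, _⟩ := fsplit hsymm hirr Pc hpo I x
  exact fpart_eq_one hsymm hirr Pc hpo hWred hWnf hWev

theorem fpart_pos {x : GraphProduct adj G} (hx : x ∈ posCone adj G Pc) (I : Λ) :
    fpart hsymm hirr Pc hpo I x ∈ Pc I := by
  obtain ⟨W, _, _, _, _, hpos⟩ := fsplit hsymm hirr Pc hpo I x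
  exact (hpos hx).2

theorem ftail_pos {x : GraphProduct adj G} (hx : x ∈ posCone adj G Pc) (I : Λ) :
    ftail hsymm hirr Pc hpo I x ∈ posCone adj G Pc := by
  obtain ⟨W, _, _, hWev, _, hpos⟩ := fsplit hsymm hirr Pc hpo I x
  rw [← hWev]
  exact mem_posCone_of_posW W (hpos hx).1

theorem finVertex_finite (x : GraphProduct adj G) :
    {I : Λ | fpart hsymm hirr Pc hpo I x ≠ 1}.Finite := by
  have hsub : {I : Λ | fpart hsymm hirr Pc hpo I x ≠ 1} ⊆
      Sigma.fst '' {s : Syllable G | s ∈ rexp hsymm hirr Pc hpo x⁻¹} := by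
    intro I hI
    have hne : ipart hsymm hirr Pc hpo I x⁻¹ ≠ 1 := by
      intro h
      apply hI
      rw [fpart, h, inv_one]
    by_cases h : HasInitL adj I (rexp hsymm hirr Pc hpo x⁻¹)
    · obtain ⟨a, ha, T, hse⟩ := h
      exact ⟨syl I a ha, (SE.perm hse).mem_iff.mpr List.mem_cons_self, rfl⟩
    · exact absurd ((initPartL_neg h).1) hne
  exact Set.Finite.subset (Set.Finite.image _ (List.finite_toSet _)) hsub

end Parts2

section Prod

variable (hsymm : Symmetric adj) (hirr : ∀ I : Λ, ¬ adj I I)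
variable (Pc : ∀ I, Submonoid (G I)) (hpo : ∀ I, IsPoGroup (Pc I))

theorem commute_word {K : Λ} (γ : G K) {T : List (Syllable G)}
    (hadjT : ∀ t ∈ T, adj t.1 K) :
    mkOf adj G γ * evalWord adj G T = evalWord adj G T * mkOf adj G γ := by
  induction T with
  | nil => rw [evalWord_nil, one_mul, mul_one]
  | cons t T ih =>
    rw [evalWord_cons, ← mul_assoc, ← mkOf_commute (hadjT t List.mem_cons_self) t.2.1 γ,
        mul_assoc, ih (fun u hu => hadjT u (List.mem_cons_of_mem t hu)), ← mul_assoc]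

theorem not_hasFin_cons_other (hsymm : Symmetric adj) (hirr : ∀ I : Λ, ¬ adj I I)
    {K K' : Λ} (hne : K ≠ K') {γ : G K'} {hγ : γ ≠ 1}
    {T' : List (Syllable G)} (hnf : ¬ HasFinL adj K T') :
    ¬ HasFinL adj K (syl K' γ hγ :: T') := by
  intro hfin
  obtain ⟨δ, hδ, T₂, hse⟩ := (hasFinL_iff hsymm).mp hfin
  obtain ⟨A, B, hM, hA, hT⟩ := head_extract hsymm hirr hse
  rcases List.eq_nil_or_concat B with rfl | ⟨B₁, blast, rfl⟩
  · obtain ⟨h1, h2⟩ := last_eq (hM : T₂ ++ [syl K δ hδ] = A ++ [syl K' γ hγ])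
    exact hne (congrArg Sigma.fst h2)
  · have hM' : T₂ ++ [syl K δ hδ] = (A ++ syl K' γ hγ :: B₁) ++ [blast] := by
      rw [hM]; simp
    obtain ⟨h1, h2⟩ := last_eq hM'
    apply hnf
    rw [hasFinL_iff hsymm]
    refine ⟨δ, hδ, A ++ B₁, ?_⟩
    rw [← h2] at hT
    have e1 : A ++ (B₁ ++ [syl K δ hδ]) = (A ++ B₁) ++ [syl K δ hδ] := by simp
    have := hT
    rw [List.concat_eq_append, e1] at this
    exact this

theorem fpart_consL_fin {K' K : Λ} (γ : G K') {T' : List (Syllable G)}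
    (hT'red : Reduced adj T') (hT'ni : ¬ HasInitL adj K' T')
    (hδ : fpart hsymm hirr Pc hpo K (evalWord adj G T') ≠ 1) :
    fpart hsymm hirr Pc hpo K (evalWord adj G (consL K' γ T')) =
      fpart hsymm hirr Pc hpo K (evalWord adj G T') := by
  by_cases hγ : γ = 1
  · rw [hγ, consL_one]
  obtain ⟨V, hVred, hVnf, hVev, hVx, _⟩ := fsplit hsymm hirr Pc hpo K (evalWord adj G T')
  have hVs : Reduced adj (V ++ [syl K _ hδ]) := red_append hsymm hirr hVnf hVred _ hδ
  have hseT : ShuffleEquiv adj T'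
      (V ++ [syl K (fpart hsymm hirr Pc hpo K (evalWord adj G T')) hδ]) := by
    refine eval_inj hsymm hirr hT'red hVs ?_
    rw [evalWord_append, evalWord_singleton]
    exact hVx
  have hred : Reduced adj (consL K' γ T') := consL_red hsymm hirr hT'ni hT'red γ
  have hse2 : ShuffleEquiv adj (consL K' γ T')
      ((syl K' γ hγ :: V) ++ [syl K (fpart hsymm hirr Pc hpo K (evalWord adj G T')) hδ]) := by
    rw [consL_ne hγ]
    exact SE.cons _ hseT
  have hred2 : Reduced adj ((syl K' γ hγ :: V) ++
      [syl K (fpart hsymm hirr Pc hpo K (evalWord adj G T')) hδ]) :=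
    red_of_equiv hsymm hred hse2
  exact fpart_of_append hsymm hirr Pc hpo hred2 (eval_equiv hse2).symm

theorem fpart_consL_other {K K' : Λ} (hne : K ≠ K') (γ : G K') {T' : List (Syllable G)}
    (hT'red : Reduced adj T') (hT'ni : ¬ HasInitL adj K' T') :
    fpart hsymm hirr Pc hpo K (evalWord adj G (consL K' γ T')) =
      fpart hsymm hirr Pc hpo K (evalWord adj G T') := by
  by_cases hγ : γ = 1
  · rw [hγ, consL_one]
  by_cases hδ : fpart hsymm hirr Pc hpo K (evalWord adj G T') = 1
  · have hnf : ¬ HasFinL adj K T' :=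
      not_hasFin_of_fpart_one hsymm hirr Pc hpo hT'red rfl hδ
    have hred : Reduced adj (consL K' γ T') := consL_red hsymm hirr hT'ni hT'red γ
    rw [consL_ne hγ] at hred ⊢
    have hnf2 := not_hasFin_cons_other hsymm hirr hne (hγ := hγ) hnf
    rw [fpart_eq_one hsymm hirr Pc hpo hred hnf2 rfl, hδ]
  · exact fpart_consL_fin hsymm hirr Pc hpo γ hT'red hT'ni hδ

theorem fpart_mul_left_other {K K' : Λ} (hne : K ≠ K') (c : G K')
    (u : GraphProduct adj G) :
    fpart hsymm hirr Pc hpo K (mkOf adj G c * u) = fpart hsymm hirr Pc hpo K u := by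
  obtain ⟨T, hTred, hTni, hu⟩ := isplit hsymm hirr Pc hpo K' u
  have e1 : mkOf adj G c * u =
      evalWord adj G (consL K' (c * ipart hsymm hirr Pc hpo K' u) T) := by
    rw [eval_consL, mkOf_mul, mul_assoc, ← hu]
  have e2 : u = evalWord adj G (consL K' (ipart hsymm hirr Pc hpo K' u) T) := by
    rw [eval_consL, ← hu]
  rw [e1, e2, fpart_consL_other hsymm hirr Pc hpo hne _ hTred hTni,
      fpart_consL_other hsymm hirr Pc hpo hne _ hTred hTni]

theorem fpart_append_other_adj {K J : Λ} (hKJ : K ≠ J) (hadj : adj K J)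
    {W : List (Syllable G)} (hWred : Reduced adj W) (hWnf : ¬ HasFinL adj J W)
    (γ : G J) :
    fpart hsymm hirr Pc hpo K (evalWord adj G W * mkOf adj G γ) =
      fpart hsymm hirr Pc hpo K (evalWord adj G W) := by
  by_cases hγ : γ = 1
  · rw [hγ, mkOf_one, mul_one]
  have hredWγ : Reduced adj (W ++ [syl J γ hγ]) := red_append hsymm hirr hWnf hWred γ hγ
  have heq : evalWord adj G (W ++ [syl J γ hγ]) = evalWord adj G W * mkOf adj G γ := by
    rw [evalWord_append, evalWord_singleton]; rfl
  by_cases hδ : fpart hsymm hirr Pc hpo K (evalWord adj G W) = 1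
  · have hnfK : ¬ HasFinL adj K W :=
      not_hasFin_of_fpart_one hsymm hirr Pc hpo hWred rfl hδ
    have hnfK2 : ¬ HasFinL adj K (W ++ [syl J γ hγ]) := by
      intro hfin
      obtain ⟨δ', hδ', T₂, hse⟩ := (hasFinL_iff hsymm).mp hfin
      obtain ⟨A, B, hM, hB, hT⟩ := tail_extract hsymm hirr (SE.symm hsymm hse)
      rcases List.eq_nil_or_concat B with rfl | ⟨B₁, blast, rfl⟩
      · obtain ⟨h1, h2⟩ := last_eq (hM : W ++ [syl J γ hγ] = A ++ [syl K δ' hδ'])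
        exact hKJ (congrArg Sigma.fst h2).symm
      · have hM' : W ++ [syl J γ hγ] = (A ++ syl K δ' hδ' :: B₁) ++ [blast] := by
          rw [hM]; simp
        obtain ⟨h1, h2⟩ := last_eq hM'
        apply hnfK
        rw [hasFinL_iff hsymm]
        refine ⟨δ', hδ', A ++ B₁, ?_⟩
        rw [h1]
        exact SE.move_back hsymm
          (fun t ht => hB t (by rw [List.concat_eq_append]; exact List.mem_append_left _ ht)) A
    rw [← heq, fpart_eq_one hsymm hirr Pc hpo hredWγ hnfK2 rfl, hδ]
  · obtain ⟨V, hVred, hVnf, hVev, hVx, _⟩ := fsplit hsymm hirr Pc hpo K (evalWord adj G W)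
    have hVs : Reduced adj (V ++ [syl K _ hδ]) := red_append hsymm hirr hVnf hVred _ hδ
    have hseW : ShuffleEquiv adj W
        (V ++ [syl K (fpart hsymm hirr Pc hpo K (evalWord adj G W)) hδ]) := by
      refine eval_inj hsymm hirr hWred hVs ?_
      rw [evalWord_append, evalWord_singleton]
      exact hVx
    have hse3 : ShuffleEquiv adj (W ++ [syl J γ hγ])
        ((V ++ [syl J γ hγ]) ++ [syl K (fpart hsymm hirr Pc hpo K (evalWord adj G W)) hδ]) := by
      refine SE.trans (SE.append_right [syl J γ hγ] hseW) ?_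
      refine SE.trans (SE.single ⟨V, [],
        syl K (fpart hsymm hirr Pc hpo K (evalWord adj G W)) hδ, syl J γ hγ, hadj,
        by simp, rfl⟩) ?_
      have e1 : V ++ syl J γ hγ :: syl K (fpart hsymm hirr Pc hpo K (evalWord adj G W)) hδ :: [] =
          (V ++ [syl J γ hγ]) ++ [syl K (fpart hsymm hirr Pc hpo K (evalWord adj G W)) hδ] := by
        rw [List.append_assoc]; rfl
      rw [e1]
      exact SE.rfl
    have hred3 := red_of_equiv hsymm hredWγ hse3
    have := fpart_of_append hsymm hirr Pc hpo hred3 (eval_equiv hse3).symm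
    rw [← heq, this]

theorem fpart_append_other_nonadj {K J : Λ} (hKJ : K ≠ J) (hnadj : ¬ adj K J)
    {W : List (Syllable G)} (hWred : Reduced adj W) (hWnf : ¬ HasFinL adj J W)
    {γ : G J} (hγ : γ ≠ 1) :
    fpart hsymm hirr Pc hpo K (evalWord adj G W * mkOf adj G γ) = 1 := by
  have hredWγ : Reduced adj (W ++ [syl J γ hγ]) := red_append hsymm hirr hWnf hWred γ hγ
  have heq : evalWord adj G (W ++ [syl J γ hγ]) = evalWord adj G W * mkOf adj G γ := by
    rw [evalWord_append, evalWord_singleton]; rfl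
  have hnfK2 : ¬ HasFinL adj K (W ++ [syl J γ hγ]) := by
    intro hfin
    obtain ⟨δ', hδ', T₂, hse⟩ := (hasFinL_iff hsymm).mp hfin
    obtain ⟨A, B, hM, hB, hT⟩ := tail_extract hsymm hirr (SE.symm hsymm hse)
    rcases List.eq_nil_or_concat B with rfl | ⟨B₁, blast, rfl⟩
    · obtain ⟨h1, h2⟩ := last_eq (hM : W ++ [syl J γ hγ] = A ++ [syl K δ' hδ'])
      exact hKJ (congrArg Sigma.fst h2).symm
    · have hM' : W ++ [syl J γ hγ] = (A ++ syl K δ' hδ' :: B₁) ++ [blast] := by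
        rw [hM]; simp
      obtain ⟨h1, h2⟩ := last_eq hM'
      have hmem : blast ∈ B₁.concat blast := by simp
      have h3 := hB blast hmem
      rw [← h2] at h3
      exact hnadj (hsymm h3)
  rw [← heq]
  exact fpart_eq_one hsymm hirr Pc hpo hredWγ hnfK2 rfl

theorem fpart_mul_right_adj {K J : Λ} (hKJ : K ≠ J) (hadj : adj K J)
    (x : GraphProduct adj G) (e : G J) :
    fpart hsymm hirr Pc hpo K (x * mkOf adj G e) = fpart hsymm hirr Pc hpo K x := by
  obtain ⟨W, hWred, hWnf, hWev, hWx, _⟩ := fsplit hsymm hirr Pc hpo J x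
  have e1 : x * mkOf adj G e =
      evalWord adj G W * mkOf adj G (fpart hsymm hirr Pc hpo J x * e) := by
    rw [mkOf_mul, ← mul_assoc, ← hWx]
  rw [e1, fpart_append_other_adj hsymm hirr Pc hpo hKJ hadj hWred hWnf _, hWx,
      fpart_append_other_adj hsymm hirr Pc hpo hKJ hadj hWred hWnf _]

theorem fpart_mul_right_nonadj {K J : Λ} (hKJ : K ≠ J) (hnadj : ¬ adj K J)
    (x : GraphProduct adj G) (e : G J)
    (hprov : fpart hsymm hirr Pc hpo J x * e ≠ 1) :
    fpart hsymm hirr Pc hpo K (x * mkOf adj G e) = 1 := by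
  obtain ⟨W, hWred, hWnf, hWev, hWx, _⟩ := fsplit hsymm hirr Pc hpo J x
  have e1 : x * mkOf adj G e =
      evalWord adj G W * mkOf adj G (fpart hsymm hirr Pc hpo J x * e) := by
    rw [mkOf_mul, ← mul_assoc, ← hWx]
  rw [e1]
  exact fpart_append_other_nonadj hsymm hirr Pc hpo hKJ hnadj hWred hWnf hprov

end Prod

section QLOPart

variable (hsymm : Symmetric adj) (hirr : ∀ I : Λ, ¬ adj I I)
variable (Pc : ∀ I, Submonoid (G I)) (hpo : ∀ I, IsPoGroup (Pc I))

theorem pos_mul_ne_one (hpo : ∀ I, IsPoGroup (Pc I)) {I : Λ} {a e : G I}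
    (ha : a ∈ Pc I) (he : e ∈ Pc I) (hne : e ≠ 1) : a * e ≠ 1 := by
  intro h
  have h2 : e⁻¹ = a := inv_eq_of_mul_eq_one_left h
  exact hne (hpo I e he (by rw [h2]; exact ha))

theorem Cr_iff {w : GraphProduct adj G} (hw : w ∈ posCone adj G Pc) {K : Λ} (y : G K) :
    w * (mkOf adj G y)⁻¹ ∈ posCone adj G Pc ↔
      fpart hsymm hirr Pc hpo K w * y⁻¹ ∈ Pc K := by
  obtain ⟨W, hWred, hWnf, hWev, hWx, hWpos⟩ := fsplit hsymm hirr Pc hpo K w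
  obtain ⟨hWp, hfp⟩ := hWpos hw
  have e1 : w * (mkOf adj G y)⁻¹ =
      evalWord adj G W * mkOf adj G (fpart hsymm hirr Pc hpo K w * y⁻¹) := by
    rw [mkOf_mul, mkOf_inv, ← mul_assoc, ← hWx]
  constructor
  · intro h
    by_cases hc : fpart hsymm hirr Pc hpo K w * y⁻¹ = 1
    · rw [hc]; exact (Pc K).one_mem
    · have hred2 : Reduced adj (W ++ [syl K _ hc]) := red_append hsymm hirr hWnf hWred _ hc
      have hev2 : evalWord adj G
          (W ++ [syl K (fpart hsymm hirr Pc hpo K w * y⁻¹) hc]) = w * (mkOf adj G y)⁻¹ := by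
        rw [evalWord_append, evalWord_singleton]
        exact e1.symm
      have hpos2 := posW_of_expr hsymm hirr Pc hpo h hred2 hev2
      exact hpos2 (syl K _ hc) (by simp)
  · intro h
    rw [e1]
    exact mul_mem (mem_posCone_of_posW W hWp) (mkOf_mem_posCone Pc h)

theorem beta_lemma {K : Λ} {h : G K} {hh : h ≠ 1} {T' : List (Syllable G)}
    (hT'red : Reduced adj T') (hnf : ¬ HasFinL adj K T')
    (hred : Reduced adj (syl K h hh :: T')) {x : GraphProduct adj G}
    (hev : evalWord adj G (syl K h hh :: T') = x)
    (hfne : fpart hsymm hirr Pc hpo K x ≠ 1) :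
    fpart hsymm hirr Pc hpo K x = h ∧ ∀ t ∈ T', adj t.1 K := by
  obtain ⟨V, hVred, hVnf, hVev, hVx, _⟩ := fsplit hsymm hirr Pc hpo K x
  have hVs : Reduced adj (V ++ [syl K _ hfne]) := red_append hsymm hirr hVnf hVred _ hfne
  have hse : ShuffleEquiv adj (syl K h hh :: T')
      (V ++ [syl K (fpart hsymm hirr Pc hpo K x) hfne]) := by
    refine eval_inj hsymm hirr hred hVs ?_
    rw [hev, evalWord_append, evalWord_singleton]
    exact hVx
  obtain ⟨A, B, hM, hB, hT⟩ := tail_extract hsymm hirr (SE.symm hsymm hse)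
  cases A with
  | nil =>
    rw [List.nil_append] at hM
    injection hM with h1 h2
    subst h2
    exact ⟨syl_inj h1.symm, fun t ht => hB t ht⟩
  | cons a₀ A₂ =>
    exfalso
    injection hM with h1 h2
    apply hnf
    rw [hasFinL_iff hsymm]
    refine ⟨fpart hsymm hirr Pc hpo K x, hfne, A₂ ++ B, ?_⟩
    rw [h2]
    exact SE.move_back hsymm hB A₂

theorem C2r : ∀ (n : ℕ) (w u : GraphProduct adj G) (K : Λ),
    w ∈ posCone adj G Pc → w * u⁻¹ ∈ posCone adj G Pc →
    len hsymm hirr Pc hpo (w * u⁻¹) ≤ n →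
    fpart hsymm hirr Pc hpo K w * (fpart hsymm hirr Pc hpo K u)⁻¹ ∈ Pc K := by
  intro n
  induction n with
  | zero =>
    intro w u K hw hm hlen
    have hm1 : w * u⁻¹ = 1 := eq_one_of_len_zero hsymm hirr Pc hpo (Nat.le_zero.mp hlen)
    have hwu : w = u := by
      rw [← mul_inv_eq_one]
      exact hm1
    rw [hwu, mul_inv_cancel]
    exact (Pc K).one_mem
  | succ n ih =>
    intro w u K hw hm hlen
    by_cases hm1 : w * u⁻¹ = 1
    · have hwu : w = u := by rw [← mul_inv_eq_one]; exact hm1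
      rw [hwu, mul_inv_cancel]
      exact (Pc K).one_mem
    by_cases hf : fpart hsymm hirr Pc hpo K u = 1
    · rw [hf, inv_one, mul_one]
      exact fpart_pos hsymm hirr Pc hpo hw K
    obtain ⟨K', hc⟩ := exists_fin_vertex hsymm hirr Pc hpo hm1
    set m := w * u⁻¹ with hmdef
    set c := fpart hsymm hirr Pc hpo K' m with hcdef
    have hcPc : c ∈ Pc K' := fpart_pos hsymm hirr Pc hpo hm K'
    have hm₁pos : ftail hsymm hirr Pc hpo K' m ∈ posCone adj G Pc :=
      ftail_pos hsymm hirr Pc hpo hm K'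
    have hlen1 : len hsymm hirr Pc hpo (ftail hsymm hirr Pc hpo K' m) + 1 =
      len hsymm hirr Pc hpo m := len_ftail hsymm hirr Pc hpo hc
    set u' := mkOf adj G c * u with hu'
    have hwu' : w * u'⁻¹ = ftail hsymm hirr Pc hpo K' m := by
      rw [hu', mul_inv_rev, ← mul_assoc, ftail, ← hcdef, ← hmdef]
    have hrec := ih w u' K hw (by rw [hwu']; exact hm₁pos) (by rw [hwu']; omega)
    by_cases hKK' : K = K'
    · subst hKK'
      obtain ⟨T, hTred, hTni, hu⟩ := isplit hsymm hirr Pc hpo K u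
      set h₀ := ipart hsymm hirr Pc hpo K u with hh₀
      by_cases hδ : fpart hsymm hirr Pc hpo K (evalWord adj G T) = 1
      · -- tail has no K-final: beta configuration
        have hnfT : ¬ HasFinL adj K T :=
          not_hasFin_of_fpart_one hsymm hirr Pc hpo hTred rfl hδ
        have hne0 : h₀ ≠ 1 := by
          intro h0
          apply hf
          have e3 : u = evalWord adj G T := by rw [hu, h0, mkOf_one, one_mul]
          rw [e3]
          exact hδ
        have hredsyl : Reduced adj (syl K h₀ hne0 :: T) :=
          red_cons hsymm hirr hTni hTred h₀ hne0
        have hevsyl : evalWord adj G (syl K h₀ hne0 :: T) = u := by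
          rw [evalWord_cons_syl]
          exact hu.symm
        obtain ⟨hfu, hadjT⟩ :=
          beta_lemma hsymm hirr Pc hpo hTred hnfT hredsyl hevsyl hf
        by_cases hch : c * h₀ = 1
        · have hcinv : c = h₀⁻¹ := eq_inv_of_mul_eq_one_left hch
          rw [hfu, ← hcinv]
          exact mul_mem (fpart_pos hsymm hirr Pc hpo hw K) hcPc
        · have e2 : u' = evalWord adj G (T ++ [syl K (c * h₀) hch]) := by
            rw [evalWord_append, evalWord_singleton]
            show u' = evalWord adj G T * mkOf adj G (c * h₀)
            rw [← commute_word (c * h₀) hadjT, hu', mkOf_mul, mul_assoc, ← hu]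
          have hred2 : Reduced adj (T ++ [syl K (c * h₀) hch]) :=
            red_append hsymm hirr hnfT hTred _ hch
          have hfu' : fpart hsymm hirr Pc hpo K u' = c * h₀ :=
            fpart_of_append hsymm hirr Pc hpo hred2 e2.symm
          rw [hfu'] at hrec
          rw [hfu]
          have heq : fpart hsymm hirr Pc hpo K w * h₀⁻¹ =
              (fpart hsymm hirr Pc hpo K w * (c * h₀)⁻¹) * c := by group
          rw [heq]
          exact mul_mem hrec hcPc
      · -- the tail has the K-final: untouched by the multiplication
        have e_u : u = evalWord adj G (consL K h₀ T) := by rw [eval_consL, ← hu]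
        have e_u' : u' = evalWord adj G (consL K (c * h₀) T) := by
          rw [eval_consL, mkOf_mul, mul_assoc, ← hu, hu']
        have hfu : fpart hsymm hirr Pc hpo K u =
            fpart hsymm hirr Pc hpo K (evalWord adj G T) := by
          rw [e_u]
          exact fpart_consL_fin hsymm hirr Pc hpo h₀ hTred hTni hδ
        have hfu' : fpart hsymm hirr Pc hpo K u' =
            fpart hsymm hirr Pc hpo K (evalWord adj G T) := by
          rw [e_u']
          exact fpart_consL_fin hsymm hirr Pc hpo (c * h₀) hTred hTni hδ
        rw [hfu', ← hfu] at hrec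
        exact hrec
    · -- different vertices
      have hfu' : fpart hsymm hirr Pc hpo K u' = fpart hsymm hirr Pc hpo K u := by
        rw [hu']
        exact fpart_mul_left_other hsymm hirr Pc hpo hKK' c u
      rw [hfu'] at hrec
      exact hrec

/-- `a` is the least upper bound datum of the pair `(a, b)`. -/
def OKp (I : Λ) (a b : G I) : Prop :=
  ∀ d ∈ Pc I, b * a⁻¹ * d ∈ Pc I → a⁻¹ * d ∈ Pc I

theorem OKp_one_left {I : Λ} (b : G I) : OKp Pc I 1 b := by
  intro d hd _
  simpa using hd

theorem OKp_one_right {I : Λ} (a : G I) : OKp Pc I a 1 := by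
  intro d hd h
  simpa using h

theorem Gp : ∀ (n : ℕ) (p q m : GraphProduct adj G) (K : Λ),
    p ∈ posCone adj G Pc → q ∈ posCone adj G Pc → m ∈ posCone adj G Pc →
    (∀ J, OKp Pc J (fpart hsymm hirr Pc hpo J p) (fpart hsymm hirr Pc hpo J q)) →
    len hsymm hirr Pc hpo m ≤ n → fpart hsymm hirr Pc hpo K m = 1 →
    OKp Pc K (fpart hsymm hirr Pc hpo K (p * m)) (fpart hsymm hirr Pc hpo K (q * m)) := by
  intro n
  induction n with
  | zero =>
    intro p q m K hp hq hm htaut hlen _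
    have hm1 : m = 1 := eq_one_of_len_zero hsymm hirr Pc hpo (Nat.le_zero.mp hlen)
    rw [hm1, mul_one, mul_one]
    exact htaut K
  | succ n ih =>
    intro p q m K hp hq hm htaut hlen hK0
    by_cases hm1 : m = 1
    · rw [hm1, mul_one, mul_one]
      exact htaut K
    obtain ⟨J, he⟩ := exists_fin_vertex hsymm hirr Pc hpo hm1
    have hJK : J ≠ K := by
      intro h
      subst h
      exact he hK0
    have hePc : fpart hsymm hirr Pc hpo J m ∈ Pc J := fpart_pos hsymm hirr Pc hpo hm J
    have hm₁pos : ftail hsymm hirr Pc hpo J m ∈ posCone adj G Pc :=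
      ftail_pos hsymm hirr Pc hpo hm J
    have hlen1 : len hsymm hirr Pc hpo (ftail hsymm hirr Pc hpo J m) + 1 =
      len hsymm hirr Pc hpo m := len_ftail hsymm hirr Pc hpo he
    have hmm : m = ftail hsymm hirr Pc hpo J m * mkOf adj G (fpart hsymm hirr Pc hpo J m) :=
      (ftail_mul_fpart hsymm hirr Pc hpo J m).symm
    have hpm : p * m = (p * ftail hsymm hirr Pc hpo J m) *
        mkOf adj G (fpart hsymm hirr Pc hpo J m) := by
      conv_lhs => rw [hmm]
      rw [mul_assoc]
    have hqm : q * m = (q * ftail hsymm hirr Pc hpo J m) *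
        mkOf adj G (fpart hsymm hirr Pc hpo J m) := by
      conv_lhs => rw [hmm]
      rw [mul_assoc]
    have hprovp : fpart hsymm hirr Pc hpo J (p * ftail hsymm hirr Pc hpo J m) *
        fpart hsymm hirr Pc hpo J m ≠ 1 :=
      pos_mul_ne_one Pc hpo
        (fpart_pos hsymm hirr Pc hpo (mul_mem hp hm₁pos) J) hePc he
    have hprovq : fpart hsymm hirr Pc hpo J (q * ftail hsymm hirr Pc hpo J m) *
        fpart hsymm hirr Pc hpo J m ≠ 1 :=
      pos_mul_ne_one Pc hpo
        (fpart_pos hsymm hirr Pc hpo (mul_mem hq hm₁pos) J) hePc he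
    by_cases hK1 : fpart hsymm hirr Pc hpo K (ftail hsymm hirr Pc hpo J m) = 1
    · have IH := ih p q (ftail hsymm hirr Pc hpo J m) K hp hq hm₁pos htaut (by omega) hK1
      by_cases hadjKJ : adj K J
      · rw [hpm, hqm,
          fpart_mul_right_adj hsymm hirr Pc hpo (Ne.symm hJK) hadjKJ,
          fpart_mul_right_adj hsymm hirr Pc hpo (Ne.symm hJK) hadjKJ]
        exact IH
      · rw [hpm,
          fpart_mul_right_nonadj hsymm hirr Pc hpo (Ne.symm hJK) hadjKJ _ _ hprovp]
        exact OKp_one_left Pc _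
    · have hnadj : ¬ adj K J := by
        intro hadj
        apply hK1
        have h2 := fpart_mul_right_adj hsymm hirr Pc hpo (Ne.symm hJK) hadj
          (ftail hsymm hirr Pc hpo J m) (fpart hsymm hirr Pc hpo J m)
        rw [← hmm] at h2
        rw [← h2]
        exact hK0
      rw [hpm,
        fpart_mul_right_nonadj hsymm hirr Pc hpo (Ne.symm hJK) hnadj _ _ hprovp]
      exact OKp_one_left Pc _

theorem Klem : ∀ (n : ℕ) (p q z : GraphProduct adj G),
    p ∈ posCone adj G Pc → q ∈ posCone adj G Pc →
    (∀ J, OKp Pc J (fpart hsymm hirr Pc hpo J p) (fpart hsymm hirr Pc hpo J q)) →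
    len hsymm hirr Pc hpo z ≤ n →
    p * z ∈ posCone adj G Pc → q * z ∈ posCone adj G Pc → z ∈ posCone adj G Pc := by
  intro n
  induction n with
  | zero =>
    intro p q z _ _ _ hlen _ _
    rw [eq_one_of_len_zero hsymm hirr Pc hpo (Nat.le_zero.mp hlen)]
    exact one_mem _
  | succ n ih =>
    intro p q z hp hq htaut hlen hpz hqz
    by_cases hz1 : z = 1
    · rw [hz1]; exact one_mem _
    obtain ⟨K, hfne⟩ := exists_fin_vertex hsymm hirr Pc hpo hz1
    set f := fpart hsymm hirr Pc hpo K z with hfdef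
    set z₁ := ftail hsymm hirr Pc hpo K z with hz₁def
    have hzz : z = z₁ * mkOf adj G f := (ftail_mul_fpart hsymm hirr Pc hpo K z).symm
    have hlen1 : len hsymm hirr Pc hpo z₁ + 1 = len hsymm hirr Pc hpo z :=
      len_ftail hsymm hirr Pc hpo hfne
    -- p * z₁ ∈ P
    have hpeel : ∀ r : GraphProduct adj G, r ∈ posCone adj G Pc →
        r * z ∈ posCone adj G Pc → r * z₁ ∈ posCone adj G Pc := by
      intro r hr hrz
      have hC2 := C2r hsymm hirr Pc hpo (len hsymm hirr Pc hpo r) (r * z) z K hrz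
        (by rw [mul_inv_cancel_right]; exact hr)
        (by rw [mul_inv_cancel_right])
      have h2 : r * z * (mkOf adj G f)⁻¹ ∈ posCone adj G Pc :=
        (Cr_iff hsymm hirr Pc hpo hrz f).mpr hC2
      have h3 : r * z * (mkOf adj G f)⁻¹ = r * z₁ := by
        conv_lhs => rw [hzz]
        rw [← mul_assoc r z₁ (mkOf adj G f), mul_inv_cancel_right]
      rwa [h3] at h2
    have hpz₁ := hpeel p hp hpz
    have hqz₁ := hpeel q hq hqz
    have hz₁P : z₁ ∈ posCone adj G Pc := ih p q z₁ hp hq htaut (by omega) hpz₁ hqz₁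
    -- now show f ∈ Pc K
    have hαf : fpart hsymm hirr Pc hpo K (p * z₁) * f ∈ Pc K := by
      have e1 : p * z = (p * z₁) * mkOf adj G f := by
        conv_lhs => rw [hzz]
        rw [mul_assoc]
      have := fpart_pos hsymm hirr Pc hpo hpz K
      rw [e1, fpart_mul hsymm hirr Pc hpo K] at this
      exact this
    have hβf : fpart hsymm hirr Pc hpo K (q * z₁) * f ∈ Pc K := by
      have e1 : q * z = (q * z₁) * mkOf adj G f := by
        conv_lhs => rw [hzz]
        rw [mul_assoc]
      have := fpart_pos hsymm hirr Pc hpo hqz K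
      rw [e1, fpart_mul hsymm hirr Pc hpo K] at this
      exact this
    have hOK := Gp hsymm hirr Pc hpo (len hsymm hirr Pc hpo z₁) p q z₁ K hp hq hz₁P htaut
      (le_refl _) (by rw [hz₁def]; exact fpart_ftail hsymm hirr Pc hpo K z)
    have hfPc : f ∈ Pc K := by
      have h4 := hOK (fpart hsymm hirr Pc hpo K (p * z₁) * f) hαf (by
        have e2 : fpart hsymm hirr Pc hpo K (q * z₁) *
            (fpart hsymm hirr Pc hpo K (p * z₁))⁻¹ *
            (fpart hsymm hirr Pc hpo K (p * z₁) * f) =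
            fpart hsymm hirr Pc hpo K (q * z₁) * f := by group
        rw [e2]
        exact hβf)
      rwa [inv_mul_cancel_left] at h4
    rw [hzz]
    exact mul_mem hz₁P (mkOf_mem_posCone Pc hfPc)

end QLOPart

section RPart

variable (hsymm : Symmetric adj) (hirr : ∀ I : Λ, ¬ adj I I)
variable (Pc : ∀ I, Submonoid (G I)) (hpo : ∀ I, IsPoGroup (Pc I))

theorem fpart_one (I : Λ) : fpart hsymm hirr Pc hpo I (1 : GraphProduct adj G) = 1 := by
  refine fpart_eq_one hsymm hirr Pc hpo (red_nil) ?_ (evalWord_nil)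
  rintro ⟨a, ha, T, hse⟩
  have := SE.length hse
  simp at this

/-- the set of common final vertices where the fraction is not yet taut -/
def badSet (p q : GraphProduct adj G) : Set Λ :=
  {I | fpart hsymm hirr Pc hpo I p ≠ 1 ∧ fpart hsymm hirr Pc hpo I q ≠ 1 ∧
    ¬ OKp Pc I (fpart hsymm hirr Pc hpo I p) (fpart hsymm hirr Pc hpo I q)}

theorem badSet_finite (p q : GraphProduct adj G) :
    (badSet hsymm hirr Pc hpo p q).Finite :=
  Set.Finite.subset (finVertex_finite hsymm hirr Pc hpo p) (fun _ hI => hI.1)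

theorem Rlem (hqlo : ∀ I, IsQLO (Pc I)) :
    ∀ (n₁ n₂ : ℕ) (p q : GraphProduct adj G), p ∈ posCone adj G Pc →
    q ∈ posCone adj G Pc →
    len hsymm hirr Pc hpo p + len hsymm hirr Pc hpo q ≤ n₁ →
    (badSet hsymm hirr Pc hpo p q).ncard ≤ n₂ →
    ∃ p' q', p' ∈ posCone adj G Pc ∧ q' ∈ posCone adj G Pc ∧
      p' * q'⁻¹ = p * q⁻¹ ∧
      ∀ J, OKp Pc J (fpart hsymm hirr Pc hpo J p') (fpart hsymm hirr Pc hpo J q') := by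
  intro n₁
  induction n₁ with
  | zero =>
    intro n₂ p q hp hq hlen _
    refine ⟨p, q, hp, hq, rfl, fun J => ?_⟩
    have hp1 : p = 1 := eq_one_of_len_zero hsymm hirr Pc hpo (by omega)
    have hq1 : q = 1 := eq_one_of_len_zero hsymm hirr Pc hpo (by omega)
    rw [hp1, fpart_one]
    exact OKp_one_left Pc _
  | succ n₁ ih₁ =>
    intro n₂
    induction n₂ with
    | zero =>
      intro p q hp hq hlen hcard
      refine ⟨p, q, hp, hq, rfl, fun J => ?_⟩
      by_cases h1 : fpart hsymm hirr Pc hpo J p = 1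
      · rw [h1]; exact OKp_one_left Pc _
      by_cases h2 : fpart hsymm hirr Pc hpo J q = 1
      · rw [h2]; exact OKp_one_right Pc _
      by_contra h3
      have hempty : badSet hsymm hirr Pc hpo p q = ∅ :=
        (Set.ncard_eq_zero (badSet_finite hsymm hirr Pc hpo p q)).mp
          (Nat.le_zero.mp hcard)
      have hJ : J ∈ badSet hsymm hirr Pc hpo p q := ⟨h1, h2, h3⟩
      rw [hempty] at hJ
      exact hJ
    | succ n₂ ih₂ =>
      intro p q hp hq hlen hcard
      by_cases hbad : badSet hsymm hirr Pc hpo p q = ∅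
      · refine ⟨p, q, hp, hq, rfl, fun J => ?_⟩
        by_cases h1 : fpart hsymm hirr Pc hpo J p = 1
        · rw [h1]; exact OKp_one_left Pc _
        by_cases h2 : fpart hsymm hirr Pc hpo J q = 1
        · rw [h2]; exact OKp_one_right Pc _
        by_contra h3
        have hJ : J ∈ badSet hsymm hirr Pc hpo p q := ⟨h1, h2, h3⟩
        rw [hbad] at hJ
        exact hJ
      · obtain ⟨I, hI⟩ := Set.nonempty_iff_ne_empty.mpr hbad
        obtain ⟨ha1, hb1, hnok⟩ := hI
        have haPc : fpart hsymm hirr Pc hpo I p ∈ Pc I := fpart_pos hsymm hirr Pc hpo hp I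
        have hbPc : fpart hsymm hirr Pc hpo I q ∈ Pc I := fpart_pos hsymm hirr Pc hpo hq I
        set a := fpart hsymm hirr Pc hpo I p with hadef
        set b := fpart hsymm hirr Pc hpo I q with hbdef
        have hub : HasUB (Pc I) 1 (a * b⁻¹) := by
          refine ⟨a, ?_, ?_⟩
          · show (1 : G I)⁻¹ * a ∈ Pc I
            simpa using haPc
          · show (a * b⁻¹)⁻¹ * a ∈ Pc I
            have e0 : (a * b⁻¹)⁻¹ * a = b := by group
            rw [e0]; exact hbPc
        obtain ⟨c, hc1, hc2, hc3⟩ := (hqlo I).2 1 (a * b⁻¹) hub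
        have hcPc : c ∈ Pc I := by simpa [lle] using hc1
        set b₀ := (a * b⁻¹)⁻¹ * c with hb₀def
        have hb₀Pc : b₀ ∈ Pc I := hc2
        set p' := ftail hsymm hirr Pc hpo I p * mkOf adj G c with hp'def
        set q' := ftail hsymm hirr Pc hpo I q * mkOf adj G b₀ with hq'def
        have hp'P : p' ∈ posCone adj G Pc :=
          mul_mem (ftail_pos hsymm hirr Pc hpo hp I) (mkOf_mem_posCone Pc hcPc)
        have hq'P : q' ∈ posCone adj G Pc :=
          mul_mem (ftail_pos hsymm hirr Pc hpo hq I) (mkOf_mem_posCone Pc hb₀Pc)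
        have hfrac : p' * q'⁻¹ = p * q⁻¹ := by
          rw [hp'def, hq'def]
          have e1 : mkOf adj G c * (mkOf adj G b₀)⁻¹ =
              mkOf adj G a * (mkOf adj G b)⁻¹ := by
            rw [← mkOf_inv, ← mkOf_mul, ← mkOf_inv, ← mkOf_mul]
            have e2 : c * b₀⁻¹ = a * b⁻¹ := by rw [hb₀def]; group
            rw [e2]
          calc ftail hsymm hirr Pc hpo I p * mkOf adj G c *
              (ftail hsymm hirr Pc hpo I q * mkOf adj G b₀)⁻¹
              = ftail hsymm hirr Pc hpo I p *
                (mkOf adj G c * (mkOf adj G b₀)⁻¹) *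
                (ftail hsymm hirr Pc hpo I q)⁻¹ := by group
            _ = ftail hsymm hirr Pc hpo I p *
                (mkOf adj G a * (mkOf adj G b)⁻¹) *
                (ftail hsymm hirr Pc hpo I q)⁻¹ := by rw [e1]
            _ = (ftail hsymm hirr Pc hpo I p * mkOf adj G a) *
                (ftail hsymm hirr Pc hpo I q * mkOf adj G b)⁻¹ := by group
            _ = p * q⁻¹ := by
                rw [hadef, hbdef, ftail_mul_fpart hsymm hirr Pc hpo I p,
                  ftail_mul_fpart hsymm hirr Pc hpo I q]
        have hOKcb : OKp Pc I c b₀ := by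
          intro d hd hcond
          have e2 : b₀ * c⁻¹ * d = (a * b⁻¹)⁻¹ * d := by rw [hb₀def]; group
          rw [e2] at hcond
          exact hc3 d (by simpa [lle] using hd) hcond
        have hfp' : fpart hsymm hirr Pc hpo I p' = c := by
          rw [hp'def, fpart_mul hsymm hirr Pc hpo, fpart_ftail hsymm hirr Pc hpo, one_mul]
        have hfq' : fpart hsymm hirr Pc hpo I q' = b₀ := by
          rw [hq'def, fpart_mul hsymm hirr Pc hpo, fpart_ftail hsymm hirr Pc hpo, one_mul]
        have hlenp : len hsymm hirr Pc hpo (ftail hsymm hirr Pc hpo I p) + 1 =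
            len hsymm hirr Pc hpo p := len_ftail hsymm hirr Pc hpo ha1
        have hlenq : len hsymm hirr Pc hpo (ftail hsymm hirr Pc hpo I q) + 1 =
            len hsymm hirr Pc hpo q := len_ftail hsymm hirr Pc hpo hb1
        have hlenmul : ∀ (x : GraphProduct adj G) (γ : G I), γ ≠ 1 →
            len hsymm hirr Pc hpo (ftail hsymm hirr Pc hpo I x * mkOf adj G γ) =
              len hsymm hirr Pc hpo (ftail hsymm hirr Pc hpo I x) + 1 := by
          intro x γ hγ
          have hfy : fpart hsymm hirr Pc hpo I
              (ftail hsymm hirr Pc hpo I x * mkOf adj G γ) = γ := by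
            rw [fpart_mul hsymm hirr Pc hpo, fpart_ftail hsymm hirr Pc hpo, one_mul]
          have h5 := len_ftail hsymm hirr Pc hpo (show
            fpart hsymm hirr Pc hpo I (ftail hsymm hirr Pc hpo I x * mkOf adj G γ) ≠ 1 by
            rw [hfy]; exact hγ)
          have h6 : ftail hsymm hirr Pc hpo I (ftail hsymm hirr Pc hpo I x * mkOf adj G γ) =
              ftail hsymm hirr Pc hpo I x := by
            rw [ftail, hfy, mul_inv_cancel_right]
          rw [h6] at h5
          omega
        by_cases hc0 : c = 1
        · have e3 : p' = ftail hsymm hirr Pc hpo I p := by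
            rw [hp'def, hc0, mkOf_one, mul_one]
          have hq'le : len hsymm hirr Pc hpo q' ≤ len hsymm hirr Pc hpo q := by
            by_cases hb00 : b₀ = 1
            · rw [hq'def, hb00, mkOf_one, mul_one]; omega
            · rw [hq'def, hlenmul q b₀ hb00]; omega
          have hlen' : len hsymm hirr Pc hpo p' + len hsymm hirr Pc hpo q' ≤ n₁ := by
            rw [e3]; omega
          obtain ⟨p'', q'', hA, hB, hC, hD⟩ := ih₁
            ((badSet hsymm hirr Pc hpo p' q').ncard) p' q' hp'P hq'P hlen' (le_refl _)
          exact ⟨p'', q'', hA, hB, hC.trans hfrac, hD⟩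
        by_cases hb00 : b₀ = 1
        · have e3 : q' = ftail hsymm hirr Pc hpo I q := by
            rw [hq'def, hb00, mkOf_one, mul_one]
          have hp'le : len hsymm hirr Pc hpo p' ≤ len hsymm hirr Pc hpo p := by
            rw [hp'def, hlenmul p c hc0]; omega
          have hlen' : len hsymm hirr Pc hpo p' + len hsymm hirr Pc hpo q' ≤ n₁ := by
            rw [e3]; omega
          obtain ⟨p'', q'', hA, hB, hC, hD⟩ := ih₁
            ((badSet hsymm hirr Pc hpo p' q').ncard) p' q' hp'P hq'P hlen' (le_refl _)
          exact ⟨p'', q'', hA, hB, hC.trans hfrac, hD⟩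
        · -- both nontrivial: the bad set shrinks
          have hfpJ : ∀ J, J ≠ I → fpart hsymm hirr Pc hpo J p' = fpart hsymm hirr Pc hpo J p := by
            intro J hJ
            by_cases hadj : adj J I
            · rw [hp'def, fpart_mul_right_adj hsymm hirr Pc hpo hJ hadj]
              conv_rhs => rw [← ftail_mul_fpart hsymm hirr Pc hpo I p]
              rw [fpart_mul_right_adj hsymm hirr Pc hpo hJ hadj]
            · have hprov1 : fpart hsymm hirr Pc hpo I (ftail hsymm hirr Pc hpo I p) * c ≠ 1 := by
                rw [fpart_ftail hsymm hirr Pc hpo, one_mul]; exact hc0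
              have hprov2 : fpart hsymm hirr Pc hpo I (ftail hsymm hirr Pc hpo I p) * a ≠ 1 := by
                rw [fpart_ftail hsymm hirr Pc hpo, one_mul]; exact ha1
              rw [hp'def, fpart_mul_right_nonadj hsymm hirr Pc hpo hJ hadj _ _ hprov1]
              conv_rhs => rw [← ftail_mul_fpart hsymm hirr Pc hpo I p]
              rw [fpart_mul_right_nonadj hsymm hirr Pc hpo hJ hadj _ _ hprov2]
          have hfqJ : ∀ J, J ≠ I → fpart hsymm hirr Pc hpo J q' = fpart hsymm hirr Pc hpo J q := by
            intro J hJ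
            by_cases hadj : adj J I
            · rw [hq'def, fpart_mul_right_adj hsymm hirr Pc hpo hJ hadj]
              conv_rhs => rw [← ftail_mul_fpart hsymm hirr Pc hpo I q]
              rw [fpart_mul_right_adj hsymm hirr Pc hpo hJ hadj]
            · have hprov1 : fpart hsymm hirr Pc hpo I (ftail hsymm hirr Pc hpo I q) * b₀ ≠ 1 := by
                rw [fpart_ftail hsymm hirr Pc hpo, one_mul]; exact hb00
              have hprov2 : fpart hsymm hirr Pc hpo I (ftail hsymm hirr Pc hpo I q) * b ≠ 1 := by
                rw [fpart_ftail hsymm hirr Pc hpo, one_mul]; exact hb1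
              rw [hq'def, fpart_mul_right_nonadj hsymm hirr Pc hpo hJ hadj _ _ hprov1]
              conv_rhs => rw [← ftail_mul_fpart hsymm hirr Pc hpo I q]
              rw [fpart_mul_right_nonadj hsymm hirr Pc hpo hJ hadj _ _ hprov2]
          have hsub : badSet hsymm hirr Pc hpo p' q' ⊂ badSet hsymm hirr Pc hpo p q := by
            constructor
            · intro J hJ
              by_cases hJI : J = I
              · exfalso
                subst hJI
                rw [badSet, Set.mem_setOf_eq, hfp', hfq'] at hJ
                exact hJ.2.2 hOKcb
              · obtain ⟨x1, x2, x3⟩ := hJ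
                rw [hfpJ J hJI] at x1
                rw [hfqJ J hJI] at x2
                rw [hfpJ J hJI, hfqJ J hJI] at x3
                exact ⟨x1, x2, x3⟩
            · intro hsup
              have hIin : I ∈ badSet hsymm hirr Pc hpo p q := ⟨ha1, hb1, hnok⟩
              have hInot : I ∉ badSet hsymm hirr Pc hpo p' q' := by
                intro h
                rw [badSet, Set.mem_setOf_eq, hfp', hfq'] at h
                exact h.2.2 hOKcb
              exact hInot (hsup hIin)
          have hcard' : (badSet hsymm hirr Pc hpo p' q').ncard ≤ n₂ := by
            have := Set.ncard_lt_ncard hsub (badSet_finite hsymm hirr Pc hpo p q)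
            omega
          have hlen' : len hsymm hirr Pc hpo p' + len hsymm hirr Pc hpo q' ≤ n₁ + 1 := by
            rw [hp'def, hq'def, hlenmul p c hc0, hlenmul q b₀ hb00]
            omega
          obtain ⟨p'', q'', hA, hB, hC, hD⟩ := ih₂ p' q' hp'P hq'P hlen' hcard'
          exact ⟨p'', q'', hA, hB, hC.trans hfrac, hD⟩

end RPart

end GPQ
end ChunkOne

/-- Theorem 3.4. A graph product
`(G,P) = Γ_{I∈Λ}(G_I,P_I)` of quasi-lattice ordered groups over a simplicial graph is a
quasi-lattice ordered group. -/
theorem graphProduct_isQLO {Λ : Type u} (adj : Λ → Λ → Prop)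
    (hsymm : Symmetric adj) (hirr : ∀ I : Λ, ¬ adj I I)
    (G : Λ → Type v) [∀ I, Group (G I)]
    (Pc : ∀ I, Submonoid (G I)) (hqlo : ∀ I, IsQLO (Pc I)) :
    IsQLO (posCone adj G Pc) := by
  classical
  have hpo : ∀ I, IsPoGroup (Pc I) := fun I => (hqlo I).1
  constructor
  · exact GPQ.posCone_isPoGroup hsymm hirr Pc hpo
  · intro x y hub
    obtain ⟨z, hxz, hyz⟩ := hub
    have hp₀ : x⁻¹ * z ∈ posCone adj G Pc := hxz
    have hq₀ : y⁻¹ * z ∈ posCone adj G Pc := hyz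
    obtain ⟨p', q', hp', hq', hfrac, htaut⟩ :=
      GPQ.Rlem hsymm hirr Pc hpo hqlo
        (GPQ.len hsymm hirr Pc hpo (x⁻¹ * z) + GPQ.len hsymm hirr Pc hpo (y⁻¹ * z))
        ((GPQ.badSet hsymm hirr Pc hpo (x⁻¹ * z) (y⁻¹ * z)).ncard)
        (x⁻¹ * z) (y⁻¹ * z) hp₀ hq₀ (le_refl _) (le_refl _)
    have hfr : p' * q'⁻¹ = x⁻¹ * y := by
      rw [hfrac]; group
    refine ⟨x * p', ?_, ?_, ?_⟩
    · show x⁻¹ * (x * p') ∈ posCone adj G Pc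
      rw [inv_mul_cancel_left]
      exact hp'
    · show y⁻¹ * (x * p') ∈ posCone adj G Pc
      have e1 : y⁻¹ * (x * p') = q' := by
        have e2 : q' = (p' * q'⁻¹)⁻¹ * p' := by group
        rw [e2, hfr]
        group
      rw [e1]
      exact hq'
    · intro w hxw hyw
      show (x * p')⁻¹ * w ∈ posCone adj G Pc
      have e3 : (x * p')⁻¹ * w = p'⁻¹ * (x⁻¹ * w) := by group
      rw [e3]
      have h1 : p' * (p'⁻¹ * (x⁻¹ * w)) ∈ posCone adj G Pc := by
        rw [mul_inv_cancel_left]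
        exact hxw
      have h2 : q' * (p'⁻¹ * (x⁻¹ * w)) ∈ posCone adj G Pc := by
        have e4 : q' * (p'⁻¹ * (x⁻¹ * w)) = y⁻¹ * w := by
          have e5 : q' = (p' * q'⁻¹)⁻¹ * p' := by group
          rw [e5, hfr]
          group
        rw [e4]
        exact hyw
      exact GPQ.Klem hsymm hirr Pc hpo
        (GPQ.len hsymm hirr Pc hpo (p'⁻¹ * (x⁻¹ * w))) p' q' (p'⁻¹ * (x⁻¹ * w))
        hp' hq' htaut (le_refl _) h1 h2
end

section
/- Let (G,P) be a graph product of partially ordered groups (G_I,P_I), I ∈ Λ, and let x, z ∈ P with 1 ≤ x ≤ z. Then for each I ∈ Λ: (i) x_I ≤ z_I in (G_I,P_I); and (ii) writing x = x_I x′, either x_I = z_I or I is adjacent in Γ to every vertex of x′. -/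
universe u v

attribute [reducible] Syllable

section Aux

open Relation List

variable {Λ : Type u} {G : Λ → Type v} [∀ I, Group (G I)] {adj : Λ → Λ → Prop}

theorem ShuffleStep.symm' (hsymm : Symmetric adj) {L L' : List (Syllable G)}
    (h : ShuffleStep adj L L') : ShuffleStep adj L' L := by
  obtain ⟨A, B, s, t, hadj, h1, h2⟩ := h
  exact ⟨A, B, t, s, hsymm hadj, h2, h1⟩

theorem ShuffleEquiv.refl' (L : List (Syllable G)) : ShuffleEquiv adj L L :=
  ReflTransGen.refl

theorem ShuffleEquiv.trans' {L M N : List (Syllable G)} (h : ShuffleEquiv adj L M)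
    (h2 : ShuffleEquiv adj M N) : ShuffleEquiv adj L N := ReflTransGen.trans h h2

theorem ShuffleEquiv.symm' (hsymm : Symmetric adj) {L M : List (Syllable G)}
    (h : ShuffleEquiv adj L M) : ShuffleEquiv adj M L :=
  by haveI : Std.Symm (ShuffleStep (G := G) adj) := ⟨fun _ _ h => ShuffleStep.symm' hsymm h⟩
     exact (ReflTransGen.symmetric (r := ShuffleStep (G := G) adj)).symm _ _ h

theorem ShuffleStep.perm {L L' : List (Syllable G)} (h : ShuffleStep adj L L') :
    L.Perm L' := by
  obtain ⟨A, B, s, t, _, rfl, rfl⟩ := h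
  exact List.Perm.append_left A (List.Perm.swap t s B)

theorem ShuffleEquiv.perm {L L' : List (Syllable G)} (h : ShuffleEquiv adj L L') :
    L.Perm L' := by
  induction h with
  | refl => exact List.Perm.refl _
  | tail _ h ih => exact ih.trans h.perm

theorem ShuffleStep.cons' {L L' : List (Syllable G)} (s : Syllable G)
    (h : ShuffleStep adj L L') : ShuffleStep adj (s :: L) (s :: L') := by
  obtain ⟨A, B, u, v, hadj, rfl, rfl⟩ := h
  exact ⟨s :: A, B, u, v, hadj, rfl, rfl⟩

theorem ShuffleEquiv.cons' {L L' : List (Syllable G)} (s : Syllable G)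
    (h : ShuffleEquiv adj L L') : ShuffleEquiv adj (s :: L) (s :: L') := by
  induction h with
  | refl => exact ReflTransGen.refl
  | tail _ h ih => exact ReflTransGen.tail ih (h.cons' s)

theorem ShuffleEquiv.append_left' (A : List (Syllable G)) {L L' : List (Syllable G)}
    (h : ShuffleEquiv adj L L') : ShuffleEquiv adj (A ++ L) (A ++ L') := by
  induction A with
  | nil => exact h
  | cons a A ih => exact ih.cons' a

theorem ShuffleStep.append_right' {L L' : List (Syllable G)} (B : List (Syllable G))
    (h : ShuffleStep adj L L') : ShuffleStep adj (L ++ B) (L' ++ B) := by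
  obtain ⟨A, C, u, v, hadj, rfl, rfl⟩ := h
  exact ⟨A, C ++ B, u, v, hadj, by simp, by simp⟩

theorem ShuffleEquiv.append_right' {L L' : List (Syllable G)} (B : List (Syllable G))
    (h : ShuffleEquiv adj L L') : ShuffleEquiv adj (L ++ B) (L' ++ B) := by
  induction h with
  | refl => exact ReflTransGen.refl
  | tail _ h ih => exact ReflTransGen.tail ih (h.append_right' B)

theorem shuffle_front {A B : List (Syllable G)} {s : Syllable G}
    (h : ∀ u ∈ A, adj u.1 s.1) :
    ShuffleEquiv adj (A ++ s :: B) (s :: (A ++ B)) := by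
  induction A with
  | nil => exact ReflTransGen.refl
  | cons a A ih =>
    have h1 : ShuffleEquiv adj (a :: (A ++ s :: B)) (a :: s :: (A ++ B)) :=
      (ih fun u hu => h u (List.mem_cons_of_mem _ hu)).cons' a
    refine h1.trans' (ReflTransGen.single ?_)
    exact ⟨[], A ++ B, a, s, h a (List.mem_cons_self), rfl, rfl⟩

theorem append_cons_eq_append_cons_cons {α : Type*} {A B C D : List α} {s u v : α}
    (h : A ++ s :: B = C ++ u :: v :: D) :
    (∃ E, C = A ++ s :: E ∧ B = E ++ u :: v :: D) ∨
    (A = C ∧ s = u ∧ B = v :: D) ∨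
    (A = C ++ [u] ∧ s = v ∧ B = D) ∨
    (∃ E, A = C ++ u :: v :: E ∧ D = E ++ s :: B) := by
  induction C generalizing A with
  | nil =>
    match A, h with
    | [], h => injection h with h1 h2; exact Or.inr (Or.inl ⟨rfl, h1, h2⟩)
    | [a], h =>
      injection h with h1 h2; injection h2 with h2 h3
      exact Or.inr (Or.inr (Or.inl ⟨by simp [h1], h2, h3⟩))
    | a :: b :: A, h =>
      injection h with h1 h2; injection h2 with h2 h3
      exact Or.inr (Or.inr (Or.inr ⟨A, by simp [h1, h2], h3.symm⟩))
  | cons c C ih =>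
    match A, h with
    | [], h =>
      injection h with h1 h2
      exact Or.inl ⟨C, by simp [h1], h2⟩
    | a :: A, h =>
      injection h with h1 h2
      rcases ih h2 with ⟨E, hC, hB⟩ | ⟨hA, hs, hB⟩ | ⟨hA, hs, hB⟩ | ⟨E, hA, hD⟩
      · exact Or.inl ⟨E, by rw [h1, hC]; rfl, hB⟩
      · exact Or.inr (Or.inl ⟨by rw [h1, hA], hs, hB⟩)
      · exact Or.inr (Or.inr (Or.inl ⟨by rw [h1, hA]; rfl, hs, hB⟩))
      · exact Or.inr (Or.inr (Or.inr ⟨E, by rw [h1, hA]; rfl, hD⟩))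

theorem shuffle_cons_decomp (hsymm : Symmetric adj) {s : Syllable G}
    {L K : List (Syllable G)} (h : ShuffleEquiv adj (s :: L) K) :
    ∃ A B, K = A ++ s :: B ∧ (∀ u ∈ A, adj u.1 s.1) ∧ ShuffleEquiv adj L (A ++ B) := by
  induction h with
  | refl => exact ⟨[], L, rfl, by simp, ReflTransGen.refl⟩
  | tail h1 hstep ih =>
    obtain ⟨A, B, rfl, hA, hLAB⟩ := ih
    obtain ⟨C, D, u, v, hadj, heq, rfl⟩ := hstep
    rcases append_cons_eq_append_cons_cons heq with
      ⟨E, hC, hB⟩ | ⟨hA2, hs, hB⟩ | ⟨hA2, hs, hB⟩ | ⟨E, hA2, hD⟩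
    · subst hC hB
      refine ⟨A, E ++ v :: u :: D, by simp, hA, ?_⟩
      refine ReflTransGen.tail hLAB ?_
      exact ⟨A ++ E, D, u, v, hadj, by simp, by simp⟩
    · refine ⟨A ++ [v], D, by rw [hA2, hs]; simp, ?_, ?_⟩
      · intro w hw
        rcases List.mem_append.1 hw with hw | hw
        · exact hA w hw
        · rcases List.mem_singleton.1 hw with rfl
          rw [hs]; exact hsymm hadj
      · rw [hB] at hLAB; simpa using hLAB
    · refine ⟨C, u :: B, by rw [hs, hB], ?_, ?_⟩
      · intro w hw; exact hA w (by simp [hA2, hw])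
      · rw [hA2] at hLAB; simpa using hLAB
    · subst hA2; subst hD
      refine ⟨C ++ v :: u :: E, B, by simp, ?_, ?_⟩
      · intro w hw
        refine hA w ?_
        simp only [List.mem_append, List.mem_cons] at hw ⊢
        tauto
      · refine ReflTransGen.tail hLAB ?_
        exact ⟨C, E ++ B, u, v, hadj, by simp, by simp⟩

end Aux

section Aux2

open Relation List

variable {Λ : Type u} {G : Λ → Type v} [∀ I, Group (G I)] (adj : Λ → Λ → Prop)

theorem mkOf_one {I : Λ} : mkOf adj G (1 : G I) = 1 := by
  simp [mkOf]
  rfl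

theorem mkOf_mul {I : Λ} (g h : G I) :
    mkOf adj G (g * h) = mkOf adj G g * mkOf adj G h := by
  simp [mkOf]
  rfl

theorem mkOf_comm {I J : Λ} (h : adj J I) (g : G I) (k : G J) :
    mkOf adj G g * mkOf adj G k = mkOf adj G k * mkOf adj G g := by
  unfold mkOf
  show QuotientGroup.mk (Monoid.CoprodI.of g * Monoid.CoprodI.of k)
    = QuotientGroup.mk (Monoid.CoprodI.of k * Monoid.CoprodI.of g)
  rw [QuotientGroup.eq]
  apply Subgroup.subset_normalClosure
  refine ⟨J, I, k⁻¹, g⁻¹, h, ?_⟩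
  simp [mul_assoc]

theorem evalWord_nil : evalWord adj G ([] : List (Syllable G)) = 1 := rfl

theorem evalWord_cons (s : Syllable G) (L : List (Syllable G)) :
    evalWord adj G (s :: L) = mkOf adj G s.2.1 * evalWord adj G L := by
  simp [evalWord]

theorem evalWord_append (L M : List (Syllable G)) :
    evalWord adj G (L ++ M) = evalWord adj G L * evalWord adj G M := by
  simp [evalWord]

variable {adj}

theorem ShuffleEquiv.eval (hsymm : Symmetric adj) {L L' : List (Syllable G)}
    (h : ShuffleEquiv adj L L') : evalWord adj G L = evalWord adj G L' := by
  induction h with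
  | refl => rfl
  | tail _ hstep ih =>
    obtain ⟨A, B, s, t, hadj, rfl, rfl⟩ := hstep
    rw [ih, evalWord_append, evalWord_append, evalWord_cons, evalWord_cons,
      evalWord_cons, evalWord_cons, ← mul_assoc, ← mul_assoc, mul_assoc, mul_assoc]
    congr 1
    rw [← mul_assoc, mkOf_comm adj (hsymm hadj), mul_assoc]

theorem Reduced.of_shuffle {L L' : List (Syllable G)} (h : Reduced adj L)
    (he : ShuffleEquiv adj L L') : Reduced adj L' := by
  rintro ⟨K, hK, hA⟩
  exact h ⟨K, he.trans' hK, hA⟩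

theorem reduced_nil : Reduced adj ([] : List (Syllable G)) := by
  rintro ⟨K, hK, A, B, u, v, huv, rfl⟩
  have := hK.perm.symm.eq_nil
  simp at this

theorem reduced_singleton (s : Syllable G) : Reduced adj [s] := by
  rintro ⟨K, hK, A, B, u, v, huv, rfl⟩
  have := hK.perm.length_eq
  simp at this
  omega

theorem Reduced.tail {L M : List (Syllable G)} {t : Syllable G} (hL : Reduced adj L)
    (h : ShuffleEquiv adj L (t :: M)) : Reduced adj M := by
  rintro ⟨K, hMK, A, B, u, v, huv, rfl⟩
  exact hL ⟨t :: (A ++ u :: v :: B), h.trans' (hMK.cons' t),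
    ⟨t :: A, B, u, v, huv, rfl⟩⟩

end Aux2

section Defs

open Relation List

variable {Λ : Type u} {G : Λ → Type v} [∀ I, Group (G I)] (adj : Λ → Λ → Prop)

open scoped Classical

/-- `L` is shuffle-equivalent to a word starting with a syllable at vertex `I`. -/
def HasHead (I : Λ) (L : List (Syllable G)) : Prop :=
  ∃ (g : {g : G I // g ≠ 1}) (M : List (Syllable G)),
    ShuffleEquiv adj L ((⟨I, g⟩ : Syllable G) :: M)

/-- The initial part of the word `L` at the vertex `I`. -/
noncomputable def wordInit (I : Λ) (L : List (Syllable G)) : G I :=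
  if h : HasHead adj I L then h.choose.1 else 1

/-- A word `M` with `L ~ (initial syllable at I) :: M`, or `L` itself. -/
noncomputable def wordRest (I : Λ) (L : List (Syllable G)) : List (Syllable G) :=
  if h : HasHead adj I L then h.choose_spec.choose else L

variable {adj}

theorem wordInit_spec {I : Λ} {L : List (Syllable G)} (h : HasHead adj I L) :
    ∃ hne : wordInit adj I L ≠ 1,
      ShuffleEquiv adj L ((⟨I, ⟨wordInit adj I L, hne⟩⟩ : Syllable G) :: wordRest adj I L) := by
  rw [wordInit, dif_pos h, wordRest, dif_pos h]
  exact ⟨h.choose.2, h.choose_spec.choose_spec⟩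

theorem wordInit_neg {I : Λ} {L : List (Syllable G)} (h : ¬ HasHead adj I L) :
    wordInit adj I L = 1 ∧ wordRest adj I L = L := by
  rw [wordInit, dif_neg h, wordRest, dif_neg h]
  exact ⟨rfl, rfl⟩

theorem syl_eq_syl {I : Λ} {g g' : {g : G I // g ≠ 1}}
    (h : (⟨I, g⟩ : Syllable G) = ⟨I, g'⟩) : g = g' := by
  have := (Sigma.mk.inj_iff.1 h).2
  exact eq_of_heq this

/-- Uniqueness of heads at a vertex, for reduced words. -/
theorem head_unique (hsymm : Symmetric adj) (hirr : ∀ I : Λ, ¬ adj I I)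
    {I : Λ} {L M : List (Syllable G)} (hL : Reduced adj L) {g : {g : G I // g ≠ 1}}
    (h : ShuffleEquiv adj L ((⟨I, g⟩ : Syllable G) :: M)) :
    wordInit adj I L = g.1 ∧ ShuffleEquiv adj (wordRest adj I L) M := by
  have hh : HasHead adj I L := ⟨g, M, h⟩
  obtain ⟨hne, hspec⟩ := wordInit_spec hh
  have h2 : ShuffleEquiv adj ((⟨I, ⟨wordInit adj I L, hne⟩⟩ : Syllable G) :: wordRest adj I L)
      ((⟨I, g⟩ : Syllable G) :: M) := (hspec.symm' hsymm).trans' h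
  obtain ⟨A, B, heq, hA, hrest⟩ := shuffle_cons_decomp hsymm h2
  match A, heq with
  | [], heq =>
    injection heq with h1 h2
    refine ⟨(congrArg Subtype.val (syl_eq_syl h1)).symm, ?_⟩
    rw [h2]; simpa using hrest
  | a :: A₂, heq =>
    injection heq with h1 h2
    exfalso
    have ha := hA a (List.mem_cons_self)
    rw [← h1] at ha
    exact hirr I ha

theorem not_hasHead_rest (hsymm : Symmetric adj) {I : Λ} {L M : List (Syllable G)}
    (hL : Reduced adj L) {g : {g : G I // g ≠ 1}}
    (h : ShuffleEquiv adj L ((⟨I, g⟩ : Syllable G) :: M)) : ¬ HasHead adj I M := by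
  rintro ⟨g', M', hM⟩
  exact hL ⟨(⟨I, g⟩ : Syllable G) :: (⟨I, g'⟩ : Syllable G) :: M',
    h.trans' (hM.cons' _), ⟨[], M', ⟨I, g⟩, ⟨I, g'⟩, rfl, rfl⟩⟩

theorem hasHead_congr (hsymm : Symmetric adj) {I : Λ} {L L' : List (Syllable G)}
    (h : ShuffleEquiv adj L L') : HasHead adj I L ↔ HasHead adj I L' := by
  constructor
  · rintro ⟨g, M, hM⟩; exact ⟨g, M, (h.symm' hsymm).trans' hM⟩
  · rintro ⟨g, M, hM⟩; exact ⟨g, M, h.trans' hM⟩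

theorem wordInit_congr (hsymm : Symmetric adj) (hirr : ∀ I : Λ, ¬ adj I I)
    {I : Λ} {L L' : List (Syllable G)} (hL : Reduced adj L)
    (h : ShuffleEquiv adj L L') : wordInit adj I L = wordInit adj I L' := by
  by_cases hh : HasHead adj I L'
  · obtain ⟨hne, hspec⟩ := wordInit_spec hh
    exact (head_unique hsymm hirr hL (h.trans' hspec)).1
  · have hh2 : ¬ HasHead adj I L := by
      rw [hasHead_congr hsymm h]; exact hh
    rw [(wordInit_neg hh).1, (wordInit_neg hh2).1]

/-- a reduced word starting (up to shuffle) with an `I`-syllable, prepended by a new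
`I`-syllable, is amalgamable-equivalent; hence a cons on a headless word is reduced. -/
theorem reduced_cons (hsymm : Symmetric adj) (hirr : ∀ I : Λ, ¬ adj I I)
    {I : Λ} {L : List (Syllable G)} (hL : Reduced adj L) (hh : ¬ HasHead adj I L)
    (g : {g : G I // g ≠ 1}) : Reduced adj ((⟨I, g⟩ : Syllable G) :: L) := by
  rintro ⟨K, hK, A, B, u, v, huv, rfl⟩
  obtain ⟨A₀, B₀, heq, hA₀, hrest⟩ := shuffle_cons_decomp hsymm hK
  rcases append_cons_eq_append_cons_cons heq.symm with
    ⟨E, hC, hB⟩ | ⟨hA2, hs, hB⟩ | ⟨hA2, hs, hB⟩ | ⟨E, hA2, hD⟩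
  · -- A = A₀ ++ ⟨I,g⟩ :: E, B₀ = E ++ u :: v :: B
    rw [hB] at hrest
    exact hL ⟨A₀ ++ (E ++ u :: v :: B), hrest, ⟨A₀ ++ E, B, u, v, huv, by simp⟩⟩
  · -- A₀ = A, ⟨I,g⟩ = u, B₀ = v :: B
    rw [hB] at hrest
    obtain ⟨J, gv⟩ := v
    have hJ : I = J := by rw [← hs] at huv; exact huv
    subst hJ
    apply hh
    refine ⟨gv, A₀ ++ B, hrest.trans' (shuffle_front ?_)⟩
    intro w hw; exact hA₀ w hw
  · -- A₀ = A ++ [u], ⟨I,g⟩ = v, B₀ = B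
    have hu : u ∈ A₀ := by rw [hA2]; simp
    have h3 := hA₀ u hu
    rw [show u.1 = I from by rw [huv, ← hs]] at h3
    exact hirr I h3
  · -- A₀ = A ++ u :: v :: E, B = E ++ ⟨I,g⟩ :: B₀
    rw [hA2] at hrest
    exact hL ⟨A ++ u :: v :: (E ++ B₀), by simpa using hrest,
      ⟨A, E ++ B₀, u, v, huv, by simp⟩⟩

theorem ShuffleStep.reverse' (hsymm : Symmetric adj) {L L' : List (Syllable G)}
    (h : ShuffleStep adj L L') : ShuffleStep adj L.reverse L'.reverse := by
  obtain ⟨A, B, s, t, hadj, rfl, rfl⟩ := h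
  exact ⟨B.reverse, A.reverse, t, s, hsymm hadj, by simp, by simp⟩

theorem ShuffleEquiv.reverse' (hsymm : Symmetric adj) {L L' : List (Syllable G)}
    (h : ShuffleEquiv adj L L') : ShuffleEquiv adj L.reverse L'.reverse := by
  induction h with
  | refl => exact ReflTransGen.refl
  | tail _ hstep ih => exact ReflTransGen.tail ih (hstep.reverse' hsymm)

theorem Amalgamable.reverse' {K : List (Syllable G)} (h : Amalgamable K) :
    Amalgamable K.reverse := by
  obtain ⟨A, B, u, v, huv, rfl⟩ := h
  exact ⟨B.reverse, A.reverse, v, u, huv.symm, by simp⟩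

theorem Reduced.reverse' (hsymm : Symmetric adj) {L : List (Syllable G)}
    (h : Reduced adj L) : Reduced adj L.reverse := by
  rintro ⟨K, hK, hAm⟩
  refine h ⟨K.reverse, ?_, hAm.reverse'⟩
  have := hK.reverse' hsymm
  simpa using this

end Defs

section Act

open Relation List

variable {Λ : Type u} {G : Λ → Type v} [∀ I, Group (G I)] (adj : Λ → Λ → Prop)

open scoped Classical

theorem syl_congr {I : Λ} {a b : G I} (h : a = b) (ha : a ≠ 1) (hb : b ≠ 1) :
    (⟨I, ⟨a, ha⟩⟩ : Syllable G) = ⟨I, ⟨b, hb⟩⟩ := by subst h; rfl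

/-- Left multiplication of a reduced word by a letter `g ∈ G I`. -/
noncomputable def actW {I : Λ} (g : G I) (L : List (Syllable G)) : List (Syllable G) :=
  if hg : g = 1 then L
  else if h : HasHead adj I L then
    if hgt : g * (wordInit adj I L) = 1 then wordRest adj I L
    else (⟨I, ⟨g * wordInit adj I L, hgt⟩⟩ : Syllable G) :: wordRest adj I L
  else (⟨I, ⟨g, hg⟩⟩ : Syllable G) :: L

variable {adj}

theorem actW_one {I : Λ} (L : List (Syllable G)) : actW adj (1 : G I) L = L := by
  rw [actW, dif_pos rfl]

theorem actW_of_not_hasHead {I : Λ} {g : G I} (hg : g ≠ 1) {L : List (Syllable G)}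
    (h : ¬ HasHead adj I L) : actW adj g L = (⟨I, ⟨g, hg⟩⟩ : Syllable G) :: L := by
  rw [actW, dif_neg hg, dif_neg h]

theorem actW_cancel (hsymm : Symmetric adj) (hirr : ∀ I : Λ, ¬ adj I I)
    {I : Λ} {L M : List (Syllable G)} (hL : Reduced adj L) {g : G I} (hg : g ≠ 1)
    {t : {g : G I // g ≠ 1}} (h : ShuffleEquiv adj L ((⟨I, t⟩ : Syllable G) :: M))
    (hgt : g * t.1 = 1) : ShuffleEquiv adj (actW adj g L) M := by
  have hh : HasHead adj I L := ⟨t, M, h⟩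
  obtain ⟨hi, hr⟩ := head_unique hsymm hirr hL h
  rw [actW, dif_neg hg, dif_pos hh, dif_pos (by rw [hi]; exact hgt)]
  exact hr

theorem actW_amalg (hsymm : Symmetric adj) (hirr : ∀ I : Λ, ¬ adj I I)
    {I : Λ} {L M : List (Syllable G)} (hL : Reduced adj L) {g : G I} (hg : g ≠ 1)
    {t : {g : G I // g ≠ 1}} (h : ShuffleEquiv adj L ((⟨I, t⟩ : Syllable G) :: M))
    (hgt : g * t.1 ≠ 1) :
    ShuffleEquiv adj (actW adj g L) ((⟨I, ⟨g * t.1, hgt⟩⟩ : Syllable G) :: M) := by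
  have hh : HasHead adj I L := ⟨t, M, h⟩
  obtain ⟨hi, hr⟩ := head_unique hsymm hirr hL h
  rw [actW, dif_neg hg, dif_pos hh,
    dif_neg (show ¬ g * wordInit adj I L = 1 from by rw [hi]; exact hgt)]
  rw [syl_congr (show g * wordInit adj I L = g * t.1 from by rw [hi]) _ hgt]
  exact hr.cons' _

theorem actW_reduced (hsymm : Symmetric adj) (hirr : ∀ I : Λ, ¬ adj I I)
    {I : Λ} {L : List (Syllable G)} (hL : Reduced adj L) (g : G I) :
    Reduced adj (actW adj g L) := by
  by_cases hg : g = 1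
  · rw [hg, actW_one]; exact hL
  by_cases hh : HasHead adj I L
  · obtain ⟨hne, hspec⟩ := wordInit_spec hh
    have hR : Reduced adj (wordRest adj I L) := hL.tail hspec
    have hnR : ¬ HasHead adj I (wordRest adj I L) := not_hasHead_rest hsymm hL hspec
    rw [actW, dif_neg hg, dif_pos hh]
    by_cases hgt : g * wordInit adj I L = 1
    · rw [dif_pos hgt]; exact hR
    · rw [dif_neg hgt]; exact reduced_cons hsymm hirr hR hnR _
  · rw [actW_of_not_hasHead hg hh]
    exact reduced_cons hsymm hirr hL hh _

theorem actW_eval (hsymm : Symmetric adj) (hirr : ∀ I : Λ, ¬ adj I I)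
    {I : Λ} {L : List (Syllable G)} (hL : Reduced adj L) (g : G I) :
    evalWord adj G (actW adj g L) = mkOf adj G g * evalWord adj G L := by
  by_cases hg : g = 1
  · rw [hg, actW_one, mkOf_one, one_mul]
  by_cases hh : HasHead adj I L
  · obtain ⟨hne, hspec⟩ := wordInit_spec hh
    have heL : evalWord adj G L
        = mkOf adj G (wordInit adj I L) * evalWord adj G (wordRest adj I L) := by
      rw [hspec.eval hsymm, evalWord_cons]
    rw [actW, dif_neg hg, dif_pos hh]
    by_cases hgt : g * wordInit adj I L = 1
    · rw [dif_pos hgt, heL, ← mul_assoc, ← mkOf_mul, hgt, mkOf_one, one_mul]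
    · rw [dif_neg hgt, evalWord_cons, heL, ← mul_assoc, ← mkOf_mul]
  · rw [actW_of_not_hasHead hg hh, evalWord_cons]

theorem actW_congr (hsymm : Symmetric adj) (hirr : ∀ I : Λ, ¬ adj I I)
    {I : Λ} {L L' : List (Syllable G)} (hL : Reduced adj L) (hL' : Reduced adj L')
    (h : ShuffleEquiv adj L L') (g : G I) :
    ShuffleEquiv adj (actW adj g L) (actW adj g L') := by
  by_cases hg : g = 1
  · rw [hg, actW_one, actW_one]; exact h
  by_cases hh : HasHead adj I L'
  · obtain ⟨hne, hspec⟩ := wordInit_spec hh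
    have h2 : ShuffleEquiv adj L
        ((⟨I, ⟨wordInit adj I L', hne⟩⟩ : Syllable G) :: wordRest adj I L') :=
      h.trans' hspec
    by_cases hgt : g * wordInit adj I L' = 1
    · exact (actW_cancel hsymm hirr hL hg h2 hgt).trans'
        ((actW_cancel hsymm hirr hL' hg hspec hgt).symm' hsymm)
    · exact (actW_amalg hsymm hirr hL hg h2 hgt).trans'
        ((actW_amalg hsymm hirr hL' hg hspec hgt).symm' hsymm)
  · have hh2 : ¬ HasHead adj I L := by rw [hasHead_congr hsymm h]; exact hh
    rw [actW_of_not_hasHead hg hh2, actW_of_not_hasHead hg hh]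
    exact h.cons' _

theorem actW_mul (hsymm : Symmetric adj) (hirr : ∀ I : Λ, ¬ adj I I)
    {I : Λ} {L : List (Syllable G)} (hL : Reduced adj L) (g h : G I) :
    ShuffleEquiv adj (actW adj (g * h) L) (actW adj g (actW adj h L)) := by
  by_cases hg : g = 1
  · rw [hg, one_mul, actW_one]; exact ShuffleEquiv.refl' _
  by_cases hh : h = 1
  · rw [hh, mul_one, actW_one]; exact ShuffleEquiv.refl' _
  by_cases hH : HasHead adj I L
  · obtain ⟨hne, hspec⟩ := wordInit_spec hH
    have hRred : Reduced adj (wordRest adj I L) := hL.tail hspec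
    have hXred : Reduced adj (actW adj h L) := actW_reduced hsymm hirr hL h
    by_cases hht : h * wordInit adj I L = 1
    · -- h cancels the head
      have hX : ShuffleEquiv adj (actW adj h L) (wordRest adj I L) :=
        actW_cancel hsymm hirr hL hh hspec hht
      have hnR : ¬ HasHead adj I (wordRest adj I L) := not_hasHead_rest hsymm hL hspec
      have hnX : ¬ HasHead adj I (actW adj h L) := by
        rw [hasHead_congr hsymm hX]; exact hnR
      rw [actW_of_not_hasHead hg hnX]
      by_cases hgh : g * h = 1
      · -- g = h⁻¹ = w
        have hgw : wordInit adj I L = g := by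
          have h1 : g = h⁻¹ := eq_inv_of_mul_eq_one_left hgh
          have h2 : wordInit adj I L = h⁻¹ := eq_inv_of_mul_eq_one_right hht
          rw [h1, h2]
        rw [hgh, actW_one]
        refine hspec.trans' ?_
        rw [syl_congr hgw hne hg]
        exact (hX.symm' hsymm).cons' _
      · have := actW_amalg hsymm hirr hL hgh hspec (by
          rw [mul_assoc, hht, mul_one]; exact hg)
        refine this.trans' ?_
        rw [syl_congr (show (g * h) * wordInit adj I L = g from by
          rw [mul_assoc, hht, mul_one]) _ hg]
        exact (hX.symm' hsymm).cons' _
    · -- h amalgamates with the head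
      have hX : ShuffleEquiv adj (actW adj h L)
          ((⟨I, ⟨h * wordInit adj I L, hht⟩⟩ : Syllable G) :: wordRest adj I L) :=
        actW_amalg hsymm hirr hL hh hspec hht
      by_cases hg2 : g * (h * wordInit adj I L) = 1
      · have hRHS : ShuffleEquiv adj (actW adj g (actW adj h L)) (wordRest adj I L) :=
          actW_cancel hsymm hirr hXred hg hX hg2
        have hgh : g * h ≠ 1 := by
          intro he
          rw [← mul_assoc, he, one_mul] at hg2
          exact hne hg2
        have hLHS : ShuffleEquiv adj (actW adj (g * h) L) (wordRest adj I L) :=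
          actW_cancel hsymm hirr hL hgh hspec (by rw [mul_assoc]; exact hg2)
        exact hLHS.trans' (hRHS.symm' hsymm)
      · have hRHS := actW_amalg hsymm hirr hXred hg hX hg2
        by_cases hgh : g * h = 1
        · rw [hgh, actW_one]
          refine hspec.trans' ?_
          refine ShuffleEquiv.trans' ?_ (hRHS.symm' hsymm)
          rw [syl_congr (show wordInit adj I L = g * (h * wordInit adj I L) from by
            rw [← mul_assoc, hgh, one_mul]) hne hg2]
          exact ShuffleEquiv.refl' _
        · have hLHS := actW_amalg hsymm hirr hL hgh hspec (by
            rw [mul_assoc]; exact hg2)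
          refine hLHS.trans' ?_
          rw [syl_congr (mul_assoc g h (wordInit adj I L)) _ hg2]
          exact hRHS.symm' hsymm
  · -- no head at I
    have hX : actW adj h L = (⟨I, ⟨h, hh⟩⟩ : Syllable G) :: L :=
      actW_of_not_hasHead hh hH
    have hXred : Reduced adj (actW adj h L) := actW_reduced hsymm hirr hL h
    have hXdec : ShuffleEquiv adj (actW adj h L) ((⟨I, ⟨h, hh⟩⟩ : Syllable G) :: L) := by
      rw [hX]; exact ShuffleEquiv.refl' _
    by_cases hgh : g * h = 1
    · rw [hgh, actW_one]
      exact (actW_cancel hsymm hirr hXred hg hXdec hgh).symm' hsymm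
    · rw [actW_of_not_hasHead hgh hH]
      exact (actW_amalg hsymm hirr hXred hg hXdec hgh).symm' hsymm

theorem hasHead_cons_out (hsymm : Symmetric adj) {I : Λ} {t : Syllable G}
    (hne : t.1 ≠ I) {M : List (Syllable G)} (hh : HasHead adj I (t :: M)) :
    adj t.1 I ∧ HasHead adj I M := by
  obtain ⟨g, N, hN⟩ := hh
  obtain ⟨A, B, heq, hA, hrest⟩ := shuffle_cons_decomp hsymm (hN.symm' hsymm)
  match A, heq with
  | [], heq =>
    exfalso
    injection heq with h1 h2
    rw [h1] at hne
    exact hne rfl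
  | a :: A₂, heq =>
    injection heq with h1 h2
    subst h1
    constructor
    · exact hA t (List.mem_cons_self)
    · refine ⟨g, A₂ ++ B, ?_⟩
      rw [h2]
      exact shuffle_front fun u hu => hA u (List.mem_cons_of_mem _ hu)

theorem hasHead_cons_in (hsymm : Symmetric adj) {I J : Λ} (hadj : adj I J) {h : {h : G J // h ≠ 1}}
    {M : List (Syllable G)} (hh : HasHead adj I M) :
    HasHead adj I ((⟨J, h⟩ : Syllable G) :: M) := by
  obtain ⟨g, N, hN⟩ := hh
  refine ⟨g, (⟨J, h⟩ : Syllable G) :: N, ?_⟩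
  refine (hN.cons' _).trans' (ReflTransGen.single ?_)
  exact ⟨[], N, (⟨J, h⟩ : Syllable G), (⟨I, g⟩ : Syllable G), hsymm hadj, rfl, rfl⟩

theorem both_heads (hsymm : Symmetric adj) {I J : Λ} (hIJ : I ≠ J)
    {L M N : List (Syllable G)} {g : {g : G I // g ≠ 1}} {h : {h : G J // h ≠ 1}}
    (h1 : ShuffleEquiv adj L ((⟨I, g⟩ : Syllable G) :: M))
    (h2 : ShuffleEquiv adj L ((⟨J, h⟩ : Syllable G) :: N)) :
    adj J I ∧ ∃ K, ShuffleEquiv adj L ((⟨J, h⟩ : Syllable G) :: (⟨I, g⟩ : Syllable G) :: K) ∧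
      ShuffleEquiv adj M ((⟨J, h⟩ : Syllable G) :: K) ∧
      ShuffleEquiv adj N ((⟨I, g⟩ : Syllable G) :: K) := by
  have hc : ShuffleEquiv adj ((⟨I, g⟩ : Syllable G) :: M) ((⟨J, h⟩ : Syllable G) :: N) :=
    (h1.symm' hsymm).trans' h2
  obtain ⟨A, B, heq, hA, hrest⟩ := shuffle_cons_decomp hsymm hc
  match A, heq with
  | [], heq =>
    exfalso
    injection heq with ha hb
    exact hIJ (congrArg Sigma.fst ha).symm
  | a :: A₂, heq =>
    injection heq with ha hb
    subst ha
    have hadjJI : adj J I := hA _ (List.mem_cons_self)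
    refine ⟨hadjJI, A₂ ++ B, ?_, ?_, ?_⟩
    · refine h2.trans' ?_
      rw [hb]
      exact (shuffle_front fun u hu => hA u (List.mem_cons_of_mem _ hu)).cons' _
    · exact hrest
    · rw [hb]
      exact shuffle_front fun u hu => hA u (List.mem_cons_of_mem _ hu)

end Act

section Comm

open Relation List

variable {Λ : Type u} {G : Λ → Type v} [∀ I, Group (G I)] {adj : Λ → Λ → Prop}

/-- Auxiliary asymmetric case of commutation: head at `I`, no head at `J`. -/
theorem actW_comm_aux (hsymm : Symmetric adj) (hirr : ∀ I : Λ, ¬ adj I I)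
    {I J : Λ} (hadj : adj I J) {g : G I} {h : G J} (hg : g ≠ 1) (hh : h ≠ 1)
    {L : List (Syllable G)} (hL : Reduced adj L)
    (hHI : HasHead adj I L) (hHJ : ¬ HasHead adj J L) :
    ShuffleEquiv adj (actW adj g (actW adj h L)) (actW adj h (actW adj g L)) := by
  have hIJ : I ≠ J := fun e => hirr J (e ▸ hadj)
  obtain ⟨hne, hspec⟩ := wordInit_spec hHI
  have hRred : Reduced adj (wordRest adj I L) := hL.tail hspec
  -- the `h`-side: X = ⟨J,h⟩ :: L
  have hX : actW adj h L = (⟨J, ⟨h, hh⟩⟩ : Syllable G) :: L :=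
    actW_of_not_hasHead hh hHJ
  have hXred : Reduced adj (actW adj h L) := actW_reduced hsymm hirr hL h
  -- X has head wI at I with rest ⟨J,h⟩ :: wordRest
  have hXdec : ShuffleEquiv adj (actW adj h L)
      ((⟨I, ⟨wordInit adj I L, hne⟩⟩ : Syllable G) :: (⟨J, ⟨h, hh⟩⟩ : Syllable G)
        :: wordRest adj I L) := by
    rw [hX]
    refine (hspec.cons' _).trans' (ReflTransGen.single ?_)
    exact ⟨[], wordRest adj I L, (⟨J, ⟨h, hh⟩⟩ : Syllable G),
      (⟨I, ⟨wordInit adj I L, hne⟩⟩ : Syllable G), hsymm hadj, rfl, rfl⟩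
  -- no J-head on wordRest-side lists
  have hnJR : ¬ HasHead adj J (wordRest adj I L) := by
    intro hhd
    exact hHJ ((hasHead_congr hsymm hspec).2 (hasHead_cons_in hsymm (hsymm hadj) hhd))
  by_cases hgw : g * wordInit adj I L = 1
  · -- g cancels the I-head
    have h1 : ShuffleEquiv adj (actW adj g (actW adj h L))
        ((⟨J, ⟨h, hh⟩⟩ : Syllable G) :: wordRest adj I L) :=
      actW_cancel hsymm hirr hXred hg hXdec hgw
    have hY : ShuffleEquiv adj (actW adj g L) (wordRest adj I L) :=
      actW_cancel hsymm hirr hL hg hspec hgw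
    have hYred : Reduced adj (actW adj g L) := actW_reduced hsymm hirr hL g
    have hnJY : ¬ HasHead adj J (actW adj g L) := by
      rw [hasHead_congr hsymm hY]; exact hnJR
    rw [actW_of_not_hasHead hh hnJY]
    exact h1.trans' ((hY.cons' _).symm' hsymm)
  · -- g amalgamates with the I-head
    have h1 : ShuffleEquiv adj (actW adj g (actW adj h L))
        ((⟨I, ⟨g * wordInit adj I L, hgw⟩⟩ : Syllable G) :: (⟨J, ⟨h, hh⟩⟩ : Syllable G)
          :: wordRest adj I L) :=
      actW_amalg hsymm hirr hXred hg hXdec hgw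
    have hY : ShuffleEquiv adj (actW adj g L)
        ((⟨I, ⟨g * wordInit adj I L, hgw⟩⟩ : Syllable G) :: wordRest adj I L) :=
      actW_amalg hsymm hirr hL hg hspec hgw
    have hYred : Reduced adj (actW adj g L) := actW_reduced hsymm hirr hL g
    have hnJY : ¬ HasHead adj J (actW adj g L) := by
      intro hhd
      have := (hasHead_congr hsymm hY).1 hhd
      have := (hasHead_cons_out hsymm (show (⟨I, ⟨g * wordInit adj I L, hgw⟩⟩ :
        Syllable G).1 ≠ J from hIJ) this).2
      exact hnJR this
    rw [actW_of_not_hasHead hh hnJY]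
    refine h1.trans' ?_
    refine ShuffleEquiv.trans' (ReflTransGen.single ?_) ((hY.cons' _).symm' hsymm)
    exact ⟨[], wordRest adj I L, (⟨I, ⟨g * wordInit adj I L, hgw⟩⟩ : Syllable G),
      (⟨J, ⟨h, hh⟩⟩ : Syllable G), hadj, rfl, rfl⟩

theorem actW_comm (hsymm : Symmetric adj) (hirr : ∀ I : Λ, ¬ adj I I)
    {I J : Λ} (hadj : adj I J) (g : G I) (h : G J)
    {L : List (Syllable G)} (hL : Reduced adj L) :
    ShuffleEquiv adj (actW adj g (actW adj h L)) (actW adj h (actW adj g L)) := by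
  have hIJ : I ≠ J := fun e => hirr J (e ▸ hadj)
  by_cases hg : g = 1
  · rw [hg, actW_one, actW_one]; exact ShuffleEquiv.refl' _
  by_cases hh : h = 1
  · rw [hh, actW_one, actW_one]; exact ShuffleEquiv.refl' _
  by_cases hHI : HasHead adj I L <;> by_cases hHJ : HasHead adj J L
  · -- both heads
    obtain ⟨hneI, hspecI⟩ := wordInit_spec hHI
    obtain ⟨hneJ, hspecJ⟩ := wordInit_spec hHJ
    obtain ⟨hadjJI, K, hLK, hMK, hNK⟩ := both_heads hsymm hIJ hspecI hspecJ
    -- L ~ ⟨J,wJ⟩ :: ⟨I,wI⟩ :: K and L ~ ⟨I,wI⟩ :: ⟨J,wJ⟩ :: K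
    have hLK' : ShuffleEquiv adj L ((⟨I, ⟨wordInit adj I L, hneI⟩⟩ : Syllable G) ::
        (⟨J, ⟨wordInit adj J L, hneJ⟩⟩ : Syllable G) :: K) := by
      refine hLK.trans' (ReflTransGen.single ?_)
      exact ⟨[], K, _, _, hadjJI, rfl, rfl⟩
    have hXred : Reduced adj (actW adj h L) := actW_reduced hsymm hirr hL h
    have hYred : Reduced adj (actW adj g L) := actW_reduced hsymm hirr hL g
    by_cases hc : h * wordInit adj J L = 1 <;> by_cases hc2 : g * wordInit adj I L = 1
    · -- both cancel
      have hX : ShuffleEquiv adj (actW adj h L)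
          ((⟨I, ⟨wordInit adj I L, hneI⟩⟩ : Syllable G) :: K) :=
        actW_cancel hsymm hirr hL hh hLK hc
      have hY : ShuffleEquiv adj (actW adj g L)
          ((⟨J, ⟨wordInit adj J L, hneJ⟩⟩ : Syllable G) :: K) :=
        actW_cancel hsymm hirr hL hg hLK' hc2
      have h1 : ShuffleEquiv adj (actW adj g (actW adj h L)) K :=
        actW_cancel hsymm hirr hXred hg hX hc2
      have h2 : ShuffleEquiv adj (actW adj h (actW adj g L)) K :=
        actW_cancel hsymm hirr hYred hh hY hc
      exact h1.trans' (h2.symm' hsymm)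
    · -- h cancels, g amalgamates
      have hX : ShuffleEquiv adj (actW adj h L)
          ((⟨I, ⟨wordInit adj I L, hneI⟩⟩ : Syllable G) :: K) :=
        actW_cancel hsymm hirr hL hh hLK hc
      have hY : ShuffleEquiv adj (actW adj g L)
          ((⟨J, ⟨wordInit adj J L, hneJ⟩⟩ : Syllable G) ::
            (⟨I, ⟨g * wordInit adj I L, hc2⟩⟩ : Syllable G) :: K) := by
        refine (actW_amalg hsymm hirr hL hg hspecI hc2).trans' ?_
        refine (hMK.cons' _).trans' (ReflTransGen.single ?_)
        exact ⟨[], K, _, _, hadj, rfl, rfl⟩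
      have h1 : ShuffleEquiv adj (actW adj g (actW adj h L))
          ((⟨I, ⟨g * wordInit adj I L, hc2⟩⟩ : Syllable G) :: K) :=
        actW_amalg hsymm hirr hXred hg hX hc2
      have h2 : ShuffleEquiv adj (actW adj h (actW adj g L))
          ((⟨I, ⟨g * wordInit adj I L, hc2⟩⟩ : Syllable G) :: K) :=
        actW_cancel hsymm hirr hYred hh hY hc
      exact h1.trans' (h2.symm' hsymm)
    · -- g cancels, h amalgamates
      have hX : ShuffleEquiv adj (actW adj h L)
          ((⟨I, ⟨wordInit adj I L, hneI⟩⟩ : Syllable G) ::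
            (⟨J, ⟨h * wordInit adj J L, hc⟩⟩ : Syllable G) :: K) := by
        refine (actW_amalg hsymm hirr hL hh hspecJ hc).trans' ?_
        refine (hNK.cons' _).trans' (ReflTransGen.single ?_)
        exact ⟨[], K, _, _, hadjJI, rfl, rfl⟩
      have hY : ShuffleEquiv adj (actW adj g L)
          ((⟨J, ⟨wordInit adj J L, hneJ⟩⟩ : Syllable G) :: K) :=
        actW_cancel hsymm hirr hL hg hLK' hc2
      have h1 : ShuffleEquiv adj (actW adj g (actW adj h L))
          ((⟨J, ⟨h * wordInit adj J L, hc⟩⟩ : Syllable G) :: K) :=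
        actW_cancel hsymm hirr hXred hg hX hc2
      have h2 : ShuffleEquiv adj (actW adj h (actW adj g L))
          ((⟨J, ⟨h * wordInit adj J L, hc⟩⟩ : Syllable G) :: K) :=
        actW_amalg hsymm hirr hYred hh hY hc
      exact h1.trans' (h2.symm' hsymm)
    · -- both amalgamate
      have hX : ShuffleEquiv adj (actW adj h L)
          ((⟨I, ⟨wordInit adj I L, hneI⟩⟩ : Syllable G) ::
            (⟨J, ⟨h * wordInit adj J L, hc⟩⟩ : Syllable G) :: K) := by
        refine (actW_amalg hsymm hirr hL hh hspecJ hc).trans' ?_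
        refine (hNK.cons' _).trans' (ReflTransGen.single ?_)
        exact ⟨[], K, _, _, hadjJI, rfl, rfl⟩
      have hY : ShuffleEquiv adj (actW adj g L)
          ((⟨J, ⟨wordInit adj J L, hneJ⟩⟩ : Syllable G) ::
            (⟨I, ⟨g * wordInit adj I L, hc2⟩⟩ : Syllable G) :: K) := by
        refine (actW_amalg hsymm hirr hL hg hspecI hc2).trans' ?_
        refine (hMK.cons' _).trans' (ReflTransGen.single ?_)
        exact ⟨[], K, _, _, hadj, rfl, rfl⟩
      have h1 : ShuffleEquiv adj (actW adj g (actW adj h L))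
          ((⟨I, ⟨g * wordInit adj I L, hc2⟩⟩ : Syllable G) ::
            (⟨J, ⟨h * wordInit adj J L, hc⟩⟩ : Syllable G) :: K) :=
        actW_amalg hsymm hirr hXred hg hX hc2
      have h2 : ShuffleEquiv adj (actW adj h (actW adj g L))
          ((⟨J, ⟨h * wordInit adj J L, hc⟩⟩ : Syllable G) ::
            (⟨I, ⟨g * wordInit adj I L, hc2⟩⟩ : Syllable G) :: K) :=
        actW_amalg hsymm hirr hYred hh hY hc
      refine h1.trans' (ShuffleEquiv.trans' (ReflTransGen.single ?_) (h2.symm' hsymm))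
      exact ⟨[], K, _, _, hadj, rfl, rfl⟩
  · exact actW_comm_aux hsymm hirr hadj hg hh hL hHI hHJ
  · exact (actW_comm_aux hsymm hirr (hsymm hadj) hh hg hL hHJ hHI).symm' hsymm
  · -- neither head
    have hX : actW adj h L = (⟨J, ⟨h, hh⟩⟩ : Syllable G) :: L :=
      actW_of_not_hasHead hh hHJ
    have hY : actW adj g L = (⟨I, ⟨g, hg⟩⟩ : Syllable G) :: L :=
      actW_of_not_hasHead hg hHI
    have hnX : ¬ HasHead adj I (actW adj h L) := by
      rw [hX]
      intro hhd
      exact hHI (hasHead_cons_out hsymm (show ((⟨J, ⟨h, hh⟩⟩ : Syllable G)).1 ≠ I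
        from fun e => hIJ e.symm) hhd).2
    have hnY : ¬ HasHead adj J (actW adj g L) := by
      rw [hY]
      intro hhd
      exact hHJ (hasHead_cons_out hsymm (show ((⟨I, ⟨g, hg⟩⟩ : Syllable G)).1 ≠ J
        from hIJ) hhd).2
    rw [actW_of_not_hasHead hg hnX, actW_of_not_hasHead hh hnY, hX, hY]
    exact ReflTransGen.single ⟨[], L, _, _, hadj, rfl, rfl⟩

end Comm

/-- The setoid of reduced words modulo shuffles. -/
def rwSetoid {Λ : Type u} (adj : Λ → Λ → Prop) (G : Λ → Type v) [∀ I, Group (G I)]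
    (hsymm : Symmetric adj) : Setoid {L : List (Syllable G) // Reduced adj L} :=
  ⟨fun L M => ShuffleEquiv adj L.1 M.1,
    ⟨fun _ => ShuffleEquiv.refl' _, fun h => h.symm' hsymm, fun h1 h2 => h1.trans' h2⟩⟩

section NFQ

open Relation List

variable {Λ : Type u} {G : Λ → Type v} [∀ I, Group (G I)]

variable {adj : Λ → Λ → Prop}
variable (hsymm : Symmetric adj) (hirr : ∀ I : Λ, ¬ adj I I)

/-- The permutation of normal forms induced by a letter. -/
noncomputable def permNF {I : Λ} (g : G I) :
    Equiv.Perm (Quotient (rwSetoid adj G hsymm)) where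
  toFun := Quotient.lift
    (fun L => Quotient.mk (rwSetoid adj G hsymm)
      ⟨actW adj g L.1, actW_reduced hsymm hirr L.2 g⟩)
    (fun a b hab => Quotient.sound (actW_congr hsymm hirr a.2 b.2 hab g))
  invFun := Quotient.lift
    (fun L => Quotient.mk (rwSetoid adj G hsymm)
      ⟨actW adj g⁻¹ L.1, actW_reduced hsymm hirr L.2 g⁻¹⟩)
    (fun a b hab => Quotient.sound (actW_congr hsymm hirr a.2 b.2 hab g⁻¹))
  left_inv := by
    refine Quotient.ind (fun L => ?_)
    refine Quotient.sound ?_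
    have h1 := (actW_mul hsymm hirr L.2 g⁻¹ g).symm' hsymm
    rw [inv_mul_cancel, actW_one] at h1
    exact h1
  right_inv := by
    refine Quotient.ind (fun L => ?_)
    refine Quotient.sound ?_
    have h1 := (actW_mul hsymm hirr L.2 g g⁻¹).symm' hsymm
    rw [mul_inv_cancel, actW_one] at h1
    exact h1

/-- The homomorphism from a vertex group to permutations of normal forms. -/
noncomputable def homNF (I : Λ) : G I →* Equiv.Perm (Quotient (rwSetoid adj G hsymm)) where
  toFun g := permNF hsymm hirr g
  map_one' := by
    refine Equiv.ext fun q => ?_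
    induction q using Quotient.ind with
    | _ L =>
      refine Quotient.sound ?_
      show ShuffleEquiv adj (actW adj (1 : G I) L.1) L.1
      rw [actW_one]
      exact ShuffleEquiv.refl' _
  map_mul' g h := by
    refine Equiv.ext fun q => ?_
    induction q using Quotient.ind with
    | _ L =>
      rw [Equiv.Perm.mul_apply]
      exact Quotient.sound (actW_mul hsymm hirr L.2 g h)

/-- The homomorphism from the free product to permutations of normal forms. -/
noncomputable def coprodHom : Monoid.CoprodI G →* Equiv.Perm (Quotient (rwSetoid adj G hsymm)) :=
  Monoid.CoprodI.lift (fun I => homNF hsymm hirr I)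

theorem coprodHom_comm {I J : Λ} (hadj : adj I J) (a : G I) (b : G J) :
    coprodHom hsymm hirr (Monoid.CoprodI.of a) * coprodHom hsymm hirr (Monoid.CoprodI.of b)
      = coprodHom hsymm hirr (Monoid.CoprodI.of b) *
        coprodHom hsymm hirr (Monoid.CoprodI.of a) := by
  rw [coprodHom, Monoid.CoprodI.lift_of, Monoid.CoprodI.lift_of]
  refine Equiv.ext fun q => ?_
  induction q using Quotient.ind with
  | _ L =>
    rw [Equiv.Perm.mul_apply, Equiv.Perm.mul_apply]
    exact Quotient.sound (actW_comm hsymm hirr hadj a b L.2)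

/-- The homomorphism from the graph product to permutations of normal forms. -/
noncomputable def graphHom : GraphProduct adj G →* Equiv.Perm (Quotient (rwSetoid adj G hsymm)) := by
  refine QuotientGroup.lift _ (coprodHom hsymm hirr) ?_
  refine Subgroup.normalClosure_le_normal ?_
  rintro y ⟨I, J, a, b, hadj, rfl⟩
  rw [SetLike.mem_coe, MonoidHom.mem_ker, map_mul, map_mul, map_mul, map_inv, map_inv,
    coprodHom_comm hsymm hirr hadj a b]
  group

theorem graphHom_mkOf {I : Λ} (g : G I) :
    graphHom hsymm hirr (mkOf adj G g) = permNF hsymm hirr g := by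
  have h1 : graphHom hsymm hirr (mkOf adj G g)
      = coprodHom hsymm hirr (Monoid.CoprodI.of g) := rfl
  rw [h1, coprodHom, Monoid.CoprodI.lift_of]
  rfl

theorem green_aux : ∀ (L : List (Syllable G)) (hL : Reduced adj L),
    graphHom hsymm hirr (evalWord adj G L)
      (Quotient.mk (rwSetoid adj G hsymm) ⟨[], reduced_nil⟩)
    = Quotient.mk (rwSetoid adj G hsymm) ⟨L, hL⟩ := by
  intro L
  induction L with
  | nil =>
    intro hL
    show graphHom hsymm hirr 1 _ = _
    rw [map_one]
    rfl
  | cons s L ih =>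
    intro hL
    have hLred : Reduced adj L :=
      hL.tail (show ShuffleEquiv adj (s :: L)
        ((⟨s.1, s.2⟩ : Syllable G) :: L) from ShuffleEquiv.refl' _)
    have hnh : ¬ HasHead adj s.1 L :=
      not_hasHead_rest hsymm hL (show ShuffleEquiv adj (s :: L)
        ((⟨s.1, s.2⟩ : Syllable G) :: L) from ShuffleEquiv.refl' _)
    rw [evalWord_cons, map_mul, Equiv.Perm.mul_apply, ih hLred, graphHom_mkOf]
    refine Quotient.sound ?_
    show ShuffleEquiv adj (actW adj s.2.1 L) (s :: L)
    rw [actW_of_not_hasHead s.2.2 hnh]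
    exact ShuffleEquiv.refl' _

/-- **Green's theorem**: two reduced expressions of the same element of the graph
product are shuffle equivalent. -/
theorem green (hsymm : Symmetric adj) (hirr : ∀ I : Λ, ¬ adj I I)
    {L L' : List (Syllable G)} (hL : Reduced adj L) (hL' : Reduced adj L')
    (he : evalWord adj G L = evalWord adj G L') : ShuffleEquiv adj L L' := by
  have h1 := green_aux hsymm hirr L hL
  rw [he, green_aux hsymm hirr L' hL'] at h1
  exact (Quotient.exact h1 : ShuffleEquiv adj L' L).symm' hsymm

end NFQ

section AppendLemmas

open Relation List

variable {Λ : Type u} {G : Λ → Type v} [∀ I, Group (G I)] {adj : Λ → Λ → Prop}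

theorem concat_inj' {α : Type*} {X Y : List α} {a b : α} (h : X ++ [a] = Y ++ [b]) :
    X = Y ∧ a = b := by
  have h2 := congrArg List.reverse h
  simp only [List.reverse_append, List.reverse_singleton, List.singleton_append] at h2
  injection h2 with h3 h4
  exact ⟨List.reverse_injective h4, h3⟩

theorem hasHead_mem (hsymm : Symmetric adj) {I : Λ} {L : List (Syllable G)}
    (h : HasHead adj I L) : ∃ s ∈ L, Sigma.fst s = I := by
  obtain ⟨g, M, hM⟩ := h
  exact ⟨⟨I, g⟩, hM.perm.mem_iff.2 (List.mem_cons_self), rfl⟩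

theorem hasLast_spec (hsymm : Symmetric adj) {J : Λ} {L : List (Syllable G)}
    (h : HasHead adj J L.reverse) :
    ∃ (g : {g : G J // g ≠ 1}) (M : List (Syllable G)),
      ShuffleEquiv adj L (M ++ ([⟨J, g⟩] : List (Syllable G))) := by
  obtain ⟨g, M, hM⟩ := h
  refine ⟨g, M.reverse, ?_⟩
  have h2 := hM.reverse' hsymm
  simpa using h2

theorem head_extract_append (hsymm : Symmetric adj) {I : Λ} {u : Syllable G}
    {M N : List (Syllable G)} {s : {g : G I // g ≠ 1}}
    (h : ShuffleEquiv adj (M ++ [u]) ((⟨I, s⟩ : Syllable G) :: N))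
    (hexc : u.1 ≠ I ∨ ¬ ∀ w ∈ M, adj w.1 I) :
    ∃ K : List (Syllable G), ShuffleEquiv adj M ((⟨I, s⟩ : Syllable G) :: K) := by
  set x : Syllable G := (⟨I, s⟩ : Syllable G) with hx
  obtain ⟨A, B, heq, hA, hrest⟩ := shuffle_cons_decomp hsymm (h.symm' hsymm)
  rcases B.eq_nil_or_concat with rfl | ⟨B₀, c, rfl⟩
  · exfalso
    obtain ⟨hAM, hsu⟩ := concat_inj' heq
    rcases hexc with hne | hnall
    · exact hne (by rw [hsu, hx])
    · refine hnall ?_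
      intro w hw
      rw [hAM] at hw
      exact hA w hw
  · rw [List.concat_eq_append] at heq
    have heq2 : (A ++ x :: B₀) ++ [c] = M ++ [u] := by
      rw [heq]; simp
    obtain ⟨hAM, hcu⟩ := concat_inj' heq2
    refine ⟨A ++ B₀, ?_⟩
    rw [← hAM]
    exact shuffle_front hA

theorem wordInit_append_right (hsymm : Symmetric adj) (hirr : ∀ I : Λ, ¬ adj I I)
    {I : Λ} {u : Syllable G} {M : List (Syllable G)}
    (hredM : Reduced adj M) (hred' : Reduced adj (M ++ [u]))
    (hexc : u.1 ≠ I ∨ ¬ ∀ w ∈ M, adj w.1 I) :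
    wordInit adj I (M ++ [u]) = wordInit adj I M := by
  by_cases hh : HasHead adj I (M ++ [u])
  · obtain ⟨hne, hspec⟩ := wordInit_spec hh
    obtain ⟨K, hshuf⟩ := head_extract_append hsymm hspec hexc
    exact (head_unique hsymm hirr hredM hshuf).1.symm
  · have hh2 : ¬ HasHead adj I M := by
      intro ⟨g, N, hN⟩
      exact hh ⟨g, N ++ [u], hN.append_right' [u]⟩
    rw [(wordInit_neg hh).1, (wordInit_neg hh2).1]

end AppendLemmas

section InitLemmas

open Relation List

variable {Λ : Type u} {G : Λ → Type v} [∀ I, Group (G I)] {adj : Λ → Λ → Prop}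

theorem initialAt_shuffle {L : List (Syllable G)} {i : Fin L.length}
    (h : InitialAt adj L i) :
    ShuffleEquiv adj L (L.get i :: (L.take i ++ L.drop (i + 1))) := by
  have hsplit : L = L.take i ++ (L.get i :: L.drop (i + 1)) := by
    conv_lhs => rw [← List.take_append_drop i L]
    rw [List.drop_eq_getElem_cons i.2]
    rfl
  have hadj : ∀ u ∈ L.take (i : ℕ), adj u.1 (L.get i).1 := by
    intro u hu
    rw [List.mem_take_iff_getElem] at hu
    obtain ⟨j, hj, rfl⟩ := hu
    have hj2 : j < L.length := lt_of_lt_of_le hj (by simp)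
    have hji : j < (i : ℕ) := lt_of_lt_of_le hj (by simp)
    exact h ⟨j, hj2⟩ hji
  conv_lhs => rw [hsplit]
  exact shuffle_front hadj

theorem head_initialAt (hsymm : Symmetric adj) {L M : List (Syllable G)} {t : Syllable G}
    (h : ShuffleEquiv adj L (t :: M)) :
    ∃ i : Fin L.length, InitialAt adj L i ∧ L.get i = t := by
  obtain ⟨A, B, heq, hA, -⟩ := shuffle_cons_decomp hsymm (h.symm' hsymm)
  subst heq
  have hlen : A.length < (A ++ t :: B).length := by simp
  have h2 : (A ++ t :: B).get ⟨A.length, hlen⟩ = t := by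
    simp only [List.get_eq_getElem]
    rw [List.getElem_append_right (le_refl A.length)]
    simp
  refine ⟨⟨A.length, hlen⟩, ?_, h2⟩
  intro j hji
  have hj : (j : ℕ) < A.length := hji
  have h1 : (A ++ t :: B).get j = A[(j : ℕ)] := by
    simp only [List.get_eq_getElem]
    exact List.getElem_append_left hj
  rw [h1, h2]
  exact hA _ (List.getElem_mem hj)

theorem eval_rest (hsymm : Symmetric adj) {I : Λ} {L : List (Syllable G)} :
    evalWord adj G L = mkOf adj G (wordInit adj I L) * evalWord adj G (wordRest adj I L) := by
  by_cases hh : HasHead adj I L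
  · obtain ⟨hne, hspec⟩ := wordInit_spec hh
    rw [hspec.eval hsymm, evalWord_cons]
  · rw [(wordInit_neg hh).1, (wordInit_neg hh).2, mkOf_one, one_mul]

theorem rest_reduced {L : List (Syllable G)} (hL : Reduced adj L) {I : Λ} : Reduced adj (wordRest adj I L) := by
  by_cases hh : HasHead adj I L
  · obtain ⟨hne, hspec⟩ := wordInit_spec hh
    exact hL.tail hspec
  · rw [(wordInit_neg hh).2]; exact hL

theorem rest_mem (hsymm : Symmetric adj) {I : Λ} {L : List (Syllable G)} {s : Syllable G}
    (hs : s ∈ wordRest adj I L) : s ∈ L := by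
  by_cases hh : HasHead adj I L
  · obtain ⟨hne, hspec⟩ := wordInit_spec hh
    exact hspec.perm.mem_iff.2 (List.mem_cons_of_mem _ hs)
  · rw [(wordInit_neg hh).2] at hs; exact hs

end InitLemmas

section Step

open Relation List

variable {Λ : Type u} {G : Λ → Type v} [∀ I, Group (G I)] {adj : Λ → Λ → Prop}

/-- All syllables of `L` are positive. -/
def AllPos (Pc : ∀ I, Submonoid (G I)) (L : List (Syllable G)) : Prop :=
  ∀ s ∈ L, s.2.1 ∈ Pc s.1

theorem step_lemma (hsymm : Symmetric adj) (hirr : ∀ I : Λ, ¬ adj I I)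
    {Pc : ∀ I, Submonoid (G I)} (hpo : ∀ I, IsPoGroup (Pc I))
    {J : Λ} {q : G J} (hq : q ∈ Pc J) (hqne : q ≠ 1)
    {L : List (Syllable G)} (hL : Reduced adj L) (hpos : AllPos Pc L) :
    ∃ L', Reduced adj L' ∧ AllPos Pc L' ∧
      evalWord adj G L' = evalWord adj G L * mkOf adj G q ∧
      (∀ s ∈ L, ∃ s' ∈ L', Sigma.fst s' = Sigma.fst s) ∧
      (∀ I, I ≠ J → wordInit adj I L' = wordInit adj I L) ∧
      ((wordInit adj J L)⁻¹ * wordInit adj J L' ∈ Pc J) ∧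
      (wordInit adj J L' = wordInit adj J L ∨ ∀ s ∈ wordRest adj J L, adj J s.1) := by
  by_cases hlast : HasHead adj J L.reverse
  · -- L ends (up to shuffle) with a J-syllable ⟨J,g⟩, which amalgamates with q
    obtain ⟨g, M, hLM⟩ := hasLast_spec hsymm hlast
    have hMt : Reduced adj (M ++ ([⟨J, g⟩] : List (Syllable G))) := hL.of_shuffle hLM
    have h1 : Reduced adj ((⟨J, g⟩ : Syllable G) :: M.reverse) := by
      have h0 := hMt.reverse' hsymm
      simpa using h0
    have hMrev : Reduced adj M.reverse := h1.tail (ShuffleEquiv.refl' _)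
    have hMred : Reduced adj M := by
      have h0 := hMrev.reverse' hsymm
      simpa using h0
    have hnlM : ¬ HasHead adj J M.reverse := not_hasHead_rest hsymm h1 (ShuffleEquiv.refl' _)
    have hgP : g.1 ∈ Pc J := by
      have hmem : (⟨J, g⟩ : Syllable G) ∈ L := hLM.perm.mem_iff.2 (by simp)
      exact hpos _ hmem
    have hgq : g.1 * q ≠ 1 := by
      intro he
      have h2 : (g.1)⁻¹ = q := inv_eq_of_mul_eq_one_right he
      exact g.2 (hpo J g.1 hgP (h2 ▸ hq))
    have hred' : Reduced adj (M ++ ([⟨J, ⟨g.1 * q, hgq⟩⟩] : List (Syllable G))) := by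
      have h4 := reduced_cons hsymm hirr hMrev hnlM ⟨g.1 * q, hgq⟩
      have h5 := h4.reverse' hsymm
      simpa using h5
    refine ⟨M ++ ([⟨J, ⟨g.1 * q, hgq⟩⟩] : List (Syllable G)), hred', ?_, ?_, ?_, ?_, ?_⟩
    · -- AllPos
      intro s hs
      rcases List.mem_append.1 hs with hs | hs
      · exact hpos s (hLM.perm.mem_iff.2 (List.mem_append.2 (Or.inl hs)))
      · rcases List.mem_singleton.1 hs with rfl
        exact Submonoid.mul_mem _ hgP hq
    · -- eval
      rw [evalWord_append, evalWord_cons, evalWord_nil, hLM.eval hsymm, evalWord_append,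
        evalWord_cons, evalWord_nil]
      show evalWord adj G M * (mkOf adj G (g.1 * q) * 1)
        = evalWord adj G M * (mkOf adj G g.1 * 1) * mkOf adj G q
      rw [mkOf_mul]
      group
    · -- vertices
      intro s hs
      rcases List.mem_append.1 (hLM.perm.mem_iff.1 hs) with hs2 | hs2
      · exact ⟨s, List.mem_append.2 (Or.inl hs2), rfl⟩
      · rcases List.mem_singleton.1 hs2 with rfl
        exact ⟨⟨J, ⟨g.1 * q, hgq⟩⟩, List.mem_append.2 (Or.inr (by simp)), rfl⟩
    · -- wordInit at I ≠ J
      intro I hIJ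
      have e1 : wordInit adj I L = wordInit adj I (M ++ ([⟨J, g⟩] : List (Syllable G))) :=
        wordInit_congr hsymm hirr hL hLM
      have e2 : wordInit adj I (M ++ ([⟨J, g⟩] : List (Syllable G))) = wordInit adj I M :=
        wordInit_append_right hsymm hirr hMred hMt (Or.inl (Ne.symm hIJ))
      have e3 : wordInit adj I (M ++ ([⟨J, ⟨g.1 * q, hgq⟩⟩] : List (Syllable G)))
          = wordInit adj I M :=
        wordInit_append_right hsymm hirr hMred hred' (Or.inl (Ne.symm hIJ))
      rw [e1, e2, e3]
    · -- at J
      by_cases hall : ∀ w ∈ M, adj w.1 J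
      · have hLt : ShuffleEquiv adj L ((⟨J, g⟩ : Syllable G) :: M) := by
          refine hLM.trans' ?_
          have h5 := shuffle_front (B := ([] : List (Syllable G)))
            (s := (⟨J, g⟩ : Syllable G)) (fun w hw => hall w hw)
          simpa using h5
        have hLt' : ShuffleEquiv adj (M ++ ([⟨J, ⟨g.1 * q, hgq⟩⟩] : List (Syllable G)))
            ((⟨J, ⟨g.1 * q, hgq⟩⟩ : Syllable G) :: M) := by
          have h5 := shuffle_front (B := ([] : List (Syllable G)))
            (s := (⟨J, ⟨g.1 * q, hgq⟩⟩ : Syllable G)) (fun w hw => hall w hw)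
          simpa using h5
        obtain ⟨hval, hrest⟩ := head_unique hsymm hirr hL hLt
        obtain ⟨hval', hrest'⟩ := head_unique hsymm hirr hred' hLt'
        constructor
        · rw [hval, hval', inv_mul_cancel_left]
          exact hq
        · refine Or.inr ?_
          intro s hs
          exact hsymm (hall s (hrest.perm.mem_iff.1 hs))
      · have e1 : wordInit adj J L = wordInit adj J (M ++ ([⟨J, g⟩] : List (Syllable G))) :=
          wordInit_congr hsymm hirr hL hLM
        have e2 : wordInit adj J (M ++ ([⟨J, g⟩] : List (Syllable G))) = wordInit adj J M :=
          wordInit_append_right hsymm hirr hMred hMt (Or.inr hall)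
        have e3 : wordInit adj J (M ++ ([⟨J, ⟨g.1 * q, hgq⟩⟩] : List (Syllable G)))
            = wordInit adj J M :=
          wordInit_append_right hsymm hirr hMred hred' (Or.inr hall)
        refine ⟨?_, Or.inl (by rw [e1, e2, e3])⟩
        rw [e1, e2, e3, inv_mul_cancel]
        exact Submonoid.one_mem _
  · -- q is appended at the end
    have hred' : Reduced adj (L ++ ([⟨J, ⟨q, hqne⟩⟩] : List (Syllable G))) := by
      have h4 := reduced_cons hsymm hirr (hL.reverse' hsymm) hlast ⟨q, hqne⟩
      have h5 := h4.reverse' hsymm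
      simpa using h5
    refine ⟨L ++ ([⟨J, ⟨q, hqne⟩⟩] : List (Syllable G)), hred', ?_, ?_, ?_, ?_, ?_⟩
    · intro s hs
      rcases List.mem_append.1 hs with hs | hs
      · exact hpos s hs
      · rcases List.mem_singleton.1 hs with rfl
        exact hq
    · rw [evalWord_append, evalWord_cons, evalWord_nil]
      show evalWord adj G L * (mkOf adj G q * 1) = evalWord adj G L * mkOf adj G q
      rw [mul_one]
    · intro s hs
      exact ⟨s, List.mem_append.2 (Or.inl hs), rfl⟩
    · intro I hIJ
      exact wordInit_append_right hsymm hirr hL hred' (Or.inl (Ne.symm hIJ))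
    · by_cases hall : ∀ w ∈ L, adj w.1 J
      · have hnoJ : ¬ HasHead adj J L := by
          intro hh
          obtain ⟨s, hsmem, hsJ⟩ := hasHead_mem hsymm hh
          exact hirr J (hsJ ▸ hall s hsmem)
        have hLt' : ShuffleEquiv adj (L ++ ([⟨J, ⟨q, hqne⟩⟩] : List (Syllable G)))
            ((⟨J, ⟨q, hqne⟩⟩ : Syllable G) :: L) := by
          have h5 := shuffle_front (B := ([] : List (Syllable G)))
            (s := (⟨J, ⟨q, hqne⟩⟩ : Syllable G)) (fun w hw => hall w hw)
          simpa using h5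
        obtain ⟨hval', hrest'⟩ := head_unique hsymm hirr hred' hLt'
        constructor
        · rw [hval', (wordInit_neg hnoJ).1, inv_one, one_mul]
          exact hq
        · refine Or.inr ?_
          intro s hs
          rw [(wordInit_neg hnoJ).2] at hs
          exact hsymm (hall s hs)
      · have e3 : wordInit adj J (L ++ ([⟨J, ⟨q, hqne⟩⟩] : List (Syllable G)))
            = wordInit adj J L :=
          wordInit_append_right hsymm hirr hL hred' (Or.inr hall)
        refine ⟨?_, Or.inl e3⟩
        rw [e3, inv_mul_cancel]
        exact Submonoid.one_mem _

end Step

section Main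

open Relation List

variable {Λ : Type u} {G : Λ → Type v} [∀ I, Group (G I)] {adj : Λ → Λ → Prop}

theorem pos_mul (hsymm : Symmetric adj) (hirr : ∀ I : Λ, ¬ adj I I)
    {Pc : ∀ I, Submonoid (G I)} (hpo : ∀ I, IsPoGroup (Pc I))
    {p : GraphProduct adj G} (hp : p ∈ posCone adj G Pc) :
    ∀ L : List (Syllable G), Reduced adj L → AllPos Pc L →
      ∃ L', Reduced adj L' ∧ AllPos Pc L' ∧
        evalWord adj G L' = evalWord adj G L * p ∧
        (∀ s ∈ L, ∃ s' ∈ L', Sigma.fst s' = Sigma.fst s) ∧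
        ∀ I, ((wordInit adj I L)⁻¹ * wordInit adj I L' ∈ Pc I) ∧
          (wordInit adj I L' = wordInit adj I L ∨ ∀ s ∈ wordRest adj I L, adj I s.1) := by
  have hp' : p ∈ Submonoid.closure
      {g : GraphProduct adj G | ∃ (I : Λ) (p : G I), p ∈ Pc I ∧ g = mkOf adj G p} := hp
  clear hp
  induction hp' using Submonoid.closure_induction with
  | mem x hx =>
    obtain ⟨J, q, hqP, rfl⟩ := hx
    intro L hL hpos
    by_cases hqne : q = 1
    · refine ⟨L, hL, hpos, ?_, fun s hs => ⟨s, hs, rfl⟩, fun I => ⟨?_, Or.inl rfl⟩⟩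
      · rw [hqne, mkOf_one, mul_one]
      · rw [inv_mul_cancel]; exact Submonoid.one_mem _
    · obtain ⟨L', h1, h2, h3, h4, h5, h6, h7⟩ := step_lemma hsymm hirr hpo hqP hqne hL hpos
      refine ⟨L', h1, h2, h3, h4, fun I => ?_⟩
      by_cases hIJ : I = J
      · subst hIJ; exact ⟨h6, h7⟩
      · refine ⟨?_, Or.inl (h5 I hIJ)⟩
        rw [h5 I hIJ, inv_mul_cancel]
        exact Submonoid.one_mem _
  | one =>
    intro L hL hpos
    exact ⟨L, hL, hpos, by rw [mul_one], fun s hs => ⟨s, hs, rfl⟩,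
      fun I => ⟨by rw [inv_mul_cancel]; exact Submonoid.one_mem _, Or.inl rfl⟩⟩
  | mul p1 p2 hp1 hp2 ih1 ih2 =>
    intro L hL hpos
    obtain ⟨L1, hL1, hpos1, heval1, hvert1, hI1⟩ := ih1 L hL hpos
    obtain ⟨L2, hL2, hpos2, heval2, hvert2, hI2⟩ := ih2 L1 hL1 hpos1
    refine ⟨L2, hL2, hpos2, ?_, ?_, ?_⟩
    · rw [heval2, heval1, mul_assoc]
    · intro s hs
      obtain ⟨s', hs', he⟩ := hvert1 s hs
      obtain ⟨s'', hs'', he'⟩ := hvert2 s' hs'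
      exact ⟨s'', hs'', by rw [he', he]⟩
    · intro I
      obtain ⟨ha1, hb1⟩ := hI1 I
      obtain ⟨ha2, hb2⟩ := hI2 I
      constructor
      · have hsplit : (wordInit adj I L)⁻¹ * wordInit adj I L2
            = ((wordInit adj I L)⁻¹ * wordInit adj I L1)
              * ((wordInit adj I L1)⁻¹ * wordInit adj I L2) := by group
        rw [hsplit]
        exact Submonoid.mul_mem _ ha1 ha2
      · rcases hb1 with hb1 | hb1
        · rcases hb2 with hb2 | hb2
          · exact Or.inl (by rw [hb2, hb1])
          · refine Or.inr ?_
            have he1 : evalWord adj G (wordRest adj I L1)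
                = evalWord adj G (wordRest adj I L) * p1 := by
              have e1 := eval_rest (I := I) hsymm (L := L)
              have e2 := eval_rest (I := I) hsymm (L := L1)
              rw [hb1] at e2
              rw [heval1, e1, mul_assoc] at e2
              exact (mul_left_cancel e2).symm
            have hrred : Reduced adj (wordRest adj I L) := rest_reduced hL
            have hrpos : AllPos Pc (wordRest adj I L) :=
              fun s hs => hpos s (rest_mem hsymm hs)
            obtain ⟨R', hR1, hR2, hR3, hR4, hR5⟩ := ih1 (wordRest adj I L) hrred hrpos
            have hgreen : ShuffleEquiv adj R' (wordRest adj I L1) :=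
              green hsymm hirr hR1 (rest_reduced hL1) (by rw [hR3, he1])
            intro s hs
            obtain ⟨s', hs', he⟩ := hR4 s hs
            have hmem : s' ∈ wordRest adj I L1 := hgreen.perm.mem_iff.1 hs'
            rw [← he]
            exact hb2 s' hmem
        · exact Or.inr hb1

theorem initialPart_eq (hsymm : Symmetric adj) (hirr : ∀ I : Λ, ¬ adj I I)
    {x : GraphProduct adj G} {L : List (Syllable G)} (hLred : Reduced adj L)
    (hLe : evalWord adj G L = x) {I : Λ} {c : G I} (hc : InitialPart adj G x I c) :
    c = wordInit adj I L := by
  rcases hc with ⟨hne, L₁, hred₁, hexpr₁, i, hInit, hget⟩ | ⟨hc1, hniv⟩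
  · have h1 := initialAt_shuffle hInit
    rw [hget] at h1
    have hg : ShuffleEquiv adj L
        ((⟨I, ⟨c, hne⟩⟩ : Syllable G) :: (L₁.take i ++ L₁.drop (i + 1))) :=
      (green hsymm hirr hLred hred₁ (by rw [hLe, hexpr₁])).trans' h1
    exact ((head_unique hsymm hirr hLred hg).1).symm
  · rcases hc1 with rfl
    by_contra hne
    have hh : HasHead adj I L := by
      by_contra hh
      exact hne ((wordInit_neg hh).1).symm
    obtain ⟨hne2, hspec⟩ := wordInit_spec hh
    obtain ⟨i, hInit, hget⟩ := head_initialAt hsymm hspec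
    exact hniv ⟨L.get i, ⟨L, hLred, hLe, i, hInit, rfl⟩, by rw [hget]⟩

end Main

/-- Lemma 3.7. Let `(G,P)` be a graph product of partially ordered
groups `(G_I, P_I)` and let `x, z ∈ P` with `1 ≤ x ≤ z`.  Then for each `I ∈ Λ`, writing
`x_I` and `z_I` for the initial parts of `x` and `z` at `I`:
(i) `x_I ≤ z_I` in `(G_I, P_I)`; and
(ii) writing `x = x_I x′`, either `x_I = z_I` or `I` is adjacent to every vertex
of `x′`. -/
theorem initial_part_le_of_le {Λ : Type u} (adj : Λ → Λ → Prop)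
    (hsymm : Symmetric adj) (hirr : ∀ I : Λ, ¬ adj I I)
    (G : Λ → Type v) [∀ I, Group (G I)]
    (Pc : ∀ I, Submonoid (G I)) (hpo : ∀ I, IsPoGroup (Pc I))
    (x z : GraphProduct adj G)
    (hx : x ∈ posCone adj G Pc) (hz : z ∈ posCone adj G Pc)
    (hxz : lle (posCone adj G Pc) x z)
    (I : Λ) (xI zI : G I)
    (hxI : InitialPart adj G x I xI) (hzI : InitialPart adj G z I zI) :
    xI⁻¹ * zI ∈ Pc I ∧
    ∀ x' : GraphProduct adj G, x = mkOf adj G xI * x' →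
      (xI = zI ∨ ∀ J : Λ, VertexOf adj G x' J → adj I J) := by
  obtain ⟨Lx, hLxred, hLxpos, hLxeval, -, -⟩ :=
    pos_mul hsymm hirr hpo hx [] reduced_nil (fun s hs => by simp at hs)
  have hLxe : evalWord adj G Lx = x := by rw [hLxeval, evalWord_nil, one_mul]
  obtain ⟨Lz, hLzred, hLzpos, hLzeval, -, hIz⟩ :=
    pos_mul hsymm hirr hpo hxz Lx hLxred hLxpos
  have hLze : evalWord adj G Lz = z := by
    rw [hLzeval, hLxe]
    exact mul_inv_cancel_left x z
  have hxIeq : xI = wordInit adj I Lx := initialPart_eq hsymm hirr hLxred hLxe hxI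
  have hzIeq : zI = wordInit adj I Lz := initialPart_eq hsymm hirr hLzred hLze hzI
  obtain ⟨hmemI, hcase⟩ := hIz I
  constructor
  · rw [hxIeq, hzIeq]; exact hmemI
  · intro x' hx'
    rcases hcase with hcase | hcase
    · left; rw [hxIeq, hzIeq, hcase]
    · right
      intro J hJ
      obtain ⟨Lv, hLvred, hLvexpr, s₀, hs₀mem, hs₀J⟩ := hJ
      have hx'eval : evalWord adj G (wordRest adj I Lx) = x' := by
        have e1 := eval_rest (I := I) hsymm (L := Lx)
        rw [hLxe, ← hxIeq] at e1
        exact mul_left_cancel (e1.symm.trans hx')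
      have hgreen : ShuffleEquiv adj Lv (wordRest adj I Lx) :=
        green hsymm hirr hLvred (rest_reduced hLxred) (by rw [hx'eval]; exact hLvexpr)
      have hmem : s₀ ∈ wordRest adj I Lx := hgreen.perm.mem_iff.1 hs₀mem
      have h7 := hcase s₀ hmem
      rw [hs₀J] at h7
      exact h7
end
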